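/- arXiv:1905.05100 — 7 statements merged into one kernel-verified Lean document; each statement's English description precedes it below -/
import Mathlib

section
/- For every 2-edge-colouring of the edges of the countably infinite complete graph on ℕ, the vertex set ℕ can be partitioned into two monochromatic paths (finite or one-way infinite), one of each colour, where a single vertex and the empty set count as paths. -/
/-- A monochromatic (possibly empty, single-vertex, finite, or one-way infinite)
path of colour `c` in the complete graph on `ℕ` edge-coloured by `φ`:
`X` is the set of vertices of a sequence of distinct vertices in which every
edge between consecutive vertices has colour `c`. -/
def IsMonoPath {r : ℕ} (φ : Sym2 ℕ → Fin r) (c : Fin r) (X : Set ℕ) : Prop :=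
  X = ∅ ∨
  ∃ (N : ℕ∞) (v : ℕ → ℕ),
    1 ≤ N ∧
    (∀ i j : ℕ, (i : ℕ∞) < N → (j : ℕ∞) < N → v i = v j → i = j) ∧
    X = {x | ∃ i : ℕ, (i : ℕ∞) < N ∧ v i = x} ∧
    ∀ i : ℕ, ((i + 1 : ℕ) : ℕ∞) < N → φ s(v i, v (i + 1)) = c

namespace RadoAux

open List

/-! ### Generic extraction lemmas -/

/-- A finite nodup colour-chain list gives a monochromatic path. -/
lemma isMonoPath_of_list {r : ℕ} (φ : Sym2 ℕ → Fin r) (c : Fin r) (l : List ℕ)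
    (hnd : l.Nodup) (hch : l.Chain' fun a b => φ s(a, b) = c) :
    IsMonoPath φ c {x | x ∈ l} := by
  rcases eq_or_ne l [] with rfl | hne
  · left; simp
  · right
    refine ⟨(l.length : ℕ∞), fun i => l.getD i 0, ?_, ?_, ?_, ?_⟩
    · have : l.length ≠ 0 := by simpa using hne
      exact_mod_cast Nat.one_le_iff_ne_zero.mpr this
    · intro i j hi hj he
      rw [Nat.cast_lt] at hi hj
      have he' : l.getD i 0 = l.getD j 0 := he
      rw [List.getD_eq_getElem _ _ hi, List.getD_eq_getElem _ _ hj] at he'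
      exact hnd.getElem_inj_iff.mp he'
    · ext x
      simp only [Set.mem_setOf_eq]
      constructor
      · intro hx
        obtain ⟨i, hi, he⟩ := List.mem_iff_getElem.mp hx
        exact ⟨i, by exact_mod_cast hi, by rw [List.getD_eq_getElem _ _ hi]; exact he⟩
      · rintro ⟨i, hi, rfl⟩
        rw [Nat.cast_lt] at hi
        rw [List.getD_eq_getElem _ _ hi]
        exact List.getElem_mem _
    · intro i hi
      rw [Nat.cast_lt] at hi
      have hi' : i < l.length := by omega
      show φ s(l.getD i 0, l.getD (i+1) 0) = c
      rw [List.getD_eq_getElem _ _ hi', List.getD_eq_getElem _ _ hi]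
      have := List.isChain_iff_getElem.mp hch i (by omega)
      simpa using this

/-- A chain of nodup colour-chain lists, increasing w.r.t. the prefix order with
unbounded lengths, gives a one-way infinite monochromatic path. -/
lemma isMonoPath_of_seq {r : ℕ} (φ : Sym2 ℕ → Fin r) (c : Fin r) (L : ℕ → List ℕ)
    (hpre : ∀ m n, m ≤ n → L m <+: L n)
    (hnd : ∀ n, (L n).Nodup)
    (hch : ∀ n, (L n).Chain' fun a b => φ s(a, b) = c)
    (hlen : ∀ k, ∃ n, k < (L n).length) :
    IsMonoPath φ c {x | ∃ n, x ∈ L n} := by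
  right
  have hfi : ∀ i, i < (L (Classical.choose (hlen i))).length := fun i =>
    Classical.choose_spec (hlen i)
  set v : ℕ → ℕ := fun i => (L (Classical.choose (hlen i))).getD i 0 with hv
  have hvn : ∀ i n (h : i < (L n).length), v i = (L n)[i] := by
    intro i n h
    rw [hv]
    simp only
    rw [List.getD_eq_getElem _ _ (hfi i)]
    rcases le_total (Classical.choose (hlen i)) n with h' | h'
    · exact (hpre _ _ h').getElem (hfi i)
    · exact ((hpre _ _ h').getElem h).symm
  refine ⟨⊤, v, le_top, ?_, ?_, ?_⟩
  · intro i j _ _ he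
    obtain ⟨n, hn⟩ := hlen (max i j)
    have hi : i < (L n).length := by omega
    have hj : j < (L n).length := by omega
    rw [hvn i n hi, hvn j n hj] at he
    exact (hnd n).getElem_inj_iff.mp he
  · ext x
    simp only [Set.mem_setOf_eq]
    constructor
    · rintro ⟨n, hx⟩
      obtain ⟨i, hi, he⟩ := List.mem_iff_getElem.mp hx
      exact ⟨i, ENat.coe_lt_top i, by rw [hvn i n hi]; exact he⟩
    · rintro ⟨i, _, rfl⟩
      refine ⟨Classical.choose (hlen i), ?_⟩
      rw [hvn i _ (hfi i)]
      exact List.getElem_mem _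
  · intro i _
    obtain ⟨n, hn⟩ := hlen (i + 1)
    have hi : i < (L n).length := by omega
    rw [hvn i n hi, hvn (i+1) n hn]
    have := List.isChain_iff_getElem.mp (hch n) i (by omega)
    simpa using this

/-- Generic covering lemma: if at every stage the least uncovered `p`-vertex gets
covered at the next stage, then every `p`-vertex is eventually covered. -/
lemma cover {p : ℕ → Prop} {u : ℕ → Set ℕ}
    (hmono : ∀ m n, m ≤ n → u m ⊆ u n)
    (habs : ∀ n x, p x → x ∉ u n → (∀ y, p y → y ∉ u n → x ≤ y) → x ∈ u (n + 1)) :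
    ∀ x, p x → ∃ n, x ∈ u n := by
  intro x hx
  by_contra hcon
  push_neg at hcon
  have hne : ∀ n, {y | p y ∧ y ∉ u n}.Nonempty := fun n => ⟨x, hx, hcon n⟩
  have hbs : StrictMono (fun n => sInf {y | p y ∧ y ∉ u n}) := by
    refine strictMono_nat_of_lt_succ fun n => ?_
    have hmem := Nat.sInf_mem (hne n)
    have hin : sInf {y | p y ∧ y ∉ u n} ∈ u (n + 1) :=
      habs n _ hmem.1 hmem.2 fun y hy hy' => Nat.sInf_le ⟨hy, hy'⟩
    have hmem' := Nat.sInf_mem (hne (n + 1))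
    have hle : sInf {y | p y ∧ y ∉ u n} ≤ sInf {y | p y ∧ y ∉ u (n + 1)} :=
      Nat.sInf_le ⟨hmem'.1, fun h => hmem'.2 (hmono n (n+1) (Nat.le_succ n) h)⟩
    rcases lt_or_eq_of_le hle with h | h
    · exact h
    · rw [← h] at hmem'
      exact absurd hin hmem'.2
  have h1 : sInf {y | p y ∧ y ∉ u (x + 1)} ≤ x := Nat.sInf_le ⟨hx, hcon _⟩
  have h2 : x + 1 ≤ sInf {y | p y ∧ y ∉ u (x + 1)} := hbs.le_apply
  omega

/-! ### The construction -/

/-- The colour-`e` neighbourhood of `v`. -/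
def nb (φ : Sym2 ℕ → Fin 2) (v : ℕ) (e : Fin 2) : Set ℕ := {w | φ s(v, w) = e}

/-- The state of the construction: a `c`-coloured path `P` whose last vertex has
`U`-large `c`-neighbourhood, and a `(c+1)`-coloured path `Q` whose last vertex has
`U`-large `(c+1)`-neighbourhood, disjoint and without repetitions. -/
structure St (φ : Sym2 ℕ → Fin 2) (U : Ultrafilter ℕ) (c : Fin 2) where
  P : List ℕ
  Q : List ℕ
  hP : P ≠ []
  hnd : (P ++ Q).Nodup
  hlastP : ∀ a ∈ P.getLast?, nb φ a c ∈ U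
  hchP : P.Chain' fun a b => φ s(a, b) = c
  hchQ : Q.Chain' fun a b => φ s(a, b) = c + 1
  hlastQ : ∀ a ∈ Q.getLast?, nb φ a (c + 1) ∈ U

variable {φ : Sym2 ℕ → Fin 2} {U : Ultrafilter ℕ} {c : Fin 2}

def usedSt (s : St φ U c) : Set ℕ := {x | x ∈ s.P ∨ x ∈ s.Q}

/-- One step of the construction extends `P`, extends `Q` whenever possible, and
absorbs the least unused vertex of each kind. -/
def Rel (s s' : St φ U c) : Prop :=
  s.P <+: s'.P ∧ s.Q <+: s'.Q ∧ s.P.length < s'.P.length ∧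
  (∀ x, nb φ x (c+1) ∉ U → x ∉ usedSt s →
    (∀ y, nb φ y (c+1) ∉ U → y ∉ usedSt s → x ≤ y) → x ∈ usedSt s') ∧
  (∀ x, nb φ x (c+1) ∈ U → x ∉ usedSt s →
    (∀ y, nb φ y (c+1) ∈ U → y ∉ usedSt s → x ≤ y) → x ∈ usedSt s')

lemma fin2_cases : ∀ c e : Fin 2, e ≠ c + 1 → e = c := by decide

lemma fin2_ne : ∀ c : Fin 2, c ≠ c + 1 := by decide

lemma nodup_insert3 (P Q : List ℕ) (m b m' : ℕ) (h : (P ++ Q).Nodup)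
    (hm1 : m ∉ P) (hm2 : m ∉ Q) (hb1 : b ∉ P) (hb2 : b ∉ Q) (hm'1 : m' ∉ P) (hm'2 : m' ∉ Q)
    (d1 : m ≠ b) (d2 : m ≠ m') (d3 : b ≠ m') :
    ((P ++ [m, b, m']) ++ Q).Nodup := by
  simp only [List.nodup_append', List.disjoint_left, List.mem_append, List.mem_cons,
    List.not_mem_nil, List.nodup_cons, List.mem_singleton, List.nodup_nil] at *
  aesop

lemma nodup_append2 (P Q : List ℕ) (m g : ℕ) (h : (P ++ Q).Nodup)
    (hm1 : m ∉ P) (hm2 : m ∉ Q) (hg1 : g ∉ P) (hg2 : g ∉ Q) (d : m ≠ g) :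
    (P ++ (Q ++ [m, g])).Nodup := by
  simp only [List.nodup_append', List.disjoint_left, List.mem_append, List.mem_cons,
    List.not_mem_nil, List.nodup_cons, List.mem_singleton, List.nodup_nil] at *
  aesop

lemma nodup_append1 (P : List ℕ) (g : ℕ) (h : P.Nodup) (hg : g ∉ P) :
    (P ++ [g]).Nodup := by
  simp only [List.nodup_append', List.disjoint_left, List.mem_singleton, List.nodup_cons,
    List.not_mem_nil, List.nodup_nil] at *
  exact ⟨h, by simp, fun a ha hag => hg (hag ▸ ha)⟩

section

variable (hU : (U : Filter ℕ) ≤ Filter.cofinite) (hAc : {v | nb φ v c ∈ U} ∈ U)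

include hU

lemma mem_infinite {S : Set ℕ} (hS : S ∈ U) : S.Infinite := by
  by_contra hcon
  rw [Set.not_infinite] at hcon
  have hfin := hcon
  have h1 : Sᶜ ∈ U := hU hfin.compl_mem_cofinite
  have h2 : S ∩ Sᶜ ∈ U := Filter.inter_mem hS h1
  rw [Set.inter_compl_self] at h2
  exact (Filter.empty_notMem (U : Filter ℕ)) h2

lemma fresh {S : Set ℕ} (hS : S ∈ U) {T : Set ℕ} (hT : T.Finite) :
    ∃ x, x ∈ S ∧ x ∉ T := by
  obtain ⟨x, hx⟩ := ((mem_infinite hU hS).diff hT).nonempty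
  exact ⟨x, hx.1, hx.2⟩

omit hU

lemma badnb {v : ℕ} (hv : nb φ v (c+1) ∉ U) : nb φ v c ∈ U := by
  have h := Ultrafilter.compl_mem_iff_notMem.mpr hv
  refine Filter.mem_of_superset h fun w hw => ?_
  exact fin2_cases c _ hw

lemma goodnotbad {v : ℕ} (hv : nb φ v c ∈ U) : nb φ v (c+1) ∉ U := by
  intro hv'
  have h := Filter.inter_mem hv hv'
  have he : nb φ v c ∩ nb φ v (c+1) = ∅ := by
    ext w
    simp only [nb, Set.mem_inter_iff, Set.mem_setOf_eq, Set.mem_empty_iff_false, iff_false,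
      not_and]
    intro h1 h2
    exact fin2_ne c (h1.symm.trans h2)
  rw [he] at h
  exact (Filter.empty_notMem (U : Filter ℕ)) h

lemma usedSt_finite (s : St φ U c) : (usedSt s).Finite := by
  have : usedSt s = {x | x ∈ s.P ++ s.Q} := by
    ext x; simp [usedSt, List.mem_append]
  rw [this]
  exact (s.P ++ s.Q).finite_toSet

include hU hAc

lemma key (s : St φ U c) : ∃ s', Rel s s' := by
  classical
  have hfused := usedSt_finite s
  -- least unused bad vertex
  have hbne : {y | nb φ y (c+1) ∉ U ∧ y ∉ usedSt s}.Nonempty := by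
    obtain ⟨x, hx1, hx2⟩ := fresh hU hAc hfused
    exact ⟨x, goodnotbad hx1, hx2⟩
  set b := sInf {y | nb φ y (c+1) ∉ U ∧ y ∉ usedSt s} with hbdef
  obtain ⟨hb1, hb2⟩ := Nat.sInf_mem hbne
  have hbc : nb φ b c ∈ U := badnb hb1
  -- last vertex of P
  obtain ⟨lp, hlp⟩ : ∃ a, s.P.getLast? = some a :=
    ⟨s.P.getLast s.hP, List.getLast?_eq_getLast s.hP⟩
  have hlpc : nb φ lp c ∈ U := s.hlastP lp hlp
  -- connectors m, m'
  obtain ⟨m, hm1, hm2⟩ := fresh hU (Filter.inter_mem hlpc hbc)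
    (hfused.union (Set.finite_singleton b))
  obtain ⟨m', hm'1, hm'2⟩ := fresh hU (Filter.inter_mem hbc hAc)
    ((hfused.union (Set.finite_singleton b)).union ((Set.finite_singleton m)))
  simp only [Set.mem_union, Set.mem_singleton_iff, not_or] at hm2 hm'2
  set P' : List ℕ := s.P ++ [m, b, m'] with hP'def
  have hP'ne : P' ≠ [] := by simp [hP'def]
  have hP'last : P'.getLast? = some m' := by simp [hP'def]
  have hP'lastU : ∀ a ∈ P'.getLast?, nb φ a c ∈ U := by
    intro a ha
    rw [hP'last] at ha
    obtain rfl : m' = a := by simpa using ha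
    exact hm'1.2
  have hbm2 : b ∉ usedSt s := hb2
  have husub : usedSt s ⊆ {x | x ∈ P' ∨ x ∈ s.Q} := by
    intro x hx
    rcases hx with hx | hx
    · exact Or.inl (by simp [hP'def, hx])
    · exact Or.inr hx
  have hmemP' : ∀ x, x ∈ P' ↔ x ∈ s.P ∨ x = m ∨ x = b ∨ x = m' := by
    intro x; simp [hP'def, or_assoc]
  have hchP' : P'.Chain' fun a b => φ s(a, b) = c := by
    rw [hP'def, List.Chain', List.isChain_append]
    refine ⟨s.hchP, ?_, ?_⟩
    · have h1 : φ s(m, b) = c := by rw [Sym2.eq_swap]; exact hm1.2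
      have h2 : φ s(b, m') = c := hm'1.1
      simp [List.isChain_cons_cons, h1, h2]
    · intro x hx y hy
      rw [hlp] at hx
      obtain rfl : lp = x := by simpa using hx
      obtain rfl : m = y := by simpa using hy
      exact hm1.1
  have hndP' : (P' ++ s.Q).Nodup := by
    rw [hP'def]
    exact nodup_insert3 s.P s.Q m b m' s.hnd
      (fun h' => hm2.1 (Or.inl h')) (fun h' => hm2.1 (Or.inr h'))
      (fun h' => hb2 (Or.inl h')) (fun h' => hb2 (Or.inr h'))
      (fun h' => hm'2.1.1 (Or.inl h')) (fun h' => hm'2.1.1 (Or.inr h'))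
      hm2.2 (fun h' => hm'2.2 h'.symm) (fun h' => hm'2.1.2 h'.symm)
  -- now extend Q if possible
  by_cases hg : ∃ y, nb φ y (c+1) ∈ U ∧ ¬(y ∈ P' ∨ y ∈ s.Q)
  · set g := sInf {y | nb φ y (c+1) ∈ U ∧ ¬(y ∈ P' ∨ y ∈ s.Q)} with hgdef
    obtain ⟨hg1, hg2⟩ : nb φ g (c+1) ∈ U ∧ ¬(g ∈ P' ∨ g ∈ s.Q) := Nat.sInf_mem hg
    have hgP : g ∉ P' := fun h' => hg2 (Or.inl h')
    have hgQ : g ∉ s.Q := fun h' => hg2 (Or.inr h')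
    -- helper for the r5 coverage clause
    have r5 : ∀ (Q' : List ℕ), g ∈ Q' → s.Q ⊆ Q' →
        ∀ x, nb φ x (c+1) ∈ U → x ∉ usedSt s →
        (∀ y, nb φ y (c+1) ∈ U → y ∉ usedSt s → x ≤ y) →
        (x ∈ P' ∨ x ∈ Q') := by
      intro Q' hgQ' hQsub x hx1 hx2 hleast
      by_cases hxu : x ∈ P' ∨ x ∈ s.Q
      · rcases hxu with h | h
        · exact Or.inl h
        · exact Or.inr (hQsub h)
      · have hxg : x = g := by
          refine le_antisymm (hleast g hg1 fun h => hg2 (husub h)) (Nat.sInf_le ⟨hx1, hxu⟩)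
        rw [hxg]
        exact Or.inr hgQ'
    rcases eq_or_ne s.Q [] with hQnil | hQne
    · -- Q was empty: new Q is [g]
      refine ⟨⟨P', [g], hP'ne, ?_, hP'lastU, hchP', ?_, ?_⟩, ?_⟩
      · exact nodup_append1 P' g (List.nodup_append.mp hndP').1 hgP
      · exact List.isChain_singleton _
      · intro a ha
        obtain rfl : g = a := by simpa using ha
        exact hg1
      · refine ⟨List.prefix_append _ _, ?_, by simp [hP'def], ?_, ?_⟩
        · show s.Q <+: [g]
          rw [hQnil]
          exact List.nil_prefix
        · -- bad coverage
          intro x hx1 hx2 hleast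
          have hxb : x = b :=
            le_antisymm (hleast b hb1 hb2) (Nat.sInf_le ⟨hx1, hx2⟩)
          subst hxb
          exact Or.inl (by simp [hP'def])
        · intro x hx1 hx2 hleast
          have := r5 [g] (by simp) (by rw [hQnil]; simp) x hx1 hx2 hleast
          simpa [usedSt] using this
    · -- Q nonempty: get last of Q, connector m''
      obtain ⟨lq, hlq⟩ : ∃ a, s.Q.getLast? = some a :=
        ⟨s.Q.getLast hQne, List.getLast?_eq_getLast hQne⟩
      have hlqc : nb φ lq (c+1) ∈ U := s.hlastQ lq hlq
      have hfin' : ({x | x ∈ P' ∨ x ∈ s.Q} : Set ℕ).Finite := by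
        have : {x | x ∈ P' ∨ x ∈ s.Q} = {x | x ∈ P' ++ s.Q} := by
          ext x; simp [List.mem_append]
        rw [this]; exact (P' ++ s.Q).finite_toSet
      obtain ⟨m'', hm''1, hm''2⟩ := fresh hU (Filter.inter_mem hlqc hg1)
        (hfin'.union (Set.finite_singleton g))
      simp only [Set.mem_union, Set.mem_singleton_iff, not_or, Set.mem_setOf_eq] at hm''2
      set Q' : List ℕ := s.Q ++ [m'', g] with hQ'def
      refine ⟨⟨P', Q', hP'ne, ?_, hP'lastU, hchP', ?_, ?_⟩, ?_⟩
      · -- nodup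
        rw [hQ'def]
        exact nodup_append2 P' s.Q m'' g hndP' hm''2.1.1 hm''2.1.2 hgP hgQ hm''2.2
      · -- chain Q'
        rw [hQ'def, List.Chain', List.isChain_append]
        refine ⟨s.hchQ, ?_, ?_⟩
        · have h1 : φ s(m'', g) = c + 1 := by rw [Sym2.eq_swap]; exact hm''1.2
          simp [List.isChain_cons_cons, h1]
        · intro x hx y hy
          rw [hlq] at hx
          obtain rfl : lq = x := by simpa using hx
          obtain rfl : m'' = y := by simpa using hy
          exact hm''1.1
      · -- last of Q'
        intro a ha
        rw [hQ'def] at ha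
        obtain rfl : g = a := by simpa using ha
        exact hg1
      · refine ⟨List.prefix_append _ _, List.prefix_append _ _, by simp [hP'def], ?_, ?_⟩
        · intro x hx1 hx2 hleast
          have hxb : x = b :=
            le_antisymm (hleast b hb1 hb2) (Nat.sInf_le ⟨hx1, hx2⟩)
          subst hxb
          exact Or.inl (by simp [hP'def])
        · intro x hx1 hx2 hleast
          have := r5 Q' (by simp [hQ'def]) (by intro a ha; simp [hQ'def, ha]) x hx1 hx2 hleast
          simpa [usedSt] using this
  · -- no good vertex available: Q unchanged
    refine ⟨⟨P', s.Q, hP'ne, hndP', hP'lastU, hchP', s.hchQ, s.hlastQ⟩, ?_⟩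
    refine ⟨List.prefix_append _ _, List.prefix_rfl, by simp [hP'def], ?_, ?_⟩
    · intro x hx1 hx2 hleast
      have hxb : x = b :=
        le_antisymm (hleast b hb1 hb2) (Nat.sInf_le ⟨hx1, hx2⟩)
      subst hxb
      exact Or.inl (by simp [hP'def])
    · intro x hx1 hx2 hleast
      by_cases hxu : x ∈ P' ∨ x ∈ s.Q
      · exact hxu
      · exact absurd ⟨x, hx1, hxu⟩ hg

/-- The initial state. -/
noncomputable def init : St φ U c := by
  classical
  have hne : {v | nb φ v c ∈ U}.Nonempty := Filter.nonempty_of_mem hAc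
  exact
    { P := [hne.choose]
      Q := []
      hP := by simp
      hnd := by simp
      hlastP := by
        intro a ha
        obtain rfl : hne.choose = a := by simpa using ha
        exact hne.choose_spec
      hchP := List.isChain_singleton _
      hchQ := List.isChain_nil
      hlastQ := by simp }

/-- The sequence of states. -/
noncomputable def seq : ℕ → St φ U c
  | 0 => init hAc
  | n + 1 => Classical.choose (key hU hAc (seq n))

lemma seq_rel (n : ℕ) : Rel (seq hU hAc n) (seq hU hAc (n + 1)) :=
  Classical.choose_spec (key hU hAc (seq hU hAc n))

lemma seq_P_prefix : ∀ m n, m ≤ n → (seq hU hAc m).P <+: (seq hU hAc n).P := by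
  intro m n h
  induction n, h using Nat.le_induction with
  | base => exact List.prefix_rfl
  | succ n hmn ih => exact ih.trans (seq_rel hU hAc n).1

lemma seq_Q_prefix : ∀ m n, m ≤ n → (seq hU hAc m).Q <+: (seq hU hAc n).Q := by
  intro m n h
  induction n, h using Nat.le_induction with
  | base => exact List.prefix_rfl
  | succ n hmn ih => exact ih.trans (seq_rel hU hAc n).2.1

lemma seq_used_mono : ∀ m n, m ≤ n → usedSt (seq hU hAc m) ⊆ usedSt (seq hU hAc n) := by
  intro m n h x hx
  rcases hx with hx | hx
  · exact Or.inl ((seq_P_prefix hU hAc m n h).subset hx)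
  · exact Or.inr ((seq_Q_prefix hU hAc m n h).subset hx)

lemma seq_P_len (n : ℕ) : n < (seq hU hAc n).P.length := by
  induction n with
  | zero => exact List.length_pos_iff.mpr (seq hU hAc 0).hP
  | succ n ih => exact lt_of_le_of_lt ih (seq_rel hU hAc n).2.2.1

/-- The construction produces the two desired monochromatic paths. -/
lemma mainConstruction :
    ∃ X Y : Set ℕ, IsMonoPath φ c X ∧ IsMonoPath φ (c+1) Y ∧
      Disjoint X Y ∧ X ∪ Y = Set.univ := by
  classical
  set S := seq hU hAc with hS
  refine ⟨{x | ∃ n, x ∈ (S n).P}, {x | ∃ n, x ∈ (S n).Q}, ?_, ?_, ?_, ?_⟩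
  · exact isMonoPath_of_seq φ c (fun n => (S n).P)
      (seq_P_prefix hU hAc)
      (fun n => (List.nodup_append.mp (S n).hnd).1)
      (fun n => (S n).hchP)
      (fun k => ⟨k, seq_P_len hU hAc k⟩)
  · by_cases hbdd : ∀ k, ∃ n, k < (S n).Q.length
    · exact isMonoPath_of_seq φ (c+1) (fun n => (S n).Q)
        (seq_Q_prefix hU hAc)
        (fun n => (List.nodup_append.mp (S n).hnd).2.1)
        (fun n => (S n).hchQ)
        hbdd
    · -- Q stabilizes
      obtain ⟨n₀, hn₀⟩ : ∃ n₀, ∀ n, (S n).Q.length ≤ (S n₀).Q.length := by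
        by_contra h
        push_neg at h
        apply hbdd
        intro k
        clear hbdd
        induction k with
        | zero =>
          obtain ⟨n, hn⟩ := h 0
          exact ⟨n, by omega⟩
        | succ k ih =>
          obtain ⟨n, hn⟩ := ih
          obtain ⟨n', hn'⟩ := h n
          exact ⟨n', by omega⟩
      have hconst : ∀ n, n₀ ≤ n → (S n).Q = (S n₀).Q := by
        intro n h
        have hpre := seq_Q_prefix hU hAc n₀ n h
        exact (hpre.eq_of_length (le_antisymm hpre.length_le (hn₀ n))).symm
      have hYeq : {x | ∃ n, x ∈ (S n).Q} = {x | x ∈ (S n₀).Q} := by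
        ext x
        simp only [Set.mem_setOf_eq]
        constructor
        · rintro ⟨n, hx⟩
          rcases le_total n n₀ with h | h
          · exact (seq_Q_prefix hU hAc n n₀ h).subset hx
          · rw [← hconst n h]; exact hx
        · intro hx; exact ⟨n₀, hx⟩
      rw [hYeq]
      exact isMonoPath_of_list φ (c+1) (S n₀).Q
        (List.nodup_append.mp (S n₀).hnd).2.1 (S n₀).hchQ
  · rw [Set.disjoint_left]
    rintro x ⟨n, hn⟩ ⟨m, hm⟩
    have hn' : x ∈ (S (max n m)).P := (seq_P_prefix hU hAc n _ (le_max_left n m)).subset hn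
    have hm' : x ∈ (S (max n m)).Q := (seq_Q_prefix hU hAc m _ (le_max_right n m)).subset hm
    exact (List.nodup_append'.mp (S (max n m)).hnd).2.2 hn' hm'
  · rw [Set.eq_univ_iff_forall]
    intro x
    have hkey : ∃ n, x ∈ usedSt (S n) := by
      by_cases hx : nb φ x (c+1) ∈ U
      · exact cover (seq_used_mono hU hAc)
          (fun n y h1 h2 h3 => (seq_rel hU hAc n).2.2.2.2 y h1 h2 h3) x hx
      · exact cover (seq_used_mono hU hAc)
          (fun n y h1 h2 h3 => (seq_rel hU hAc n).2.2.2.1 y h1 h2 h3) x hx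
    obtain ⟨n, hn⟩ := hkey
    rcases hn with hn | hn
    · exact Or.inl ⟨n, hn⟩
    · exact Or.inr ⟨n, hn⟩

end

end RadoAux

theorem rado_two_colours (φ : Sym2 ℕ → Fin 2) :
    ∃ X₀ X₁ : Set ℕ,
      IsMonoPath φ 0 X₀ ∧ IsMonoPath φ 1 X₁ ∧
      Disjoint X₀ X₁ ∧ X₀ ∪ X₁ = Set.univ := by
  classical
  open RadoAux in
  obtain ⟨U, hU⟩ := Filter.exists_ultrafilter_le (Filter.cofinite : Filter ℕ)
  have hc : ∃ c : Fin 2, {v | RadoAux.nb φ v c ∈ U} ∈ U := by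
    by_cases h0 : {v | RadoAux.nb φ v 0 ∈ U} ∈ U
    · exact ⟨0, h0⟩
    · refine ⟨1, ?_⟩
      have h1 := Ultrafilter.compl_mem_iff_notMem.mpr h0
      refine Filter.mem_of_superset h1 fun v hv => ?_
      have hv' : RadoAux.nb φ v 0 ∉ U := hv
      have h2 := Ultrafilter.compl_mem_iff_notMem.mpr hv'
      refine Filter.mem_of_superset h2 fun w hw => ?_
      have : φ s(v, w) ≠ 0 := hw
      show φ s(v, w) = 1
      omega
  obtain ⟨c, hAc⟩ := hc
  obtain ⟨X, Y, hX, hY, hdis, huniv⟩ := RadoAux.mainConstruction hU hAc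
  have hc2 : c = 0 ∨ c = 1 := by omega
  rcases hc2 with rfl | rfl
  · have e : (0 : Fin 2) + 1 = 1 := by decide
    rw [e] at hY
    exact ⟨X, Y, hX, hY, hdis, huniv⟩
  · have e : (1 : Fin 2) + 1 = 0 := by decide
    rw [e] at hY
    exact ⟨Y, X, hY, hX, hdis.symm, by rw [Set.union_comm]; exact huniv⟩
end

section
/- For every r ∈ ℕ and every r-edge-colouring of the countably infinite complete graph on ℕ, the vertex set ℕ can be partitioned into r monochromatic paths (finite or one-way infinite) of pairwise distinct colours. -/
namespace RadoAux

open Filter Set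

noncomputable section

variable {r : ℕ} (φ : Sym2 ℕ → Fin r)

/-- A fixed nonprincipal ultrafilter on ℕ. -/
abbrev U : Ultrafilter ℕ := hyperfilter ℕ

lemma mem_infinite_s1 {s : Set ℕ} (hs : s ∈ (U : Filter ℕ)) : s.Infinite := by
  by_contra h
  rw [Set.not_infinite] at h
  have h2 : sᶜ ∈ (U : Filter ℕ) := hyperfilter_le_cofinite h.compl_mem_cofinite
  have h3 := Filter.inter_mem hs h2
  rw [Set.inter_compl_self] at h3
  exact Filter.empty_notMem _ h3

lemma exists_col (x : ℕ) : ∃ c : Fin r, {y | φ s(x, y) = c} ∈ (U : Filter ℕ) := by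
  obtain ⟨c, -, hc⟩ := Ultrafilter.eq_pure_of_finite_mem
    (f := Ultrafilter.map (fun y => φ s(x, y)) U) (s := (Set.univ : Set (Fin r)))
    Set.finite_univ Filter.univ_mem
  refine ⟨c, ?_⟩
  have h1 : ({c} : Set (Fin r)) ∈ Ultrafilter.map (fun y => φ s(x, y)) U := by
    rw [hc]; exact Ultrafilter.mem_pure.mpr rfl
  rw [Ultrafilter.mem_map] at h1
  exact h1

/-- The "ultrafilter colour" of a vertex. -/
def col (x : ℕ) : Fin r := (exists_col φ x).choose

lemma col_spec (x : ℕ) : {y | φ s(x, y) = col φ x} ∈ (U : Filter ℕ) :=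
  (exists_col φ x).choose_spec

/-- A system of disjoint finite monochromatic paths, the path of colour `c`
ending in a vertex of colour `c`. -/
structure St_s1 (φ : Sym2 ℕ → Fin r) where
  P : Fin r → List ℕ
  chain : ∀ c, (P c).Chain' (fun a b => φ s(a, b) = c)
  nd : ∀ c, (P c).Nodup
  disj : ∀ c d x, x ∈ P c → x ∈ P d → c = d
  last : ∀ c x, (P c).getLast? = some x → col φ x = c

def covered (s : St_s1 φ) : Set ℕ := {x | ∃ c, x ∈ s.P c}

lemma covered_finite (s : St_s1 φ) : (covered φ s).Finite := by
  have h : covered φ s = ⋃ c, {x | x ∈ s.P c} := by ext x; simp [covered]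
  rw [h]
  exact Set.finite_iUnion fun c => (s.P c).finite_toSet

lemma step_exists (s : St_s1 φ) (n : ℕ) :
    ∃ t : St_s1 φ, (∀ c, s.P c <+: t.P c) ∧ n ∈ covered φ t := by
  by_cases hn : n ∈ covered φ s
  · exact ⟨s, fun c => List.prefix_refl _, hn⟩
  have hn' : ∀ d, n ∉ s.P d := by
    intro d hd; exact hn ⟨d, hd⟩
  set c := col φ n with hc
  by_cases hP : s.P c = []
  · refine ⟨⟨Function.update s.P c [n], ?_, ?_, ?_, ?_⟩, ?_, ⟨c, ?_⟩⟩
    · intro d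
      rcases eq_or_ne d c with rfl | hd
      · simp [List.Chain']
      · simpa [Function.update_of_ne hd] using s.chain d
    · intro d
      rcases eq_or_ne d c with rfl | hd
      · simp
      · simpa [Function.update_of_ne hd] using s.nd d
    · intro d d' x hx hx'
      rcases eq_or_ne d c with rfl | hd <;> rcases eq_or_ne d' c with h' | hd'
      · exact h'.symm
      · rw [Function.update_self, List.mem_singleton] at hx
        rw [Function.update_of_ne hd'] at hx'
        rw [hx] at hx'
        exact absurd hx' (hn' d')
      · rw [h', Function.update_self, List.mem_singleton] at hx'
        rw [Function.update_of_ne hd] at hx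
        rw [hx'] at hx
        exact absurd hx (hn' d)
      · rw [Function.update_of_ne hd] at hx
        rw [Function.update_of_ne hd'] at hx'
        exact s.disj d d' x hx hx'
    · intro d x hx
      rcases eq_or_ne d c with rfl | hd
      · rw [Function.update_self] at hx
        simp only [List.getLast?_singleton, Option.some.injEq] at hx
        rw [← hx]
      · rw [Function.update_of_ne hd] at hx
        exact s.last d x hx
    · intro d
      show s.P d <+: Function.update s.P c [n] d
      rcases eq_or_ne d c with rfl | hd
      · rw [Function.update_self, hP]; exact List.nil_prefix
      · rw [Function.update_of_ne hd]
    · show n ∈ Function.update s.P c [n] c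
      simp
  · set e := (s.P c).getLast hP with he
    have hlast : (s.P c).getLast? = some e := List.getLast?_eq_getLast hP
    have hce : col φ e = c := s.last c e hlast
    have hA : {y | φ s(e, y) = c} ∈ (U : Filter ℕ) := by
      have h1 := col_spec φ e
      rwa [hce] at h1
    have hB : {y | φ s(n, y) = c} ∈ (U : Filter ℕ) := col_spec φ n
    have hAB := mem_infinite_s1 (Filter.inter_mem hA hB)
    have hfree := (hAB.diff ((covered_finite φ s).union (Set.finite_singleton n))).nonempty
    obtain ⟨y, ⟨⟨hyA, hyB⟩, hyf⟩⟩ := hfree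
    simp only [Set.mem_union, Set.mem_singleton_iff, not_or] at hyf
    obtain ⟨hyc, hyn⟩ := hyf
    have hyc' : ∀ d, y ∉ s.P d := by intro d hd; exact hyc ⟨d, hd⟩
    have hmemnew : ∀ d x, x ∈ Function.update s.P c (s.P c ++ [y, n]) d →
        x ∈ s.P d ∨ (d = c ∧ (x = y ∨ x = n)) := by
      intro d x hx
      rcases eq_or_ne d c with rfl | hd
      · rw [Function.update_self, List.mem_append] at hx
        rcases hx with hx | hx
        · exact Or.inl hx
        · right; exact ⟨rfl, by simpa using hx⟩
      · rw [Function.update_of_ne hd] at hx; exact Or.inl hx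
    refine ⟨⟨Function.update s.P c (s.P c ++ [y, n]), ?_, ?_, ?_, ?_⟩, ?_, ⟨c, ?_⟩⟩
    · intro d
      rcases eq_or_ne d c with rfl | hd
      · rw [Function.update_self, List.Chain', List.isChain_append]
        refine ⟨s.chain c, List.isChain_pair.mpr ?_, ?_⟩
        · rw [Sym2.eq_swap]; exact hyB
        · intro a ha b hb
          rw [hlast] at ha
          simp only [Option.mem_def, Option.some.injEq] at ha
          simp only [List.head?_cons, Option.mem_def, Option.some.injEq] at hb
          rw [← ha, ← hb]
          exact hyA
      · simpa [Function.update_of_ne hd] using s.chain d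
    · intro d
      rcases eq_or_ne d c with rfl | hd
      · rw [Function.update_self, List.nodup_append]
        refine ⟨s.nd c, by simp [hyn], ?_⟩
        intro a ha b hmem hab; subst hab
        have h2 : a = y ∨ a = n := by simpa using hmem
        rcases h2 with rfl | rfl
        · exact hyc' c ha
        · exact hn' c ha
      · simpa [Function.update_of_ne hd] using s.nd d
    · intro d d' x hx hx'
      rcases hmemnew d x hx with hx1 | ⟨rfl, hx1⟩ <;>
        rcases hmemnew d' x hx' with hx2 | ⟨h2, hx2⟩
      · exact s.disj d d' x hx1 hx2
      · rcases hx2 with rfl | rfl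
        · exact absurd hx1 (hyc' d)
        · exact absurd hx1 (hn' d)
      · rcases hx1 with rfl | rfl
        · exact absurd hx2 (hyc' d')
        · exact absurd hx2 (hn' d')
      · exact h2.symm
    · intro d x hx
      rcases eq_or_ne d c with rfl | hd
      · rw [Function.update_self,
          show s.P c ++ [y, n] = (s.P c ++ [y]) ++ [n] by simp,
          List.getLast?_concat] at hx
        injection hx with hx
        rw [← hx]
      · rw [Function.update_of_ne hd] at hx
        exact s.last d x hx
    · intro d
      show s.P d <+: Function.update s.P c (s.P c ++ [y, n]) d
      rcases eq_or_ne d c with rfl | hd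
      · rw [Function.update_self]; exact ⟨[y, n], rfl⟩
      · rw [Function.update_of_ne hd]
    · show n ∈ Function.update s.P c (s.P c ++ [y, n]) c
      simp

/-- The increasing sequence of path systems. -/
def S : ℕ → St_s1 φ
  | 0 => ⟨fun _ => [], by simp [List.Chain'], by simp, by simp, by simp⟩
  | n + 1 => (step_exists φ (S n) n).choose

lemma S_prefix (n : ℕ) (c : Fin r) : (S φ n).P c <+: (S φ (n + 1)).P c :=
  (step_exists φ (S φ n) n).choose_spec.1 c

lemma S_cover (n : ℕ) : n ∈ covered φ (S φ (n + 1)) :=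
  (step_exists φ (S φ n) n).choose_spec.2

lemma S_mono {m n : ℕ} (h : m ≤ n) (c : Fin r) : (S φ m).P c <+: (S φ n).P c := by
  induction n, h using Nat.le_induction with
  | base => exact List.prefix_refl _
  | succ n hmn ih => exact ih.trans (S_prefix φ n c)

/-- The limit path of colour `c`. -/
def X (c : Fin r) : Set ℕ := {x | ∃ n, x ∈ (S φ n).P c}

lemma X_union : (⋃ c, X φ c) = Set.univ := by
  ext x
  simp only [Set.mem_iUnion, Set.mem_univ, iff_true]
  obtain ⟨c, hc⟩ := S_cover φ x
  exact ⟨c, x + 1, hc⟩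

lemma X_disj (i j : Fin r) (hij : i ≠ j) : Disjoint (X φ i) (X φ j) := by
  rw [Set.disjoint_left]
  rintro x ⟨n, hn⟩ ⟨m, hm⟩
  exact hij ((S φ (max n m)).disj i j x
    ((S_mono φ (le_max_left n m) i).subset hn)
    ((S_mono φ (le_max_right n m) j).subset hm))

lemma X_mono (c : Fin r) : IsMonoPath φ c (X φ c) := by
  classical
  by_cases hemp : ∀ n, (S φ n).P c = []
  · left; ext x; simp [X, hemp]
  right
  push_neg at hemp
  obtain ⟨n0, hn0⟩ := hemp
  set L : ℕ → List ℕ := fun n => (S φ n).P c with hL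
  have hstab : ∀ m n i (him : i < (L m).length) (hin : i < (L n).length),
      (L m)[i] = (L n)[i] := by
    intro m n i him hin
    rcases le_total m n with h | h
    · exact (S_mono φ h c).getElem him
    · exact ((S_mono φ h c).getElem hin).symm
  set N : ℕ∞ := ⨆ n, ((L n).length : ℕ∞) with hN
  have hlt : ∀ i : ℕ, ((i : ℕ∞) < N ↔ ∃ n, i < (L n).length) := by
    intro i
    rw [hN, lt_iSup_iff]
    constructor
    · rintro ⟨n, hn⟩; exact ⟨n, by exact_mod_cast hn⟩
    · rintro ⟨n, hn⟩; exact ⟨n, by exact_mod_cast hn⟩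
  set v : ℕ → ℕ := fun i =>
    if h : ∃ n, i < (L n).length then (L h.choose)[i]'h.choose_spec else 0 with hvdef
  have hv : ∀ n i (h : i < (L n).length), v i = (L n)[i] := by
    intro n i h
    have hex : ∃ n, i < (L n).length := ⟨n, h⟩
    simp only [hvdef, dif_pos hex]
    exact hstab _ _ _ hex.choose_spec h
  refine ⟨N, v, ?_, ?_, ?_, ?_⟩
  · have h1 : 1 ≤ (L n0).length := List.length_pos_iff.mpr hn0
    calc (1 : ℕ∞) ≤ ((L n0).length : ℕ∞) := by exact_mod_cast h1
      _ ≤ N := le_iSup (fun n => ((L n).length : ℕ∞)) n0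
  · intro i j hi hj hvij
    obtain ⟨m, hm⟩ := (hlt i).mp hi
    obtain ⟨n, hn⟩ := (hlt j).mp hj
    have hmk : i < (L (max m n)).length :=
      lt_of_lt_of_le hm (S_mono φ (le_max_left m n) c).length_le
    have hnk : j < (L (max m n)).length :=
      lt_of_lt_of_le hn (S_mono φ (le_max_right m n) c).length_le
    rw [hv (max m n) i hmk, hv (max m n) j hnk] at hvij
    exact (List.Nodup.getElem_inj_iff ((S φ (max m n)).nd c)).mp hvij
  · ext x
    simp only [X, Set.mem_setOf_eq]
    constructor
    · rintro ⟨n, hx⟩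
      obtain ⟨i, hi, hxi⟩ := List.mem_iff_getElem.mp hx
      exact ⟨i, (hlt i).mpr ⟨n, hi⟩, by rw [hv n i hi]; exact hxi⟩
    · rintro ⟨i, hi, rfl⟩
      obtain ⟨n, hn⟩ := (hlt i).mp hi
      exact ⟨n, by rw [hv n i hn]; exact List.getElem_mem _⟩
  · intro i hi
    obtain ⟨n, hn⟩ := (hlt (i + 1)).mp hi
    have hi' : i < (L n).length := Nat.lt_of_succ_lt hn
    rw [hv n i hi', hv n (i + 1) hn]
    have hn2 : i + 1 < ((S φ n).P c).length := hn
    have hch := List.isChain_iff_getElem.mp ((S φ n).chain c) i (by omega)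
    simpa using hch

end

end RadoAux

/-- Rado's theorem: ℕ can be partitioned into `r` monochromatic paths,
one of each colour. -/
theorem rado (r : ℕ) (φ : Sym2 ℕ → Fin r) :
    ∃ X : Fin r → Set ℕ,
      (∀ i : Fin r, IsMonoPath φ i (X i)) ∧
      (∀ i j : Fin r, i ≠ j → Disjoint (X i) (X j)) ∧
      (⋃ i, X i) = Set.univ :=
  ⟨RadoAux.X φ, fun c => RadoAux.X_mono φ c, RadoAux.X_disj φ, RadoAux.X_union φ⟩
end

section
/- For all s, k ∈ ℕ with k ≥ 2 and every edge-colouring of the complete k-uniform hypergraph on ℕ with r = s(k−1) colours, the vertices of ℕ can be partitioned into the cores of at most s monochromatic Berge-paths (finite or infinite) of pairwise distinct colours. -/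
set_option maxHeartbeats 1000000

open Filter

/-- A monochromatic `t`-tight Berge-path of colour `c` (finite of length ≥ 1,
one-way infinite, or a single vertex with no edges) in the complete `k`-uniform
hypergraph on `ℕ` edge-coloured by `φ`, with core `X`. The core vertex sequence
is `v 0, v 1, …` (of length `N`, possibly `⊤`), the edges are `e 0, e 1, …`
(pairwise distinct `k`-sets of colour `c`), and edge `e i` contains the `t`
consecutive core vertices `v i, …, v (i + t - 1)`. -/
def IsMonoBergePath (k t : ℕ) {r : ℕ} (φ : Finset ℕ → Fin r) (c : Fin r)
    (X : Set ℕ) : Prop :=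
  (∃ v : ℕ, X = {v}) ∨
  ∃ (N : ℕ∞) (v : ℕ → ℕ) (e : ℕ → Finset ℕ),
    (t : ℕ∞) ≤ N ∧
    (∀ i j : ℕ, (i : ℕ∞) < N → (j : ℕ∞) < N → v i = v j → i = j) ∧
    X = {x | ∃ i : ℕ, (i : ℕ∞) < N ∧ v i = x} ∧
    (∀ i : ℕ, ((i + t : ℕ) : ℕ∞) ≤ N →
      (e i).card = k ∧ φ (e i) = c ∧ ∀ j : ℕ, i ≤ j → j < i + t → v j ∈ e i) ∧
    (∀ i j : ℕ, ((i + t : ℕ) : ℕ∞) ≤ N → ((j + t : ℕ) : ℕ∞) ≤ N → e i = e j → i = j)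

namespace BergeProof

noncomputable def U : Ultrafilter ℕ := hyperfilter ℕ

lemma U_infinite {S : Set ℕ} (hS : S ∈ U) : S.Infinite := by
  intro hfin
  exact notMem_hyperfilter_of_finite hfin hS

lemma upig {r : ℕ} (f : ℕ → Fin r) (A : Finset ℕ) :
    ∃ c : Fin r, {w : ℕ | w ∉ A ∧ f w = c} ∈ U := by
  by_contra h
  push_neg at h
  have h1 : ∀ c : Fin r, {w : ℕ | w ∉ A ∧ f w = c}ᶜ ∈ U := fun c =>
    (Ultrafilter.compl_mem_iff_notMem).2 (h c)
  have h2 : (⋂ c : Fin r, {w : ℕ | w ∉ A ∧ f w = c}ᶜ) ∈ U :=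
    (Filter.iInter_mem).2 h1
  have h3 : {w : ℕ | w ∉ A} ∈ U :=
    mem_hyperfilter_of_finite_compl (by
      have : {w : ℕ | w ∉ A}ᶜ = ↑A := by ext w; simp
      rw [this]; exact A.finite_toSet)
  have h4 := Filter.inter_mem h2 h3
  have h5 : (⋂ c : Fin r, {w : ℕ | w ∉ A ∧ f w = c}ᶜ) ∩ {w : ℕ | w ∉ A} = ∅ := by
    ext w
    simp only [Set.mem_inter_iff, Set.mem_iInter, Set.mem_compl_iff, Set.mem_setOf_eq,
      Set.mem_empty_iff_false, iff_false, not_and]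
    intro h6 h7
    exact (h6 (f w)) h7 rfl
  rw [h5] at h4
  exact Filter.empty_notMem _ h4

variable {r : ℕ} (k : ℕ) (φ : Finset ℕ → Fin r)

/-- iterated ultrafilter colour, fuel version -/
noncomputable def aux : ℕ → Finset ℕ → Fin r
  | 0, A => φ A
  | n + 1, A => (upig (fun w => aux n (insert w A)) A).choose

noncomputable def cstar (A : Finset ℕ) : Fin r := aux φ (k - A.card) A

lemma cstar_eq_phi {A : Finset ℕ} (h : A.card = k) : cstar k φ A = φ A := by
  unfold cstar
  rw [h, Nat.sub_self]
  rfl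

lemma cstar_step {A : Finset ℕ} (h : A.card < k) :
    {w : ℕ | w ∉ A ∧ cstar k φ (insert w A) = cstar k φ A} ∈ U := by
  have hn : k - A.card = (k - A.card - 1) + 1 := by omega
  have hspec := (upig (fun w => aux φ (k - A.card - 1) (insert w A)) A).choose_spec
  have hcA : cstar k φ A = aux φ ((k - A.card - 1) + 1) A := by
    unfold cstar; rw [← hn]
  refine Filter.mem_of_superset hspec ?_
  intro w hw
  obtain ⟨hw1, hw2⟩ := hw
  refine ⟨hw1, ?_⟩
  have hcard : (insert w A).card = A.card + 1 := Finset.card_insert_of_notMem hw1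
  have : cstar k φ (insert w A) = aux φ (k - A.card - 1) (insert w A) := by
    unfold cstar; rw [hcard, Nat.sub_sub]
  rw [this, hw2, hcA]
  rfl

/-- extend a small set with cstar-colour preserved to a full edge, new elements
avoiding a given finite set -/
lemma fill (d : ℕ) : ∀ (B : Finset ℕ), B.card + d = k → ∀ avoid : Finset ℕ,
    ∃ E : Finset ℕ, B ⊆ E ∧ E.card = k ∧ φ E = cstar k φ B ∧
      ∀ z ∈ E, z ∉ B → z ∉ avoid := by
  induction d with
  | zero =>
    intro B hB avoid
    exact ⟨B, Finset.Subset.refl B, by omega, (cstar_eq_phi k φ (by omega)).symm,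
      fun z hz hz' hav => absurd hz hz'⟩
  | succ d ih =>
    intro B hB avoid
    have hlt : B.card < k := by omega
    have hU := cstar_step k φ hlt
    have hinf : ({w : ℕ | w ∉ B ∧ cstar k φ (insert w B) = cstar k φ B} \ ↑avoid).Infinite :=
      ((U_infinite hU).diff avoid.finite_toSet)
    obtain ⟨w, hw⟩ := hinf.nonempty
    obtain ⟨⟨hw1, hw2⟩, hw3⟩ := hw
    have hcard : (insert w B).card + d = k := by
      rw [Finset.card_insert_of_notMem hw1]; omega
    obtain ⟨E, hE1, hE2, hE3, hE4⟩ := ih (insert w B) hcard avoid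
    refine ⟨E, fun z hz => hE1 (Finset.mem_insert_of_mem hz), hE2, by rw [hE3, hw2], ?_⟩
    intro z hz hzB
    by_cases hzw : z = w
    · subst hzw; exact hw3
    · exact hE4 z hz (by simp [hzB, hzw])

end BergeProof

namespace BergeProof

lemma palette (s k : ℕ) (hk : 2 ≤ k) (φ : Finset ℕ → Fin (s * (k - 1))) :
    ∃ j : ℕ, j < k - 1 ∧ ∀ x : ℕ, ∃ (m : ℕ) (A : Finset ℕ), m < s ∧ x ∉ A ∧
      A.card ≤ k - 2 ∧ (cstar k φ (insert x A)).val = m * (k - 1) + j := by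
  by_contra hcon
  push_neg at hcon
  have hk1 : 0 < k - 1 := by omega
  -- bad vertex for each j
  choose xf hxf using fun (j : Fin (k-1)) => hcon j.val j.isLt
  set T : Finset ℕ := Finset.image xf Finset.univ with hT
  have hTcard : T.card ≤ k - 1 := by
    calc T.card ≤ Finset.univ.card := Finset.card_image_le
    _ = k - 1 := by simp
  obtain ⟨S, hTS, hScard⟩ := Infinite.exists_superset_card_eq T (k - 1) hTcard
  set c := cstar k φ S with hc
  have hcval : c.val < s * (k - 1) := c.isLt
  set j := c.val % (k - 1) with hj
  set m := c.val / (k - 1) with hm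
  have hjlt : j < k - 1 := Nat.mod_lt _ hk1
  have hmlt : m < s := by
    rw [hm, Nat.div_lt_iff_lt_mul hk1]
    exact hcval
  have hxS : xf ⟨j, hjlt⟩ ∈ S := hTS (by rw [hT]; exact Finset.mem_image_of_mem _ (Finset.mem_univ _))
  set x := xf ⟨j, hjlt⟩ with hx
  set A := S.erase x with hA
  have hxA : x ∉ A := Finset.notMem_erase _ _
  have hAcard : A.card = k - 2 := by
    rw [hA, Finset.card_erase_of_mem hxS, hScard]; omega
  have hins : insert x A = S := Finset.insert_erase hxS
  have := hxf ⟨j, hjlt⟩ m A hmlt hxA (le_of_eq hAcard)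
  apply this
  rw [hins, ← hc]
  have h1 : (k - 1) * m + j = c.val := by rw [hm, hj]; exact Nat.div_add_mod _ _
  have h2 : (k - 1) * m = m * (k - 1) := mul_comm _ _
  show (c : ℕ) = m * (k - 1) + j
  omega

end BergeProof

namespace BergeProof

structure PState (s k : ℕ) (φ : Finset ℕ → Fin (s * (k - 1)))
    (cc : Fin s → Fin (s * (k - 1))) (mx : ℕ → Fin s) where
  len : Fin s → ℕ
  v : Fin s → ℕ → ℕ
  e : Fin s → ℕ → Finset ℕ
  inj : ∀ m i j, i < len m → j < len m → v m i = v m j → i = j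
  disj : ∀ m m' i j, m ≠ m' → i < len m → j < len m' → v m i ≠ v m' j
  ecard : ∀ m i, i + 1 < len m → (e m i).card = k
  ecol : ∀ m i, i + 1 < len m → φ (e m i) = cc m
  emem : ∀ m i, i + 1 < len m → v m i ∈ e m i ∧ v m (i + 1) ∈ e m i
  einj : ∀ m i j, i + 1 < len m → j + 1 < len m → e m i = e m j → i = j
  lastg : ∀ m, 0 < len m → mx (v m (len m - 1)) = m

variable {s k : ℕ} {φ : Finset ℕ → Fin (s * (k - 1))}
  {cc : Fin s → Fin (s * (k - 1))} {mx : ℕ → Fin s}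

def covered (st : PState s k φ cc mx) (x : ℕ) : Prop :=
  ∃ m i, i < st.len m ∧ st.v m i = x

def Ext (st st' : PState s k φ cc mx) : Prop :=
  ∀ m, st.len m ≤ st'.len m ∧ (∀ i, i < st.len m → st'.v m i = st.v m i) ∧
    (∀ i, i + 1 < st.len m → st'.e m i = st.e m i)

lemma Ext_refl (st : PState s k φ cc mx) : Ext st st :=
  fun _ => ⟨le_refl _, fun _ _ => rfl, fun _ _ => rfl⟩

lemma Ext_trans {st₁ st₂ st₃ : PState s k φ cc mx} (h12 : Ext st₁ st₂)
    (h23 : Ext st₂ st₃) : Ext st₁ st₃ := by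
  intro m
  obtain ⟨ha1, ha2, ha3⟩ := h12 m
  obtain ⟨hb1, hb2, hb3⟩ := h23 m
  exact ⟨le_trans ha1 hb1, fun i hi => (hb2 i (lt_of_lt_of_le hi ha1)).trans (ha2 i hi),
    fun i hi => (hb3 i (lt_of_lt_of_le hi ha1)).trans (ha3 i hi)⟩

lemma covered_mono {st st' : PState s k φ cc mx} (h : Ext st st') {x : ℕ}
    (hx : covered st x) : covered st' x := by
  obtain ⟨m, i, hi, hv⟩ := hx
  exact ⟨m, i, lt_of_lt_of_le hi (h m).1, by rw [(h m).2.1 i hi, hv]⟩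

noncomputable def coreF (st : PState s k φ cc mx) : Finset ℕ :=
  Finset.univ.biUnion fun m => (Finset.range (st.len m)).image (st.v m)

noncomputable def edgeF (st : PState s k φ cc mx) : Finset ℕ :=
  Finset.univ.biUnion fun m => (Finset.range (st.len m - 1)).biUnion fun i => st.e m i

lemma mem_coreF (st : PState s k φ cc mx) {m : Fin s} {i : ℕ} (hi : i < st.len m) :
    st.v m i ∈ coreF st := by
  apply Finset.mem_biUnion.2 ⟨m, Finset.mem_univ _, ?_⟩
  exact Finset.mem_image.2 ⟨i, Finset.mem_range.2 hi, rfl⟩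

lemma edge_sub (st : PState s k φ cc mx) {m : Fin s} {i : ℕ} (hi : i + 1 < st.len m) :
    st.e m i ⊆ edgeF st := by
  intro z hz
  apply Finset.mem_biUnion.2 ⟨m, Finset.mem_univ _, ?_⟩
  exact Finset.mem_biUnion.2 ⟨i, Finset.mem_range.2 (by omega), hz⟩

end BergeProof

namespace BergeProof

variable {s k : ℕ} {φ : Finset ℕ → Fin (s * (k - 1))}
  {cc : Fin s → Fin (s * (k - 1))} {mx : ℕ → Fin s}

/-- start a new path with a single vertex -/
lemma append1 (st : PState s k φ cc mx) (m : Fin s) (x : ℕ)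
    (hL : st.len m = 0)
    (hxold : ∀ m' i, i < st.len m' → st.v m' i ≠ x)
    (hmx : mx x = m) :
    ∃ st' : PState s k φ cc mx, Ext st st' ∧ covered st' x := by
  classical
  refine ⟨⟨(fun m' => if m' = m then 1 else st.len m'),
    (fun m' i => if m' = m ∧ i = 0 then x else st.v m' i), st.e,
    ?_, ?_, ?_, ?_, ?_, ?_, ?_⟩, ?_, ?_⟩
  · -- inj
    intro m' i j hi hj hv
    split_ifs at hi hj with h'
    · omega
    · rw [if_neg (show ¬(m' = m ∧ i = 0) from fun hc => h' hc.1),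
        if_neg (show ¬(m' = m ∧ j = 0) from fun hc => h' hc.1)] at hv
      exact st.inj m' i j hi hj hv
  · -- disj
    intro m1 m2 i j hne hi hj
    by_cases h1 : m1 = m <;> by_cases h2 : m2 = m
    · exact absurd (h1.trans h2.symm) hne
    · rw [if_pos h1] at hi
      rw [if_neg h2] at hj
      have hi0 : i = 0 := by omega
      rw [if_pos ⟨h1, hi0⟩, if_neg (show ¬(m2 = m ∧ j = 0) from fun hc => h2 hc.1)]
      exact fun hv => hxold m2 j hj hv.symm
    · rw [if_pos h2] at hj
      rw [if_neg h1] at hi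
      have hj0 : j = 0 := by omega
      rw [if_neg (show ¬(m1 = m ∧ i = 0) from fun hc => h1 hc.1), if_pos ⟨h2, hj0⟩]
      exact fun hv => hxold m1 i hi hv
    · rw [if_neg h1] at hi
      rw [if_neg h2] at hj
      rw [if_neg (show ¬(m1 = m ∧ i = 0) from fun hc => h1 hc.1),
        if_neg (show ¬(m2 = m ∧ j = 0) from fun hc => h2 hc.1)]
      exact st.disj m1 m2 i j hne hi hj
  · -- ecard
    intro m' i hi
    split_ifs at hi with h'
    · omega
    · exact st.ecard m' i hi
  · -- ecol
    intro m' i hi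
    split_ifs at hi with h'
    · omega
    · exact st.ecol m' i hi
  · -- emem
    intro m' i hi
    split_ifs at hi with h'
    · omega
    · rw [if_neg (show ¬(m' = m ∧ i = 0) from fun hc => h' hc.1),
        if_neg (show ¬(m' = m ∧ i + 1 = 0) from fun hc => h' hc.1)]
      exact st.emem m' i hi
  · -- einj
    intro m' i j hi hj
    split_ifs at hi hj with h'
    · omega
    · exact st.einj m' i j hi hj
  · -- lastg
    intro m' hm'
    split_ifs at hm' with h'
    · rw [if_pos h', if_pos (show m' = m ∧ (1:ℕ) - 1 = 0 from ⟨h', rfl⟩)]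
      rw [h']
      exact hmx
    · rw [if_neg h']
      rw [if_neg (show ¬(m' = m ∧ st.len m' - 1 = 0) from fun hc => h' hc.1)]
      exact st.lastg m' hm'
  · -- Ext
    intro m'
    refine ⟨?_, ?_, fun i _ => rfl⟩
    · simp only
      split_ifs with h'
      · subst h'; omega
      · exact le_refl _
    · intro i hi
      simp only
      by_cases h' : m' = m
      · subst h'; rw [hL] at hi; omega
      · rw [if_neg (show ¬(m' = m ∧ i = 0) from fun hc => h' hc.1)]
  · -- covered x
    refine ⟨m, 0, ?_, ?_⟩ <;> simp

end BergeProof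

namespace BergeProof

variable {s k : ℕ} {φ : Finset ℕ → Fin (s * (k - 1))}
  {cc : Fin s → Fin (s * (k - 1))} {mx : ℕ → Fin s}

/-- extend path m (last index L) by one vertex x, adjacent to the old last
vertex via the new edge E -/
lemma append1e (st : PState s k φ cc mx) (m : Fin s) (L : ℕ) (x : ℕ) (E : Finset ℕ)
    (hL : st.len m = L + 1)
    (hxold : ∀ m' i, i < st.len m' → st.v m' i ≠ x)
    (hEnew : ∀ m' i, i + 1 < st.len m' → st.e m' i ≠ E)
    (hE2 : E.card = k)
    (hEcol : φ E = cc m)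
    (hyE : st.v m L ∈ E)
    (hxE : x ∈ E)
    (hmx : mx x = m) :
    ∃ st' : PState s k φ cc mx, Ext st st' ∧ covered st' x := by
  classical
  refine ⟨⟨(fun m' => if m' = m then L + 2 else st.len m'),
    (fun m' i => if m' = m ∧ i = L + 1 then x else st.v m' i),
    (fun m' i => if m' = m ∧ i = L then E else st.e m' i),
    ?_, ?_, ?_, ?_, ?_, ?_, ?_⟩, ?_, ?_⟩
  · -- inj
    intro m' i j hi hj hv
    split_ifs at hi hj with h'
    · have hlen : st.len m' = L + 1 := by rw [h', hL]
      by_cases hiL : i = L + 1 <;> by_cases hjL : j = L + 1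
      · omega
      · rw [if_pos ⟨h', hiL⟩, if_neg (show ¬(m' = m ∧ j = L + 1) from fun hc => hjL hc.2)] at hv
        exact absurd hv.symm (hxold m' j (by omega))
      · rw [if_neg (show ¬(m' = m ∧ i = L + 1) from fun hc => hiL hc.2), if_pos ⟨h', hjL⟩] at hv
        exact absurd hv (hxold m' i (by omega))
      · rw [if_neg (show ¬(m' = m ∧ i = L + 1) from fun hc => hiL hc.2),
          if_neg (show ¬(m' = m ∧ j = L + 1) from fun hc => hjL hc.2)] at hv
        exact st.inj m' i j (by omega) (by omega) hv
    · rw [if_neg (show ¬(m' = m ∧ i = L + 1) from fun hc => h' hc.1),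
        if_neg (show ¬(m' = m ∧ j = L + 1) from fun hc => h' hc.1)] at hv
      exact st.inj m' i j hi hj hv
  · -- disj
    intro m1 m2 i j hne hi hj
    by_cases h1 : m1 = m <;> by_cases h2 : m2 = m
    · exact absurd (h1.trans h2.symm) hne
    · rw [if_pos h1] at hi
      rw [if_neg h2] at hj
      rw [if_neg (show ¬(m2 = m ∧ j = L + 1) from fun hc => h2 hc.1)]
      by_cases hiL : i = L + 1
      · rw [if_pos ⟨h1, hiL⟩]
        exact fun hv => hxold m2 j hj hv.symm
      · rw [if_neg (show ¬(m1 = m ∧ i = L + 1) from fun hc => hiL hc.2)]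
        refine st.disj m1 m2 i j hne ?_ hj
        rw [h1, hL]
        omega
    · rw [if_pos h2] at hj
      rw [if_neg h1] at hi
      rw [if_neg (show ¬(m1 = m ∧ i = L + 1) from fun hc => h1 hc.1)]
      by_cases hjL : j = L + 1
      · rw [if_pos ⟨h2, hjL⟩]
        exact fun hv => hxold m1 i hi hv
      · rw [if_neg (show ¬(m2 = m ∧ j = L + 1) from fun hc => hjL hc.2)]
        refine st.disj m1 m2 i j hne hi ?_
        rw [h2, hL]
        omega
    · rw [if_neg h1] at hi
      rw [if_neg h2] at hj
      rw [if_neg (show ¬(m1 = m ∧ i = L + 1) from fun hc => h1 hc.1),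
        if_neg (show ¬(m2 = m ∧ j = L + 1) from fun hc => h2 hc.1)]
      exact st.disj m1 m2 i j hne hi hj
  · -- ecard
    intro m' i hi
    split_ifs at hi with h'
    · have hlen : st.len m' = L + 1 := by rw [h', hL]
      by_cases hiL : i = L
      · rw [if_pos ⟨h', hiL⟩]
        exact hE2
      · rw [if_neg (show ¬(m' = m ∧ i = L) from fun hc => hiL hc.2)]
        exact st.ecard m' i (by omega)
    · rw [if_neg (show ¬(m' = m ∧ i = L) from fun hc => h' hc.1)]
      exact st.ecard m' i hi
  · -- ecol
    intro m' i hi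
    split_ifs at hi with h'
    · have hlen : st.len m' = L + 1 := by rw [h', hL]
      by_cases hiL : i = L
      · rw [if_pos ⟨h', hiL⟩, h']
        exact hEcol
      · rw [if_neg (show ¬(m' = m ∧ i = L) from fun hc => hiL hc.2)]
        exact st.ecol m' i (by omega)
    · rw [if_neg (show ¬(m' = m ∧ i = L) from fun hc => h' hc.1)]
      exact st.ecol m' i hi
  · -- emem
    intro m' i hi
    split_ifs at hi with h'
    · have hlen : st.len m' = L + 1 := by rw [h', hL]
      by_cases hiL : i = L
      · rw [if_pos ⟨h', hiL⟩, if_neg (show ¬(m' = m ∧ i = L + 1) from fun hc => by omega),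
          if_pos (show m' = m ∧ i + 1 = L + 1 from ⟨h', by omega⟩)]
        refine ⟨?_, hxE⟩
        rw [hiL, h']
        exact hyE
      · rw [if_neg (show ¬(m' = m ∧ i = L) from fun hc => hiL hc.2),
          if_neg (show ¬(m' = m ∧ i = L + 1) from fun hc => by omega),
          if_neg (show ¬(m' = m ∧ i + 1 = L + 1) from fun hc => hiL (by omega))]
        exact st.emem m' i (by omega)
    · rw [if_neg (show ¬(m' = m ∧ i = L) from fun hc => h' hc.1),
        if_neg (show ¬(m' = m ∧ i = L + 1) from fun hc => h' hc.1),
        if_neg (show ¬(m' = m ∧ i + 1 = L + 1) from fun hc => h' hc.1)]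
      exact st.emem m' i hi
  · -- einj
    intro m' i j hi hj hv
    split_ifs at hi hj with h'
    · have hlen : st.len m' = L + 1 := by rw [h', hL]
      by_cases hiL : i = L <;> by_cases hjL : j = L
      · omega
      · rw [if_pos ⟨h', hiL⟩, if_neg (show ¬(m' = m ∧ j = L) from fun hc => hjL hc.2)] at hv
        exact absurd hv.symm (hEnew m' j (by omega))
      · rw [if_neg (show ¬(m' = m ∧ i = L) from fun hc => hiL hc.2), if_pos ⟨h', hjL⟩] at hv
        exact absurd hv (hEnew m' i (by omega))
      · rw [if_neg (show ¬(m' = m ∧ i = L) from fun hc => hiL hc.2),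
          if_neg (show ¬(m' = m ∧ j = L) from fun hc => hjL hc.2)] at hv
        exact st.einj m' i j (by omega) (by omega) hv
    · rw [if_neg (show ¬(m' = m ∧ i = L) from fun hc => h' hc.1),
        if_neg (show ¬(m' = m ∧ j = L) from fun hc => h' hc.1)] at hv
      exact st.einj m' i j hi hj hv
  · -- lastg
    intro m' hm'
    split_ifs at hm' with h'
    · rw [if_pos h', if_pos (show m' = m ∧ (L + 2) - 1 = L + 1 from ⟨h', rfl⟩)]
      rw [h']
      exact hmx
    · rw [if_neg h']
      rw [if_neg (show ¬(m' = m ∧ st.len m' - 1 = L + 1) from fun hc => h' hc.1)]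
      exact st.lastg m' hm'
  · -- Ext
    intro m'
    refine ⟨?_, ?_, ?_⟩
    · simp only
      split_ifs with h'
      · rw [h', hL]
        omega
      · exact le_refl _
    · intro i hi
      simp only
      by_cases h' : m' = m
      · rw [if_neg (show ¬(m' = m ∧ i = L + 1) from fun hc => by
          rw [h', hL] at hi; omega)]
      · rw [if_neg (show ¬(m' = m ∧ i = L + 1) from fun hc => h' hc.1)]
    · intro i hi
      simp only
      by_cases h' : m' = m
      · rw [if_neg (show ¬(m' = m ∧ i = L) from fun hc => by
          rw [h', hL] at hi; omega)]
      · rw [if_neg (show ¬(m' = m ∧ i = L) from fun hc => h' hc.1)]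
  · -- covered x
    refine ⟨m, L + 1, ?_, ?_⟩ <;> simp

end BergeProof

namespace BergeProof

variable {s k : ℕ} {φ : Finset ℕ → Fin (s * (k - 1))}
  {cc : Fin s → Fin (s * (k - 1))} {mx : ℕ → Fin s}

/-- extend path m (last index L) by a relay vertex w and a vertex x, with new
edges E₁ (containing the old last vertex and w) and E₂ (containing w and x) -/
lemma append2 (st : PState s k φ cc mx) (m : Fin s) (L : ℕ) (w x : ℕ)
    (E₁ E₂ : Finset ℕ)
    (hL : st.len m = L + 1)
    (hwx : w ≠ x)
    (hwold : ∀ m' i, i < st.len m' → st.v m' i ≠ w)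
    (hxold : ∀ m' i, i < st.len m' → st.v m' i ≠ x)
    (hE12 : E₁ ≠ E₂)
    (hEnew₁ : ∀ m' i, i + 1 < st.len m' → st.e m' i ≠ E₁)
    (hEnew₂ : ∀ m' i, i + 1 < st.len m' → st.e m' i ≠ E₂)
    (hcard₁ : E₁.card = k) (hcard₂ : E₂.card = k)
    (hcol₁ : φ E₁ = cc m) (hcol₂ : φ E₂ = cc m)
    (hyE₁ : st.v m L ∈ E₁) (hwE₁ : w ∈ E₁) (hwE₂ : w ∈ E₂) (hxE₂ : x ∈ E₂)
    (hmx : mx x = m) :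
    ∃ st' : PState s k φ cc mx, Ext st st' ∧ covered st' x := by
  classical
  refine ⟨⟨(fun m' => if m' = m then L + 3 else st.len m'),
    (fun m' i => if m' = m ∧ i = L + 1 then w else
      if m' = m ∧ i = L + 2 then x else st.v m' i),
    (fun m' i => if m' = m ∧ i = L then E₁ else
      if m' = m ∧ i = L + 1 then E₂ else st.e m' i),
    ?_, ?_, ?_, ?_, ?_, ?_, ?_⟩, ?_, ?_⟩
  · -- inj
    intro m' i j hi hj hv
    split_ifs at hi hj with h'
    · have hlen : st.len m' = L + 1 := by rw [h', hL]
      by_cases hi1 : i = L + 1 <;> by_cases hi2 : i = L + 2 <;>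
        by_cases hj1 : j = L + 1 <;> by_cases hj2 : j = L + 2
      all_goals try omega
      · rw [if_pos ⟨h', hi1⟩, if_neg (show ¬(m' = m ∧ j = L + 1) from fun hc => hj1 hc.2),
          if_pos ⟨h', hj2⟩] at hv
        exact absurd hv hwx
      · rw [if_pos ⟨h', hi1⟩, if_neg (show ¬(m' = m ∧ j = L + 1) from fun hc => hj1 hc.2),
          if_neg (show ¬(m' = m ∧ j = L + 2) from fun hc => hj2 hc.2)] at hv
        exact absurd hv.symm (hwold m' j (by omega))
      · rw [if_neg (show ¬(m' = m ∧ i = L + 1) from fun hc => hi1 hc.2), if_pos ⟨h', hi2⟩,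
          if_pos ⟨h', hj1⟩] at hv
        exact absurd hv.symm hwx
      · rw [if_neg (show ¬(m' = m ∧ i = L + 1) from fun hc => hi1 hc.2), if_pos ⟨h', hi2⟩,
          if_neg (show ¬(m' = m ∧ j = L + 1) from fun hc => hj1 hc.2),
          if_neg (show ¬(m' = m ∧ j = L + 2) from fun hc => hj2 hc.2)] at hv
        exact absurd hv.symm (hxold m' j (by omega))
      · rw [if_neg (show ¬(m' = m ∧ i = L + 1) from fun hc => hi1 hc.2),
          if_neg (show ¬(m' = m ∧ i = L + 2) from fun hc => hi2 hc.2),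
          if_pos ⟨h', hj1⟩] at hv
        exact absurd hv (hwold m' i (by omega))
      · rw [if_neg (show ¬(m' = m ∧ i = L + 1) from fun hc => hi1 hc.2),
          if_neg (show ¬(m' = m ∧ i = L + 2) from fun hc => hi2 hc.2),
          if_neg (show ¬(m' = m ∧ j = L + 1) from fun hc => hj1 hc.2),
          if_pos ⟨h', hj2⟩] at hv
        exact absurd hv (hxold m' i (by omega))
      · rw [if_neg (show ¬(m' = m ∧ i = L + 1) from fun hc => hi1 hc.2),
          if_neg (show ¬(m' = m ∧ i = L + 2) from fun hc => hi2 hc.2),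
          if_neg (show ¬(m' = m ∧ j = L + 1) from fun hc => hj1 hc.2),
          if_neg (show ¬(m' = m ∧ j = L + 2) from fun hc => hj2 hc.2)] at hv
        exact st.inj m' i j (by omega) (by omega) hv
    · rw [if_neg (show ¬(m' = m ∧ i = L + 1) from fun hc => h' hc.1),
        if_neg (show ¬(m' = m ∧ i = L + 2) from fun hc => h' hc.1),
        if_neg (show ¬(m' = m ∧ j = L + 1) from fun hc => h' hc.1),
        if_neg (show ¬(m' = m ∧ j = L + 2) from fun hc => h' hc.1)] at hv
      exact st.inj m' i j hi hj hv
  · -- disj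
    intro m1 m2 i j hne hi hj
    by_cases h1 : m1 = m <;> by_cases h2 : m2 = m
    · exact absurd (h1.trans h2.symm) hne
    · rw [if_pos h1] at hi
      rw [if_neg h2] at hj
      rw [if_neg (show ¬(m2 = m ∧ j = L + 1) from fun hc => h2 hc.1),
        if_neg (show ¬(m2 = m ∧ j = L + 2) from fun hc => h2 hc.1)]
      by_cases hi1 : i = L + 1
      · rw [if_pos ⟨h1, hi1⟩]
        exact fun hv => hwold m2 j hj hv.symm
      · by_cases hi2 : i = L + 2
        · rw [if_neg (show ¬(m1 = m ∧ i = L + 1) from fun hc => hi1 hc.2), if_pos ⟨h1, hi2⟩]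
          exact fun hv => hxold m2 j hj hv.symm
        · rw [if_neg (show ¬(m1 = m ∧ i = L + 1) from fun hc => hi1 hc.2),
            if_neg (show ¬(m1 = m ∧ i = L + 2) from fun hc => hi2 hc.2)]
          refine st.disj m1 m2 i j hne ?_ hj
          rw [h1, hL]
          omega
    · rw [if_pos h2] at hj
      rw [if_neg h1] at hi
      rw [if_neg (show ¬(m1 = m ∧ i = L + 1) from fun hc => h1 hc.1),
        if_neg (show ¬(m1 = m ∧ i = L + 2) from fun hc => h1 hc.1)]
      by_cases hj1 : j = L + 1
      · rw [if_pos ⟨h2, hj1⟩]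
        exact fun hv => hwold m1 i hi hv
      · by_cases hj2 : j = L + 2
        · rw [if_neg (show ¬(m2 = m ∧ j = L + 1) from fun hc => hj1 hc.2), if_pos ⟨h2, hj2⟩]
          exact fun hv => hxold m1 i hi hv
        · rw [if_neg (show ¬(m2 = m ∧ j = L + 1) from fun hc => hj1 hc.2),
            if_neg (show ¬(m2 = m ∧ j = L + 2) from fun hc => hj2 hc.2)]
          refine st.disj m1 m2 i j hne hi ?_
          rw [h2, hL]
          omega
    · rw [if_neg h1] at hi
      rw [if_neg h2] at hj
      rw [if_neg (show ¬(m1 = m ∧ i = L + 1) from fun hc => h1 hc.1),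
        if_neg (show ¬(m1 = m ∧ i = L + 2) from fun hc => h1 hc.1),
        if_neg (show ¬(m2 = m ∧ j = L + 1) from fun hc => h2 hc.1),
        if_neg (show ¬(m2 = m ∧ j = L + 2) from fun hc => h2 hc.1)]
      exact st.disj m1 m2 i j hne hi hj
  · -- ecard
    intro m' i hi
    split_ifs at hi with h'
    · have hlen : st.len m' = L + 1 := by rw [h', hL]
      by_cases hiL : i = L
      · rw [if_pos ⟨h', hiL⟩]
        exact hcard₁
      · by_cases hiL1 : i = L + 1
        · rw [if_neg (show ¬(m' = m ∧ i = L) from fun hc => hiL hc.2), if_pos ⟨h', hiL1⟩]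
          exact hcard₂
        · rw [if_neg (show ¬(m' = m ∧ i = L) from fun hc => hiL hc.2),
            if_neg (show ¬(m' = m ∧ i = L + 1) from fun hc => hiL1 hc.2)]
          exact st.ecard m' i (by omega)
    · rw [if_neg (show ¬(m' = m ∧ i = L) from fun hc => h' hc.1),
        if_neg (show ¬(m' = m ∧ i = L + 1) from fun hc => h' hc.1)]
      exact st.ecard m' i hi
  · -- ecol
    intro m' i hi
    split_ifs at hi with h'
    · have hlen : st.len m' = L + 1 := by rw [h', hL]
      by_cases hiL : i = L
      · rw [if_pos ⟨h', hiL⟩, h']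
        exact hcol₁
      · by_cases hiL1 : i = L + 1
        · rw [if_neg (show ¬(m' = m ∧ i = L) from fun hc => hiL hc.2), if_pos ⟨h', hiL1⟩, h']
          exact hcol₂
        · rw [if_neg (show ¬(m' = m ∧ i = L) from fun hc => hiL hc.2),
            if_neg (show ¬(m' = m ∧ i = L + 1) from fun hc => hiL1 hc.2)]
          exact st.ecol m' i (by omega)
    · rw [if_neg (show ¬(m' = m ∧ i = L) from fun hc => h' hc.1),
        if_neg (show ¬(m' = m ∧ i = L + 1) from fun hc => h' hc.1)]
      exact st.ecol m' i hi
  · -- emem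
    intro m' i hi
    split_ifs at hi with h'
    · have hlen : st.len m' = L + 1 := by rw [h', hL]
      by_cases hiL : i = L
      · rw [if_pos ⟨h', hiL⟩, if_neg (show ¬(m' = m ∧ i = L + 1) from fun hc => by omega),
          if_neg (show ¬(m' = m ∧ i = L + 2) from fun hc => by omega),
          if_pos (show m' = m ∧ i + 1 = L + 1 from ⟨h', by omega⟩)]
        refine ⟨?_, hwE₁⟩
        rw [hiL, h']
        exact hyE₁
      · by_cases hiL1 : i = L + 1
        · rw [if_neg (show ¬(m' = m ∧ i = L) from fun hc => hiL hc.2), if_pos ⟨h', hiL1⟩,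
            if_pos (show m' = m ∧ i = L + 1 from ⟨h', hiL1⟩),
            if_neg (show ¬(m' = m ∧ i + 1 = L + 1) from fun hc => by omega),
            if_pos (show m' = m ∧ i + 1 = L + 2 from ⟨h', by omega⟩)]
          exact ⟨hwE₂, hxE₂⟩
        · rw [if_neg (show ¬(m' = m ∧ i = L) from fun hc => hiL hc.2),
            if_neg (show ¬(m' = m ∧ i = L + 1) from fun hc => hiL1 hc.2),
            if_neg (show ¬(m' = m ∧ i = L + 1) from fun hc => hiL1 hc.2),
            if_neg (show ¬(m' = m ∧ i = L + 2) from fun hc => by omega),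
            if_neg (show ¬(m' = m ∧ i + 1 = L + 1) from fun hc => hiL (by omega)),
            if_neg (show ¬(m' = m ∧ i + 1 = L + 2) from fun hc => hiL1 (by omega))]
          exact st.emem m' i (by omega)
    · rw [if_neg (show ¬(m' = m ∧ i = L) from fun hc => h' hc.1),
        if_neg (show ¬(m' = m ∧ i = L + 1) from fun hc => h' hc.1),
        if_neg (show ¬(m' = m ∧ i = L + 1) from fun hc => h' hc.1),
        if_neg (show ¬(m' = m ∧ i = L + 2) from fun hc => h' hc.1),
        if_neg (show ¬(m' = m ∧ i + 1 = L + 1) from fun hc => h' hc.1),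
        if_neg (show ¬(m' = m ∧ i + 1 = L + 2) from fun hc => h' hc.1)]
      exact st.emem m' i hi
  · -- einj
    intro m' i j hi hj hv
    split_ifs at hi hj with h'
    · have hlen : st.len m' = L + 1 := by rw [h', hL]
      by_cases hi1 : i = L <;> by_cases hi2 : i = L + 1 <;>
        by_cases hj1 : j = L <;> by_cases hj2 : j = L + 1
      all_goals try omega
      · rw [if_pos ⟨h', hi1⟩, if_neg (show ¬(m' = m ∧ j = L) from fun hc => hj1 hc.2),
          if_pos ⟨h', hj2⟩] at hv
        exact absurd hv hE12
      · rw [if_pos ⟨h', hi1⟩, if_neg (show ¬(m' = m ∧ j = L) from fun hc => hj1 hc.2),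
          if_neg (show ¬(m' = m ∧ j = L + 1) from fun hc => hj2 hc.2)] at hv
        exact absurd hv.symm (hEnew₁ m' j (by omega))
      · rw [if_neg (show ¬(m' = m ∧ i = L) from fun hc => hi1 hc.2), if_pos ⟨h', hi2⟩,
          if_pos ⟨h', hj1⟩] at hv
        exact absurd hv.symm hE12
      · rw [if_neg (show ¬(m' = m ∧ i = L) from fun hc => hi1 hc.2), if_pos ⟨h', hi2⟩,
          if_neg (show ¬(m' = m ∧ j = L) from fun hc => hj1 hc.2),
          if_neg (show ¬(m' = m ∧ j = L + 1) from fun hc => hj2 hc.2)] at hv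
        exact absurd hv.symm (hEnew₂ m' j (by omega))
      · rw [if_neg (show ¬(m' = m ∧ i = L) from fun hc => hi1 hc.2),
          if_neg (show ¬(m' = m ∧ i = L + 1) from fun hc => hi2 hc.2),
          if_pos ⟨h', hj1⟩] at hv
        exact absurd hv (hEnew₁ m' i (by omega))
      · rw [if_neg (show ¬(m' = m ∧ i = L) from fun hc => hi1 hc.2),
          if_neg (show ¬(m' = m ∧ i = L + 1) from fun hc => hi2 hc.2),
          if_neg (show ¬(m' = m ∧ j = L) from fun hc => hj1 hc.2),
          if_pos ⟨h', hj2⟩] at hv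
        exact absurd hv (hEnew₂ m' i (by omega))
      · rw [if_neg (show ¬(m' = m ∧ i = L) from fun hc => hi1 hc.2),
          if_neg (show ¬(m' = m ∧ i = L + 1) from fun hc => hi2 hc.2),
          if_neg (show ¬(m' = m ∧ j = L) from fun hc => hj1 hc.2),
          if_neg (show ¬(m' = m ∧ j = L + 1) from fun hc => hj2 hc.2)] at hv
        exact st.einj m' i j (by omega) (by omega) hv
    · rw [if_neg (show ¬(m' = m ∧ i = L) from fun hc => h' hc.1),
        if_neg (show ¬(m' = m ∧ i = L + 1) from fun hc => h' hc.1),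
        if_neg (show ¬(m' = m ∧ j = L) from fun hc => h' hc.1),
        if_neg (show ¬(m' = m ∧ j = L + 1) from fun hc => h' hc.1)] at hv
      exact st.einj m' i j hi hj hv
  · -- lastg
    intro m' hm'
    split_ifs at hm' with h'
    · rw [if_pos h',
        if_neg (show ¬(m' = m ∧ (L + 3) - 1 = L + 1) from fun hc => by omega),
        if_pos (show m' = m ∧ (L + 3) - 1 = L + 2 from ⟨h', rfl⟩)]
      rw [h']
      exact hmx
    · rw [if_neg h']
      rw [if_neg (show ¬(m' = m ∧ st.len m' - 1 = L + 1) from fun hc => h' hc.1),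
        if_neg (show ¬(m' = m ∧ st.len m' - 1 = L + 2) from fun hc => h' hc.1)]
      exact st.lastg m' hm'
  · -- Ext
    intro m'
    refine ⟨?_, ?_, ?_⟩
    · simp only
      split_ifs with h'
      · rw [h', hL]
        omega
      · exact le_refl _
    · intro i hi
      simp only
      by_cases h' : m' = m
      · rw [if_neg (show ¬(m' = m ∧ i = L + 1) from fun hc => by
            rw [h', hL] at hi; omega),
          if_neg (show ¬(m' = m ∧ i = L + 2) from fun hc => by
            rw [h', hL] at hi; omega)]
      · rw [if_neg (show ¬(m' = m ∧ i = L + 1) from fun hc => h' hc.1),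
          if_neg (show ¬(m' = m ∧ i = L + 2) from fun hc => h' hc.1)]
    · intro i hi
      simp only
      by_cases h' : m' = m
      · rw [if_neg (show ¬(m' = m ∧ i = L) from fun hc => by
            rw [h', hL] at hi; omega),
          if_neg (show ¬(m' = m ∧ i = L + 1) from fun hc => by
            rw [h', hL] at hi; omega)]
      · rw [if_neg (show ¬(m' = m ∧ i = L) from fun hc => h' hc.1),
          if_neg (show ¬(m' = m ∧ i = L + 1) from fun hc => h' hc.1)]
  · -- covered x
    refine ⟨m, L + 2, ?_, ?_⟩ <;> simp

end BergeProof

namespace BergeProof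

variable {s k : ℕ} {φ : Finset ℕ → Fin (s * (k - 1))}
  {cc : Fin s → Fin (s * (k - 1))} {mx : ℕ → Fin s} {Ah : ℕ → Finset ℕ}

lemma step_ex (hk : 2 ≤ k)
    (hnm : ∀ x, x ∉ Ah x) (hcard : ∀ x, (Ah x).card ≤ k - 2)
    (hgood : ∀ x, cstar k φ (insert x (Ah x)) = cc (mx x))
    (st : PState s k φ cc mx) (n : ℕ) :
    ∃ st' : PState s k φ cc mx, Ext st st' ∧ covered st' n := by
  classical
  by_cases hcov : covered st n
  · exact ⟨st, Ext_refl st, hcov⟩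
  have hq : ∀ m' i, i < st.len m' → st.v m' i ≠ n := by
    intro m' i hi hv
    exact hcov ⟨m', i, hi, hv⟩
  set m := mx n with hm
  rcases hL : st.len m with _ | L
  -- path m is empty
  · exact append1 st m n hL hq hm.symm
  -- path m nonempty with last index L
  · set y := st.v m L with hy
    have hmy : mx y = m := by
      have h := st.lastg m (by omega)
      rw [hL] at h
      simpa using h
    set S₁ := insert y (Ah y) with hS1
    set S₂ := insert n (Ah n) with hS2
    have hc1 : cstar k φ S₁ = cc m := by rw [hS1, hgood y, hmy]
    have hc2 : cstar k φ S₂ = cc m := by rw [hS2, hgood n, ← hm]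
    have hyS1 : y ∈ S₁ := Finset.mem_insert_self _ _
    have hnS2 : n ∈ S₂ := Finset.mem_insert_self _ _
    have hcard1 : S₁.card ≤ k - 1 := by
      rw [hS1]
      have h1 := Finset.card_insert_le y (Ah y)
      have h2 := hcard y
      omega
    have hcard2 : S₂.card ≤ k - 1 := by
      rw [hS2]
      have h1 := Finset.card_insert_le n (Ah n)
      have h2 := hcard n
      omega
    by_cases hSS : S₁ = S₂
    -- the hub sets coincide : n is adjacent to y directly
    · have hW : {w : ℕ | w ∉ S₁ ∧ cstar k φ (insert w S₁) = cstar k φ S₁} ∈ U :=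
        cstar_step k φ (by omega)
      have hWinf : ({w : ℕ | w ∉ S₁ ∧ cstar k φ (insert w S₁) = cstar k φ S₁} \
          ↑(edgeF st)).Infinite := (U_infinite hW).diff (edgeF st).finite_toSet
      obtain ⟨w, hwmem⟩ := hWinf.nonempty
      obtain ⟨⟨hw1, hw2⟩, hwE⟩ := hwmem
      have hbcard : (insert w S₁).card + (k - (insert w S₁).card) = k := by
        rw [Finset.card_insert_of_notMem hw1]
        omega
      obtain ⟨E, hE1, hE2, hE3, hE4⟩ := fill k φ (k - (insert w S₁).card) (insert w S₁) hbcard ∅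
      have hEcol : φ E = cc m := by rw [hE3, hw2, hc1]
      have hwe : w ∈ E := hE1 (Finset.mem_insert_self _ _)
      have hyE : y ∈ E := hE1 (Finset.mem_insert_of_mem hyS1)
      have hnE : n ∈ E := hE1 (Finset.mem_insert_of_mem (hSS ▸ hnS2))
      have hEnew : ∀ m' i, i + 1 < st.len m' → st.e m' i ≠ E := by
        intro m' i hi heq
        exact hwE (edge_sub st hi (heq ▸ hwe))
      exact append1e st m L n E hL hq hEnew hE2 hEcol hyE hnE hm.symm
    -- distinct hub sets : insert a relay vertex w between y and n
    · have hW1 : {w : ℕ | w ∉ S₁ ∧ cstar k φ (insert w S₁) = cstar k φ S₁} ∈ U :=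
        cstar_step k φ (by omega)
      have hW2 : {w : ℕ | w ∉ S₂ ∧ cstar k φ (insert w S₂) = cstar k φ S₂} ∈ U :=
        cstar_step k φ (by omega)
      set junk : Finset ℕ := coreF st ∪ edgeF st ∪ {n} with hjunk
      have hWinf : (({w : ℕ | w ∉ S₁ ∧ cstar k φ (insert w S₁) = cstar k φ S₁} ∩
          {w : ℕ | w ∉ S₂ ∧ cstar k φ (insert w S₂) = cstar k φ S₂}) \ ↑junk).Infinite :=
        (U_infinite (Filter.inter_mem hW1 hW2)).diff junk.finite_toSet
      obtain ⟨w, hwmem⟩ := hWinf.nonempty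
      obtain ⟨⟨⟨hw1, hw2⟩, hw3, hw4⟩, hwJ⟩ := hwmem
      have hwCore : w ∉ coreF st := fun h =>
        hwJ (by rw [hjunk]; simp only [Finset.coe_union, Set.mem_union]; tauto)
      have hwEdge : w ∉ edgeF st := fun h =>
        hwJ (by rw [hjunk]; simp only [Finset.coe_union, Set.mem_union]; tauto)
      have hwn : w ≠ n := fun h => by
        apply hwJ
        rw [hjunk]
        simp only [Finset.coe_union, Set.mem_union]
        right
        simp [h]
      have hbc1 : (insert w S₁).card + (k - (insert w S₁).card) = k := by
        rw [Finset.card_insert_of_notMem hw1]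
        omega
      obtain ⟨E₁, hA1, hA2, hA3, hA4⟩ :=
        fill k φ (k - (insert w S₁).card) (insert w S₁) hbc1 (edgeF st ∪ insert w S₂)
      have hcolE₁ : φ E₁ = cc m := by rw [hA3, hw2, hc1]
      have hbc2 : (insert w S₂).card + (k - (insert w S₂).card) = k := by
        rw [Finset.card_insert_of_notMem hw3]
        omega
      obtain ⟨E₂, hB1, hB2, hB3, hB4⟩ :=
        fill k φ (k - (insert w S₂).card) (insert w S₂) hbc2 (edgeF st ∪ E₁)
      have hcolE₂ : φ E₂ = cc m := by rw [hB3, hw4, hc2]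
      have hwE₁ : w ∈ E₁ := hA1 (Finset.mem_insert_self _ _)
      have hwE₂ : w ∈ E₂ := hB1 (Finset.mem_insert_self _ _)
      have hyE₁ : y ∈ E₁ := hA1 (Finset.mem_insert_of_mem hyS1)
      have hnE₂ : n ∈ E₂ := hB1 (Finset.mem_insert_of_mem hnS2)
      have hEnew₁ : ∀ m' i, i + 1 < st.len m' → st.e m' i ≠ E₁ := by
        intro m' i hi heq
        exact hwEdge (edge_sub st hi (heq ▸ hwE₁))
      have hEnew₂ : ∀ m' i, i + 1 < st.len m' → st.e m' i ≠ E₂ := by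
        intro m' i hi heq
        exact hwEdge (edge_sub st hi (heq ▸ hwE₂))
      have hwold : ∀ m' i, i < st.len m' → st.v m' i ≠ w := by
        intro m' i hi heq
        exact hwCore (heq ▸ mem_coreF st hi)
      have hE12 : E₁ ≠ E₂ := by
        intro heq
        have h2 : E₂ = insert w S₂ := by
          refine Finset.Subset.antisymm ?_ hB1
          intro z hz
          by_contra hzB
          exact (hB4 z hz hzB) (Finset.mem_union_right _ (heq ▸ hz))
        have h1 : E₁ = insert w S₁ := by
          refine Finset.Subset.antisymm ?_ hA1
          intro z hz
          by_contra hzB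
          apply hA4 z hz hzB
          apply Finset.mem_union_right
          rw [← h2, ← heq]
          exact hz
        apply hSS
        have h3 : insert w S₁ = insert w S₂ := by rw [← h1, ← h2, heq]
        calc S₁ = (insert w S₁).erase w := (Finset.erase_insert hw1).symm
        _ = (insert w S₂).erase w := by rw [h3]
        _ = S₂ := Finset.erase_insert hw3
      exact append2 st m L w n E₁ E₂ hL hwn hwold hq hE12 hEnew₁ hEnew₂ hA2 hB2
        hcolE₁ hcolE₂ hyE₁ hwE₁ hwE₂ hnE₂ hm.symm

end BergeProof

namespace BergeProof

variable {s k : ℕ} {φ : Finset ℕ → Fin (s * (k - 1))}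
  {cc : Fin s → Fin (s * (k - 1))} {mx : ℕ → Fin s}

lemma coe_lt_top' (i : ℕ) : (i : ℕ∞) < ⊤ := by
  exact Ne.lt_top (by simp)

lemma limit_path (st : ℕ → PState s k φ cc mx)
    (hext : ∀ {a b : ℕ}, a ≤ b → Ext (st a) (st b)) (m : Fin s) :
    ({x : ℕ | ∃ n i, i < (st n).len m ∧ (st n).v m i = x} = ∅) ∨
    IsMonoBergePath k 2 φ (cc m) {x : ℕ | ∃ n i, i < (st n).len m ∧ (st n).v m i = x} := by
  classical
  by_cases hbd : ∃ B, ∀ n, (st n).len m ≤ B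
  · -- the path stabilises
    obtain ⟨B, hB⟩ := hbd
    have hex : ∃ n₀, ∀ n, (st n).len m ≤ (st n₀).len m := by
      let P : ℕ → Prop := fun j => ∃ n, (st n).len m = j
      have hPB : P (Nat.findGreatest P B) :=
        Nat.findGreatest_spec (hB 0) (⟨0, rfl⟩ : P ((st 0).len m))
      obtain ⟨n₀, hn₀⟩ := hPB
      refine ⟨n₀, fun n => ?_⟩
      rw [hn₀]
      exact Nat.le_findGreatest (hB n) ⟨n, rfl⟩
    obtain ⟨n₀, hmax⟩ := hex
    have hXeq : {x : ℕ | ∃ n i, i < (st n).len m ∧ (st n).v m i = x} =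
        {x : ℕ | ∃ i, i < (st n₀).len m ∧ (st n₀).v m i = x} := by
      ext x
      simp only [Set.mem_setOf_eq]
      constructor
      · rintro ⟨n, i, hi, hv⟩
        rcases le_total n n₀ with h | h
        · exact ⟨i, lt_of_lt_of_le hi ((hext h) m).1, by rw [((hext h) m).2.1 i hi, hv]⟩
        · have hi0 : i < (st n₀).len m := lt_of_lt_of_le hi (hmax n)
          exact ⟨i, hi0, by rw [← ((hext h) m).2.1 i hi0, hv]⟩
      · rintro ⟨i, hi, hv⟩
        exact ⟨n₀, i, hi, hv⟩
    rw [hXeq]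
    rcases hL : (st n₀).len m with _ | L1
    · left
      ext x
      simp [hL]
    · rcases Nat.eq_zero_or_pos L1 with h1 | h1
      · subst h1
        right
        left
        refine ⟨(st n₀).v m 0, ?_⟩
        ext x
        simp only [Set.mem_setOf_eq, Set.mem_singleton_iff, hL]
        constructor
        · rintro ⟨i, hi, hv⟩
          have : i = 0 := by omega
          rw [← hv, this]
        · intro h
          exact ⟨0, by omega, h.symm⟩
      · right
        right
        refine ⟨(((st n₀).len m : ℕ) : ℕ∞), (st n₀).v m, (st n₀).e m, ?_, ?_, ?_, ?_, ?_⟩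
        · rw [Nat.cast_le, hL]
          omega
        · intro i j hi hj hv
          rw [Nat.cast_lt] at hi hj
          exact (st n₀).inj m i j hi hj hv
        · ext x
          simp only [Set.mem_setOf_eq, Nat.cast_lt]
          rw [hL]
        · intro i hi
          rw [Nat.cast_le] at hi
          have hi' : i + 1 < (st n₀).len m := by omega
          refine ⟨(st n₀).ecard m i hi', (st n₀).ecol m i hi', ?_⟩
          intro jj h1 h2
          have : jj = i ∨ jj = i + 1 := by omega
          rcases this with h | h
          · rw [h]
            exact ((st n₀).emem m i hi').1
          · rw [h]
            exact ((st n₀).emem m i hi').2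
        · intro i j hi hj hv
          rw [Nat.cast_le] at hi hj
          exact (st n₀).einj m i j (by omega) (by omega) hv
  · -- the path is infinite
    push_neg at hbd
    choose ch hch using hbd
    have hagreeV : ∀ n i, i < (st n).len m → (st n).v m i = (st (ch i)).v m i := by
      intro n i hi
      have hi' : i < (st (ch i)).len m := hch i
      rcases le_total n (ch i) with h | h
      · exact (((hext h) m).2.1 i hi).symm
      · exact ((hext h) m).2.1 i hi'
    have hagreeE : ∀ n i, i + 1 < (st n).len m → (st n).e m i = (st (ch (i + 1))).e m i := by
      intro n i hi
      have hi' : i + 1 < (st (ch (i + 1))).len m := hch (i + 1)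
      rcases le_total n (ch (i + 1)) with h | h
      · exact (((hext h) m).2.2 i hi).symm
      · exact ((hext h) m).2.2 i hi'
    right
    right
    refine ⟨⊤, (fun i => (st (ch i)).v m i), (fun i => (st (ch (i + 1))).e m i),
      le_top, ?_, ?_, ?_, ?_⟩
    · intro i j _ _ hv
      simp only at hv
      set n := ch (max i j) with hn
      have hlen : max i j < (st n).len m := hch _
      have hi : i < (st n).len m := by omega
      have hj : j < (st n).len m := by omega
      rw [← hagreeV n i hi, ← hagreeV n j hj] at hv
      exact (st n).inj m i j hi hj hv
    · ext x
      simp only [Set.mem_setOf_eq]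
      constructor
      · rintro ⟨n, i, hi, hv⟩
        exact ⟨i, coe_lt_top' i, by show (st (ch i)).v m i = x; rw [← hagreeV n i hi, hv]⟩
      · rintro ⟨i, -, hv⟩
        exact ⟨ch i, i, hch i, hv⟩
    · intro i _
      have hi' : i + 1 < (st (ch (i + 1))).len m := hch (i + 1)
      refine ⟨(st (ch (i + 1))).ecard m i hi', (st (ch (i + 1))).ecol m i hi', ?_⟩
      intro jj h1 h2
      have hjj : jj = i ∨ jj = i + 1 := by omega
      have hjlt : jj < (st (ch (i + 1))).len m := by omega
      show (st (ch jj)).v m jj ∈ (st (ch (i + 1))).e m i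
      rw [← hagreeV (ch (i + 1)) jj hjlt]
      rcases hjj with h | h
      · rw [h]
        exact ((st (ch (i + 1))).emem m i hi').1
      · rw [h]
        exact ((st (ch (i + 1))).emem m i hi').2
    · intro i j _ _ hv
      simp only at hv
      set n := ch (max i j + 1) with hn
      have hlen : max i j + 1 < (st n).len m := hch _
      have hi : i + 1 < (st n).len m := by omega
      have hj : j + 1 < (st n).len m := by omega
      rw [← hagreeE n i hi, ← hagreeE n j hj] at hv
      exact (st n).einj m i j hi hj hv

end BergeProof

namespace BergeProof

variable {s k : ℕ} {φ : Finset ℕ → Fin (s * (k - 1))}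
  {cc : Fin s → Fin (s * (k - 1))} {mx : ℕ → Fin s} {Ah : ℕ → Finset ℕ}

def initSt : PState s k φ cc mx where
  len := fun _ => 0
  v := fun _ _ => 0
  e := fun _ _ => ∅
  inj := fun _ i _ hi => absurd hi (Nat.not_lt_zero i)
  disj := fun _ _ i _ _ hi => absurd hi (Nat.not_lt_zero i)
  ecard := fun _ i hi => absurd hi (Nat.not_lt_zero _)
  ecol := fun _ i hi => absurd hi (Nat.not_lt_zero _)
  emem := fun _ i hi => absurd hi (Nat.not_lt_zero _)
  einj := fun _ i _ hi => absurd hi (Nat.not_lt_zero _)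
  lastg := fun _ hi => absurd hi (Nat.not_lt_zero _)

noncomputable def states (hk : 2 ≤ k) (hnm : ∀ x, x ∉ Ah x)
    (hcard : ∀ x, (Ah x).card ≤ k - 2)
    (hgood : ∀ x, cstar k φ (insert x (Ah x)) = cc (mx x)) : ℕ → PState s k φ cc mx
  | 0 => initSt
  | n + 1 => (step_ex hk hnm hcard hgood (states hk hnm hcard hgood n) n).choose

lemma states_spec (hk : 2 ≤ k) (hnm : ∀ x, x ∉ Ah x)
    (hcard : ∀ x, (Ah x).card ≤ k - 2)
    (hgood : ∀ x, cstar k φ (insert x (Ah x)) = cc (mx x)) (n : ℕ) :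
    Ext (states hk hnm hcard hgood n) (states hk hnm hcard hgood (n + 1)) ∧
      covered (states hk hnm hcard hgood (n + 1)) n :=
  (step_ex hk hnm hcard hgood (states hk hnm hcard hgood n) n).choose_spec

lemma states_ext (hk : 2 ≤ k) (hnm : ∀ x, x ∉ Ah x)
    (hcard : ∀ x, (Ah x).card ≤ k - 2)
    (hgood : ∀ x, cstar k φ (insert x (Ah x)) = cc (mx x)) {a b : ℕ} (hab : a ≤ b) :
    Ext (states hk hnm hcard hgood a) (states hk hnm hcard hgood b) := by
  induction b with
  | zero =>
    have : a = 0 := by omega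
    subst this
    exact Ext_refl _
  | succ b ih =>
    rcases Nat.lt_or_ge a (b + 1) with h | h
    · exact Ext_trans (ih (by omega)) (states_spec hk hnm hcard hgood b).1
    · have : a = b + 1 := by omega
      subst this
      exact Ext_refl _

end BergeProof

open BergeProof

/-- The vertices of every `s(k-1)`-edge-coloured countably infinite complete
`k`-graph can be partitioned into the cores of at most `s` monochromatic
Berge-paths (i.e. `2`-tight Berge-paths) of pairwise distinct colours. -/
theorem berge_path_partition_simple (s k : ℕ) (hk : 2 ≤ k)
    (φ : Finset ℕ → Fin (s * (k - 1))) :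
    ∃ (X : Fin s → Set ℕ) (c : Fin s → Fin (s * (k - 1))),
      Function.Injective c ∧
      (∀ i : Fin s, X i = ∅ ∨ IsMonoBergePath k 2 φ (c i) (X i)) ∧
      (∀ i j : Fin s, i ≠ j → Disjoint (X i) (X j)) ∧
      (⋃ i, X i) = Set.univ := by
  classical
  rcases Nat.eq_zero_or_pos s with hs | hs
  · exfalso
    have h := (φ ∅).2
    have h0 : s * (k - 1) = 0 := by rw [hs, Nat.zero_mul]
    omega
  · obtain ⟨j, hj, hpal⟩ := palette s k hk φ
    choose mf Af hmf hAx hAcard hAval using hpal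
    have hccb : ∀ m : Fin s, m.val * (k - 1) + j < s * (k - 1) := by
      intro m
      have h1 : m.val + 1 ≤ s := m.isLt
      have h2 : (m.val + 1) * (k - 1) ≤ s * (k - 1) := Nat.mul_le_mul_right _ h1
      have h3 : (m.val + 1) * (k - 1) = m.val * (k - 1) + (k - 1) := by ring
      omega
    set cc : Fin s → Fin (s * (k - 1)) := fun m => ⟨m.val * (k - 1) + j, hccb m⟩ with hcc
    set mx : ℕ → Fin s := fun x => ⟨mf x, hmf x⟩ with hmx
    have hgood : ∀ x, cstar k φ (insert x (Af x)) = cc (mx x) := by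
      intro x
      apply Fin.ext
      rw [hAval x]
    set st : ℕ → PState s k φ cc mx := states hk hAx hAcard hgood with hst
    have hext : ∀ {a b : ℕ}, a ≤ b → Ext (st a) (st b) :=
      fun h => states_ext hk hAx hAcard hgood h
    refine ⟨fun m => {x : ℕ | ∃ n i, i < (st n).len m ∧ (st n).v m i = x}, cc, ?_, ?_, ?_, ?_⟩
    · -- injectivity of the colour assignment
      intro a b hab
      have h : a.val * (k - 1) + j = b.val * (k - 1) + j := by
        have h0 := congrArg Fin.val hab
        simpa [hcc] using h0
      have h2 : a.val * (k - 1) = b.val * (k - 1) := by omega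
      exact Fin.ext (Nat.eq_of_mul_eq_mul_right (by omega) h2)
    · intro m
      exact limit_path st (fun h => hext h) m
    · -- disjointness
      intro a b hab
      rw [Set.disjoint_left]
      rintro x ⟨n1, i1, hi1, hv1⟩ ⟨n2, i2, hi2, hv2⟩
      have hia : i1 < (st (max n1 n2)).len a :=
        lt_of_lt_of_le hi1 ((hext (le_max_left n1 n2)) a).1
      have hib : i2 < (st (max n1 n2)).len b :=
        lt_of_lt_of_le hi2 ((hext (le_max_right n1 n2)) b).1
      have hva : (st (max n1 n2)).v a i1 = x := by
        rw [((hext (le_max_left n1 n2)) a).2.1 i1 hi1, hv1]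
      have hvb : (st (max n1 n2)).v b i2 = x := by
        rw [((hext (le_max_right n1 n2)) b).2.1 i2 hi2, hv2]
      exact (st (max n1 n2)).disj a b i1 i2 hab hia hib (by rw [hva, hvb])
    · -- union is everything
      ext x
      simp only [Set.mem_iUnion, Set.mem_univ, iff_true, Set.mem_setOf_eq]
      obtain ⟨m, i, hi, hv⟩ := (states_spec hk hAx hAcard hgood x).2
      exact ⟨m, x + 1, i, hi, hv⟩
end

section
/- For all s, k, t ∈ ℕ with k ≥ t ≥ 2 and every edge-colouring of the complete k-uniform hypergraph on ℕ with r = s(k−t+1) colours, the vertices of ℕ can be partitioned into the cores of at most s monochromatic t-tight Berge-paths (finite or infinite) of pairwise distinct colours. -/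
open scoped Classical
noncomputable section
namespace BPP

/-! ### Ultrafilter basics -/

def U : Ultrafilter ℕ := Filter.hyperfilter ℕ

lemma compl_finset_mem_U (A : Finset ℕ) : {y : ℕ | y ∉ A} ∈ U := by
  have : ((A : Set ℕ))ᶜ ∈ Filter.hyperfilter ℕ :=
    Filter.compl_mem_hyperfilter_of_finite A.finite_toSet
  simpa [U, Set.compl_def] using this

lemma exists_fiber_mem {r : ℕ} (g : ℕ → Fin r) : ∃ c, {y | g y = c} ∈ U := by
  by_contra h
  push_neg at h
  have h1 : ∀ c : Fin r, {y | g y = c}ᶜ ∈ U := fun c =>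
    (Ultrafilter.compl_mem_iff_notMem).2 (h c)
  have h2 : (⋂ c : Fin r, {y | g y = c}ᶜ) ∈ U := (Filter.iInter_mem).2 h1
  have h3 : (⋂ c : Fin r, {y | g y = c}ᶜ) = ∅ := by
    ext y; simp
  rw [h3] at h2
  exact absurd h2 Ultrafilter.empty_notMem

def pick {r : ℕ} (g : ℕ → Fin r) : Fin r := (exists_fiber_mem g).choose

lemma pick_spec {r : ℕ} (g : ℕ → Fin r) : {y | g y = pick g} ∈ U :=
  (exists_fiber_mem g).choose_spec

/-! ### The iterated ultrafilter colour `lam` -/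

section Lam
variable {r : ℕ}

def lamF (φ : Finset ℕ → Fin r) : ℕ → Finset ℕ → Fin r
  | 0, A => φ A
  | (n+1), A => pick (fun y => lamF φ n (insert y A))

variable (k : ℕ) (φ : Finset ℕ → Fin r)

def lam (A : Finset ℕ) : Fin r := lamF φ (k - A.card) A

lemma lam_eq_phi {A : Finset ℕ} (h : A.card = k) : lam k φ A = φ A := by
  simp [lam, h, lamF]

lemma lam_step {A : Finset ℕ} (h : A.card < k) :
    {y | y ∉ A ∧ lam k φ (insert y A) = lam k φ A} ∈ U := by
  have hk : k - A.card = (k - A.card - 1) + 1 := by omega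
  have h1 : {y | lamF φ (k - A.card - 1) (insert y A) = lam k φ A} ∈ U := by
    have : lam k φ A = pick (fun y => lamF φ (k - A.card - 1) (insert y A)) := by
      rw [lam, hk]; rfl
    rw [this]
    exact pick_spec _
  have h2 := compl_finset_mem_U A
  have h3 := Filter.inter_mem h2 h1
  apply Filter.mem_of_superset h3
  rintro y ⟨hy1, hy2⟩
  refine ⟨hy1, ?_⟩
  have hc : (insert y A).card = A.card + 1 := Finset.card_insert_of_notMem hy1
  rw [lam, hc]
  have : k - (A.card + 1) = k - A.card - 1 := by omega
  rw [this]
  exact hy2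

/-- Choose a fresh element extending finitely many `lam`-conditions. -/
lemma exists_fresh (χ : Fin r) (fam : Finset (Finset ℕ))
    (hfam : ∀ A ∈ fam, lam k φ A = χ ∧ A.card < k) (avoid : Finset ℕ) :
    ∃ y, y ∉ avoid ∧ ∀ A ∈ fam, y ∉ A ∧ lam k φ (insert y A) = χ := by
  have h1 : (⋂ A ∈ fam, {y | y ∉ A ∧ lam k φ (insert y A) = lam k φ A}) ∈ U :=
    (Filter.biInter_mem fam.finite_toSet).2 (fun A hA => lam_step k φ (hfam A hA).2)
  have h2 := Filter.inter_mem (compl_finset_mem_U avoid) h1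
  obtain ⟨y, hy1, hy2⟩ := Ultrafilter.nonempty_of_mem h2
  refine ⟨y, hy1, fun A hA => ?_⟩
  have := Set.mem_iInter₂.1 hy2 A hA
  exact ⟨this.1, this.2.trans (hfam A hA).1⟩

/-- Pad a set up to a `k`-set of colour `χ`, avoiding a finite set. -/
lemma exists_pad (χ : Fin r) :
    ∀ (p : ℕ) (A avoid : Finset ℕ), lam k φ A = χ → A.card + p = k →
    ∃ E, A ⊆ E ∧ E.card = k ∧ φ E = χ ∧ ∀ y ∈ E, y ∉ A → y ∉ avoid := by
  intro p
  induction p with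
  | zero =>
    intro A avoid hA hc
    exact ⟨A, le_refl _, by omega, by rw [← lam_eq_phi k φ (by omega), hA], fun y hy hny => absurd hy hny⟩
  | succ p ih =>
    intro A avoid hA hc
    obtain ⟨y, hy1, hy2⟩ := exists_fresh k φ χ {A} (by simp [hA]; omega) avoid
    obtain ⟨hyA, hlam⟩ := hy2 A (Finset.mem_singleton_self A)
    obtain ⟨E, hE1, hE2, hE3, hE4⟩ := ih (insert y A) avoid hlam
      (by rw [Finset.card_insert_of_notMem hyA]; omega)
    refine ⟨E, (Finset.subset_insert y A).trans hE1, hE2, hE3, fun z hz hzA => ?_⟩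
    by_cases hzy : z = y
    · subst hzy; exact hy1
    · exact hE4 z hz (by simp [hzA, hzy])

end Lam

/-! ### The hitting-set lemma (Lemma C) -/

lemma hitting {C : Type*} [DecidableEq C] :
    ∀ (m s : ℕ) (Cs : Finset C) (T : ℕ → Finset C),
      Cs.card ≤ s * m → (∀ x, (T x).Nonempty) → (∀ x, T x ⊆ Cs) →
      (∀ A : Finset ℕ, A.Nonempty → A.card ≤ m → ∃ c, ∀ x ∈ A, c ∈ T x) →
      ∃ S : Finset C, S.card ≤ s ∧ ∀ x, ∃ c ∈ S, c ∈ T x := by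
  intro m
  induction m with
  | zero =>
    intro s Cs T hCs hne hsub _
    exfalso
    obtain ⟨c, hc⟩ := hne 0
    have := hsub 0 hc
    have h0 : Cs.card = 0 := by omega
    rw [Finset.card_eq_zero] at h0
    rw [h0] at this
    exact absurd this (Finset.notMem_empty c)
  | succ m ih =>
    intro s Cs T hCs hne hsub hmw
    by_cases hle : Cs.card ≤ s
    · refine ⟨Cs, hle, fun x => ?_⟩
      obtain ⟨c, hc⟩ := hne x
      exact ⟨c, hsub x hc, hc⟩
    · -- pick x₀ with minimal |T x₀|
      have hex : ∃ n, ∃ x, (T x).card = n := ⟨(T 0).card, 0, rfl⟩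
      obtain ⟨x₀, hx₀⟩ := Nat.find_spec hex
      have hmin : ∀ x, (T x₀).card ≤ (T x).card := by
        intro x
        rw [hx₀]
        exact Nat.find_le ⟨x, rfl⟩
      by_cases hbig : Cs.card < (T x₀).card + s
      · obtain ⟨S, hS1, hS2⟩ := Finset.exists_subset_card_eq (by omega : s ≤ Cs.card)
        refine ⟨S, le_of_eq hS2, fun x => ?_⟩
        by_contra hc
        push_neg at hc
        have hTx : T x ⊆ Cs \ S := by
          intro c hcx
          exact Finset.mem_sdiff.2 ⟨hsub x hcx, fun hcS => hc c hcS hcx⟩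
        have h1 : (T x).card ≤ Cs.card - S.card := by
          calc (T x).card ≤ (Cs \ S).card := Finset.card_le_card hTx
          _ = Cs.card - S.card := Finset.card_sdiff_of_subset hS1
        have := hmin x
        omega
      · -- recurse inside T x₀
        have hb2 : (T x₀).card + s ≤ Cs.card := not_lt.1 hbig
        have hms : s * (m + 1) = s * m + s := by ring
        have hcard' : (T x₀).card ≤ s * m := by omega
        obtain ⟨S, hS1, hS2⟩ := ih s (T x₀) (fun x => T x ∩ T x₀) hcard'
          (fun x => by
            have hm1 : 1 ≤ m := by
              rcases Nat.eq_zero_or_pos m with h | h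
              · exfalso; subst h; simp [Nat.mul_succ] at hCs; omega
              · exact h
            obtain ⟨c, hc⟩ := hmw {x, x₀} ⟨x, by simp⟩
              (le_trans (Finset.card_insert_le _ _) (by simp; omega))
            exact ⟨c, Finset.mem_inter.2 ⟨hc x (by simp), hc x₀ (by simp)⟩⟩)
          (fun x => Finset.inter_subset_right)
          (fun A hA hAc => by
            obtain ⟨c, hc⟩ := hmw (insert x₀ A) ⟨x₀, Finset.mem_insert_self _ _⟩
              (le_trans (Finset.card_insert_le _ _) (by omega))
            exact ⟨c, fun x hx => Finset.mem_inter.2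
              ⟨hc x (Finset.mem_insert_of_mem hx), hc x₀ (Finset.mem_insert_self _ _)⟩⟩)
        refine ⟨S, hS1, fun x => ?_⟩
        obtain ⟨c, hcS, hcT⟩ := hS2 x
        exact ⟨c, hcS, (Finset.mem_inter.1 hcT).1⟩

/-! ### Parameter bundle and colour data -/

structure Stp where
  s : ℕ
  k : ℕ
  t : ℕ
  ht : 2 ≤ t
  htk : t ≤ k
  hs : 0 < s
  φ : Finset ℕ → Fin (s * (k - t + 1))

namespace Stp

variable (P : Stp)

def m : ℕ := P.k - P.t + 1

def r : ℕ := P.s * P.m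

lemma hm : 1 ≤ P.m := by simp [m]

lemma hk_eq : P.k = P.m + P.t - 1 := by
  have := P.htk; have := P.ht; simp [m]; omega

lemma hr : 0 < P.r := Nat.mul_pos P.hs P.hm

def lm : Finset ℕ → Fin P.r := lam P.k P.φ

def Tset (x : ℕ) : Finset (Fin P.r) :=
  Finset.univ.filter (fun c => ∃ D : Finset ℕ, x ∈ D ∧ D.card = P.m ∧ P.lm D = c)

lemma Tset_nonempty (x : ℕ) : (P.Tset x).Nonempty := by
  obtain ⟨D, hD1, hD2⟩ := Infinite.exists_superset_card_eq ({x} : Finset ℕ) P.m (by simp [P.hm])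
  exact ⟨P.lm D, by simp [Tset]; exact ⟨D, hD1 (by simp), hD2, rfl⟩⟩

lemma Tset_mwise (A : Finset ℕ) (hA : A.Nonempty) (hAc : A.card ≤ P.m) :
    ∃ c, ∀ x ∈ A, c ∈ P.Tset x := by
  obtain ⟨D, hD1, hD2⟩ := Infinite.exists_superset_card_eq A P.m hAc
  exact ⟨P.lm D, fun x hx => by simp [Tset]; exact ⟨D, hD1 hx, hD2, rfl⟩⟩

lemma exists_chi : ∃ χ : Fin P.s → Fin P.r, Function.Injective χ ∧
    ∀ x : ℕ, ∃ i, χ i ∈ P.Tset x := by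
  obtain ⟨S, hS1, hS2⟩ := hitting P.m P.s Finset.univ P.Tset
    (by rw [Finset.card_univ, Fintype.card_fin]; exact le_of_eq rfl)
    P.Tset_nonempty (fun x => Finset.subset_univ _) P.Tset_mwise
  classical
  set L : List (Fin P.r) := S.sort (· ≤ ·) ++ ((Finset.univ \ S).sort (· ≤ ·)) with hL
  have hnd : L.Nodup := by
    refine List.Nodup.append (Finset.sort_nodup _ _) (Finset.sort_nodup _ _) ?_
    intro c hc1 hc2
    rw [Finset.mem_sort] at hc1
    rw [Finset.mem_sort, Finset.mem_sdiff] at hc2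
    exact hc2.2 hc1
  have hlen : L.length = P.r := by
    rw [List.length_append, Finset.length_sort, Finset.length_sort,
      Finset.card_sdiff_of_subset (Finset.subset_univ S), Finset.card_univ, Fintype.card_fin]
    have := Finset.card_le_univ S
    simp [Fintype.card_fin] at this
    omega
  have hsr : P.s ≤ P.r := by
    have := P.hm
    calc P.s = P.s * 1 := by ring
    _ ≤ P.s * P.m := Nat.mul_le_mul_left _ this
  refine ⟨fun i => L.get ⟨i, by omega⟩, ?_, ?_⟩
  · intro a b hab
    have := (List.Nodup.get_inj_iff hnd).1 hab
    exact Fin.ext (by simpa using congrArg Fin.val this)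
  · intro x
    obtain ⟨c, hcS, hcT⟩ := hS2 x
    have hcs : c ∈ S.sort (· ≤ ·) := (Finset.mem_sort _).2 hcS
    obtain ⟨n, hn, hget⟩ := List.getElem_of_mem hcs
    have hns : n < P.s := by
      have : (S.sort (· ≤ ·)).length = S.card := Finset.length_sort _
      omega
    refine ⟨⟨n, hns⟩, ?_⟩
    show L.get ⟨n, by omega⟩ ∈ P.Tset x
    have h2 : L.get ⟨n, by omega⟩ = c := by
      simp only [List.get_eq_getElem, hL]
      rw [List.getElem_append_left hn]
      exact hget
    rw [h2]
    exact hcT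
  
def chi : Fin P.s → Fin P.r := P.exists_chi.choose

lemma chi_inj : Function.Injective P.chi := P.exists_chi.choose_spec.1

def jfun (x : ℕ) : Fin P.s := (P.exists_chi.choose_spec.2 x).choose

lemma wit_ex (x : ℕ) :
    ∃ D : Finset ℕ, x ∈ D ∧ D.card = P.m ∧ P.lm D = P.chi (P.jfun x) := by
  have h : P.chi (P.jfun x) ∈ P.Tset x := (P.exists_chi.choose_spec.2 x).choose_spec
  exact (Finset.mem_filter.1 h).2

def wit (x : ℕ) : Finset ℕ := (P.wit_ex x).choose

lemma wit_mem (x : ℕ) : x ∈ P.wit x := (P.wit_ex x).choose_spec.1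

lemma wit_card (x : ℕ) : (P.wit x).card = P.m := (P.wit_ex x).choose_spec.2.1

lemma wit_lam (x : ℕ) : P.lm (P.wit x) = P.chi (P.jfun x) := (P.wit_ex x).choose_spec.2.2

/-! ### States of the construction -/

structure PSt where
  len : ℕ
  cr : ℕ → ℕ
  ed : ℕ → Finset ℕ
  base : Finset ℕ

def St := Fin P.s → PSt

def coveredF (σ : P.St) : Finset ℕ :=
  Finset.univ.biUnion (fun j => (Finset.range (σ j).len).image (σ j).cr)

lemma mem_coveredF {σ : P.St} {x : ℕ} :
    x ∈ P.coveredF σ ↔ ∃ j a, a < (σ j).len ∧ (σ j).cr a = x := by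
  simp [coveredF, eq_comm]

def edgeE (σ : P.St) : Finset ℕ :=
  Finset.univ.biUnion (fun j =>
    (Finset.range ((σ j).len - (P.t - 1))).biUnion (fun i => (σ j).ed i))

lemma mem_edgeE {σ : P.St} {x : ℕ} :
    x ∈ P.edgeE σ ↔ ∃ j i, i + P.t ≤ (σ j).len ∧ x ∈ (σ j).ed i := by
  have ht := P.ht
  simp only [edgeE, Finset.mem_biUnion, Finset.mem_univ, true_and, Finset.mem_range]
  constructor
  · rintro ⟨j, i, hi, hx⟩; exact ⟨j, i, by omega, hx⟩
  · rintro ⟨j, i, hi, hx⟩; exact ⟨j, i, by omega, hx⟩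

def suffF (σ : P.St) (j : Fin P.s) (d : ℕ) : Finset ℕ :=
  (Finset.Ico ((σ j).len - d) (σ j).len).image (σ j).cr

structure Inv (σ : P.St) : Prop where
  lenOK : ∀ j, (σ j).len = 0 ∨ P.t ≤ (σ j).len
  crInj : ∀ j a b, a < (σ j).len → b < (σ j).len → (σ j).cr a = (σ j).cr b → a = b
  disj : ∀ j j', j ≠ j' → ∀ a b, a < (σ j).len → b < (σ j').len →
    (σ j).cr a ≠ (σ j').cr b
  edCard : ∀ j i, i + P.t ≤ (σ j).len → ((σ j).ed i).card = P.k
  edCol : ∀ j i, i + P.t ≤ (σ j).len → P.φ ((σ j).ed i) = P.chi j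
  edWin : ∀ j i, i + P.t ≤ (σ j).len → ∀ a, i ≤ a → a < i + P.t → (σ j).cr a ∈ (σ j).ed i
  edInj : ∀ j i i', i + P.t ≤ (σ j).len → i' + P.t ≤ (σ j).len →
    (σ j).ed i = (σ j).ed i' → i = i'
  baseCard : ∀ j, (σ j).len ≠ 0 → (σ j).base.card = P.m
  baseLam : ∀ j, (σ j).len ≠ 0 → P.lm (σ j).base = P.chi j
  baseCov : ∀ j, (σ j).len ≠ 0 → ∀ x ∈ (σ j).base, x ∈ P.coveredF σ
  lastSpec : ∀ j, (σ j).len ≠ 0 → (σ j).cr ((σ j).len - 1) ∈ (σ j).base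
  suffLam : ∀ j, (σ j).len ≠ 0 → ∀ d, d ≤ P.t - 1 →
    P.lm ((σ j).base ∪ P.suffF σ j d) = P.chi j

structure Ext (σ σ' : P.St) : Prop where
  len_le : ∀ j, (σ j).len ≤ (σ' j).len
  cr_eq : ∀ j a, a < (σ j).len → (σ' j).cr a = (σ j).cr a
  ed_eq : ∀ j i, i + P.t ≤ (σ j).len → (σ' j).ed i = (σ j).ed i

lemma Ext.rfl' (σ : P.St) : P.Ext σ σ := ⟨fun _ => le_refl _, fun _ _ _ => rfl, fun _ _ _ => rfl⟩

lemma Ext.trans' {σ₁ σ₂ σ₃ : P.St} (h12 : P.Ext σ₁ σ₂) (h23 : P.Ext σ₂ σ₃) : P.Ext σ₁ σ₃ := by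
  refine ⟨fun j => le_trans (h12.len_le j) (h23.len_le j), fun j a ha => ?_, fun j i hi => ?_⟩
  · rw [h23.cr_eq j a (lt_of_lt_of_le ha (h12.len_le j)), h12.cr_eq j a ha]
  · rw [h23.ed_eq j i (le_trans hi (h12.len_le j)), h12.ed_eq j i hi]

lemma covered_mono {σ σ' : P.St} (h : P.Ext σ σ') {x : ℕ}
    (hx : x ∈ P.coveredF σ) : x ∈ P.coveredF σ' := by
  rw [P.mem_coveredF] at hx ⊢
  obtain ⟨j, a, ha, hax⟩ := hx
  exact ⟨j, a, lt_of_lt_of_le ha (h.len_le j), by rw [h.cr_eq j a ha]; exact hax⟩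

def gsegF (g : ℕ → ℕ) (c i : ℕ) : Finset ℕ := (Finset.Ico c i).image g

lemma gsegF_zero (g : ℕ → ℕ) (c : ℕ) : gsegF g c 0 = ∅ := by
  simp [gsegF]

lemma gsegF_stable {g g' : ℕ → ℕ} {c i : ℕ} (h : ∀ a < i, g' a = g a) :
    gsegF g' c i = gsegF g c i := by
  apply Finset.image_congr
  intro a ha
  rw [Finset.coe_Ico, Set.mem_Ico] at ha
  exact h a ha.2

lemma gsegF_succ {g : ℕ → ℕ} {c i : ℕ} (h : c ≤ i) :
    gsegF g c (i + 1) = insert (g i) (gsegF g c i) := by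
  rw [gsegF, gsegF, Nat.Ico_succ_right_eq_insert_Ico h, Finset.image_insert]

lemma gsegF_card (g : ℕ → ℕ) (c i : ℕ) : (gsegF g c i).card ≤ i - c := by
  calc (gsegF g c i).card ≤ (Finset.Ico c i).card := Finset.card_image_le
  _ = i - c := Nat.card_Ico c i

lemma mem_gsegF {g : ℕ → ℕ} {c i x : ℕ} :
    x ∈ gsegF g c i ↔ ∃ a, c ≤ a ∧ a < i ∧ g a = x := by
  simp [gsegF, eq_comm, and_assoc]

lemma suff_card_bound (σ : P.St) (hI : P.Inv σ) (j : Fin P.s) {d : ℕ}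
    (hL : (σ j).len ≠ 0) (hd : 1 ≤ d) :
    ((σ j).base ∪ P.suffF σ j d).card + 1 ≤ P.m + d := by
  have h1 : (P.suffF σ j d).card ≤ d := by
    calc (P.suffF σ j d).card ≤ (Finset.Ico ((σ j).len - d) (σ j).len).card :=
      Finset.card_image_le
    _ = (σ j).len - ((σ j).len - d) := Nat.card_Ico _ _
    _ ≤ d := by omega
  have hmem : (σ j).cr ((σ j).len - 1) ∈ P.suffF σ j d ∩ (σ j).base := by
    rw [Finset.mem_inter]
    refine ⟨Finset.mem_image.2 ⟨(σ j).len - 1, Finset.mem_Ico.2 ⟨by omega, by omega⟩, rfl⟩,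
      hI.lastSpec j hL⟩
  have h2 : (P.suffF σ j d \ (σ j).base).card < (P.suffF σ j d).card := by
    apply Finset.card_lt_card
    constructor
    · exact Finset.sdiff_subset
    · intro hsub
      have := hsub (Finset.mem_inter.1 hmem).1
      rw [Finset.mem_sdiff] at this
      exact this.2 (Finset.mem_inter.1 hmem).2
  have h3 : ((σ j).base ∪ P.suffF σ j d).card =
      (σ j).base.card + (P.suffF σ j d \ (σ j).base).card := by
    rw [Finset.union_comm, ← Finset.card_sdiff_add_card (P.suffF σ j d) ((σ j).base),
      Nat.add_comm]
  have h4 := hI.baseCard j hL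
  omega

/-- Choice of the `t-1` connecting filler vertices for one batch. -/
lemma gblock (σ : P.St) (hI : P.Inv σ) (j : Fin P.s) (D : Finset ℕ)
    (hDc : D.card = P.m) (hDl : P.lm D = P.chi j) (A0 : Finset ℕ) :
    ∃ g : ℕ → ℕ,
      (∀ a b, a < P.t - 1 → b < P.t - 1 → g a = g b → a = b) ∧
      (∀ a, a < P.t - 1 → g a ∉ A0) ∧
      (∀ d i, 1 ≤ d → d ≤ P.t - 1 → d + i ≤ P.t → i ≤ P.t - 1 → (σ j).len ≠ 0 →
        P.lm ((σ j).base ∪ P.suffF σ j d ∪ gsegF g 0 i) = P.chi j) ∧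
      (∀ c i, c ≤ i → i ≤ P.t - 1 → P.lm (D ∪ gsegF g c i) = P.chi j) := by
  have hkm : P.k = P.m + P.t - 1 := P.hk_eq
  have ht2 := P.ht
  suffices h : ∀ n, n ≤ P.t - 1 → ∃ g : ℕ → ℕ,
      (∀ a b, a < n → b < n → g a = g b → a = b) ∧
      (∀ a, a < n → g a ∉ A0) ∧
      (∀ d i, 1 ≤ d → d ≤ P.t - 1 → d + i ≤ P.t → i ≤ n → (σ j).len ≠ 0 →
        P.lm ((σ j).base ∪ P.suffF σ j d ∪ gsegF g 0 i) = P.chi j) ∧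
      (∀ c i, c ≤ i → i ≤ n → P.lm (D ∪ gsegF g c i) = P.chi j) by
    exact h (P.t - 1) (le_refl _)
  intro n
  induction n with
  | zero =>
    intro _
    refine ⟨fun _ => 0, by omega, by omega, ?_, ?_⟩
    · intro d i h1 h2 h3 h4 h5
      interval_cases i
      rw [gsegF_zero, Finset.union_empty]
      exact hI.suffLam j h5 d h2
    · intro c i hc hi
      interval_cases i
      interval_cases c
      rw [gsegF_zero, Finset.union_empty]
      exact hDl
  | succ n ih =>
    intro hn1
    obtain ⟨g, hg1, hg2, hg3, hg4⟩ := ih (by omega)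
    -- family of sets to extend
    set famα : Finset (Finset ℕ) :=
      ((Finset.range P.t).filter (fun d => 1 ≤ d ∧ d ≤ P.t - 1 ∧ d + (n+1) ≤ P.t ∧
        (σ j).len ≠ 0)).image
        (fun d => (σ j).base ∪ P.suffF σ j d ∪ gsegF g 0 n) with hfamα
    set famβ : Finset (Finset ℕ) :=
      (Finset.range (n+2)).image (fun c => D ∪ gsegF g c n) with hfamβ
    have hfam : ∀ A ∈ famα ∪ famβ, P.lm A = P.chi j ∧ A.card < P.k := by
      intro A hA
      rw [Finset.mem_union] at hA
      rcases hA with hA | hA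
      · rw [hfamα, Finset.mem_image] at hA
        obtain ⟨d, hd, rfl⟩ := hA
        rw [Finset.mem_filter] at hd
        obtain ⟨-, hd1, hd2, hd3, hd4⟩ := hd
        constructor
        · exact hg3 d n hd1 hd2 (by omega) (by omega) hd4
        · have hb1 := P.suff_card_bound σ hI j hd4 hd1
          have hb2 := gsegF_card g 0 n
          calc ((σ j).base ∪ P.suffF σ j d ∪ gsegF g 0 n).card
              ≤ ((σ j).base ∪ P.suffF σ j d).card + (gsegF g 0 n).card :=
                Finset.card_union_le _ _
          _ < P.k := by omega
      · rw [hfamβ, Finset.mem_image] at hA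
        obtain ⟨c, hc, rfl⟩ := hA
        rw [Finset.mem_range] at hc
        constructor
        · by_cases hcn : c ≤ n
          · exact hg4 c n hcn (by omega)
          · have : gsegF g c n = ∅ := by
              rw [gsegF, Finset.Ico_eq_empty (by omega), Finset.image_empty]
            rw [this, Finset.union_empty]
            exact hDl
        · have hb2 := gsegF_card g c n
          calc (D ∪ gsegF g c n).card ≤ D.card + (gsegF g c n).card :=
            Finset.card_union_le _ _
          _ < P.k := by omega
    obtain ⟨y, hy1, hy2⟩ := exists_fresh P.k P.φ (P.chi j) (famα ∪ famβ) hfam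
      (A0 ∪ (Finset.range n).image g)
    refine ⟨Function.update g n y, ?_, ?_, ?_, ?_⟩
    · intro a b ha hb hab
      rcases Nat.lt_or_ge a n with ha' | ha' <;> rcases Nat.lt_or_ge b n with hb' | hb'
      · rw [Function.update_of_ne (by omega), Function.update_of_ne (by omega)] at hab
        exact hg1 a b ha' hb' hab
      · have hb2 : b = n := by omega
        subst hb2
        rw [Function.update_of_ne (by omega), Function.update_self] at hab
        exfalso
        apply hy1
        rw [Finset.mem_union]
        right
        exact Finset.mem_image.2 ⟨a, Finset.mem_range.2 ha', hab⟩
      · have ha2 : a = n := by omega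
        subst ha2
        rw [Function.update_self, Function.update_of_ne (by omega)] at hab
        exfalso
        apply hy1
        rw [Finset.mem_union]
        right
        exact Finset.mem_image.2 ⟨b, Finset.mem_range.2 hb', hab.symm⟩
      · omega
    · intro a ha
      rcases Nat.lt_or_ge a n with ha' | ha'
      · rw [Function.update_of_ne (by omega)]
        exact hg2 a ha'
      · have ha2 : a = n := by omega
        subst ha2
        rw [Function.update_self]
        intro hmem
        exact hy1 (Finset.mem_union_left _ hmem)
    · intro d i h1 h2 h3 h4 h5
      have hstable : ∀ a < n, Function.update g n y a = g a := by
        intro a ha; exact Function.update_of_ne (by omega) _ _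
      by_cases hin : i ≤ n
      · rw [gsegF_stable (fun a ha => hstable a (by omega))]
        exact hg3 d i h1 h2 h3 hin h5
      · have hi2 : i = n + 1 := by omega
        subst hi2
        rw [gsegF_succ (by omega)]
        have : gsegF (Function.update g n y) 0 n = gsegF g 0 n :=
          gsegF_stable (fun a ha => hstable a ha)
        rw [this, Function.update_self]
        have hins : (σ j).base ∪ P.suffF σ j d ∪ insert y (gsegF g 0 n) =
            insert y ((σ j).base ∪ P.suffF σ j d ∪ gsegF g 0 n) := by
          rw [Finset.union_insert]
        rw [hins]
        refine (hy2 _ ?_).2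
        rw [Finset.mem_union]
        left
        rw [hfamα, Finset.mem_image]
        exact ⟨d, Finset.mem_filter.2 ⟨Finset.mem_range.2 (by omega), h1, h2, by omega, h5⟩, rfl⟩
    · intro c i hc hi
      have hstable : ∀ a < n, Function.update g n y a = g a := by
        intro a ha; exact Function.update_of_ne (by omega) _ _
      by_cases hin : i ≤ n
      · rw [gsegF_stable (fun a ha => hstable a (by omega))]
        exact hg4 c i hc hin
      · have hi2 : i = n + 1 := by omega
        subst hi2
        by_cases hcn : c ≤ n
        · rw [gsegF_succ (by omega)]
          have : gsegF (Function.update g n y) c n = gsegF g c n :=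
            gsegF_stable (fun a ha => hstable a ha)
          rw [this, Function.update_self]
          have hins : D ∪ insert y (gsegF g c n) = insert y (D ∪ gsegF g c n) := by
            rw [Finset.union_insert]
          rw [hins]
          refine (hy2 _ ?_).2
          rw [Finset.mem_union]
          right
          rw [hfamβ, Finset.mem_image]
          exact ⟨c, Finset.mem_range.2 (by omega), rfl⟩
        · have hc2 : c = n + 1 := by omega
          subst hc2
          have hemp : gsegF (Function.update g n y) (n+1) (n+1) = ∅ := by
            rw [gsegF, Finset.Ico_self, Finset.image_empty]
          rw [hemp, Finset.union_empty]
          exact hDl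

lemma image_Ico_shift (g : ℕ → ℕ) (L u : ℕ) :
    (Finset.Ico L (L + u)).image (fun a => g (a - L)) = (Finset.Ico 0 u).image g := by
  have h1 : Finset.Ico L (L + u) = (Finset.Ico 0 u).image (· + L) := by
    rw [Finset.image_add_right_Ico]
    simp [Nat.add_comm]
  rw [h1, Finset.image_image]
  apply Finset.image_congr
  intro a _
  simp

/-- One batch of the construction: absorb the uncovered vertex `w`
(together with the uncovered part of its witness set) into path `jfun w`. -/
lemma batch (σ : P.St) (hI : P.Inv σ) (w : ℕ) (hw : w ∉ P.coveredF σ) :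
    ∃ σ' : P.St, P.Ext σ σ' ∧ P.Inv σ' ∧ w ∈ P.coveredF σ' := by
  classical
  have ht2 := P.ht
  have htk := P.htk
  have hm1 := P.hm
  have hkm : P.k = P.m + (P.t - 1) := by have := P.hk_eq; omega
  set t1 := P.t - 1 with ht1
  have ht11 : 1 ≤ t1 := by omega
  set j := P.jfun w with hj
  set D := P.wit w with hD
  have hwD : w ∈ D := P.wit_mem w
  have hDc : D.card = P.m := P.wit_card w
  have hDl : P.lm D = P.chi j := P.wit_lam w
  set L := (σ j).len with hLdef
  have hLor : L = 0 ∨ P.t ≤ L := hI.lenOK j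
  -- the run
  set Rl : List ℕ := (D \ P.coveredF σ).sort (· ≤ ·) with hRl
  set b := Rl.length with hb
  have hRmem : ∀ x, x ∈ Rl ↔ x ∈ D ∧ x ∉ P.coveredF σ := by
    intro x; rw [hRl, Finset.mem_sort, Finset.mem_sdiff]
  have hwR : w ∈ Rl := (hRmem w).2 ⟨hwD, hw⟩
  have hbpos : 0 < b := by rw [hb]; exact List.length_pos_iff.2 (List.ne_nil_of_mem hwR)
  have hRnd : Rl.Nodup := (D \ P.coveredF σ).sort_nodup _
  have hRget : ∀ n, n < b → Rl.getD n 0 ∈ D ∧ Rl.getD n 0 ∉ P.coveredF σ := by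
    intro n hn
    rw [List.getD_eq_getElem Rl 0 hn]
    exact (hRmem _).1 (Rl.getElem_mem hn)
  have hRinj : ∀ n n', n < b → n' < b → Rl.getD n 0 = Rl.getD n' 0 → n = n' := by
    intro n n' hn hn' h
    rw [List.getD_eq_getElem Rl 0 hn, List.getD_eq_getElem Rl 0 hn'] at h
    exact (List.Nodup.getElem_inj_iff hRnd).1 h
  -- fillers
  set A0 : Finset ℕ := P.coveredF σ ∪ P.edgeE σ ∪ D ∪ (σ j).base with hA0
  obtain ⟨g, hg1, hg2, hg3, hg4⟩ := P.gblock σ hI j D hDc hDl A0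
  have hgcov : ∀ c, c < t1 → g c ∉ P.coveredF σ := by
    intro c hc h; exact hg2 c hc (by rw [hA0]; simp [h])
  have hgedge : ∀ c, c < t1 → g c ∉ P.edgeE σ := by
    intro c hc h; exact hg2 c hc (by rw [hA0]; simp [h])
  have hgD : ∀ c, c < t1 → g c ∉ D := by
    intro c hc h; exact hg2 c hc (by rw [hA0]; simp [h])
  have hgbase : ∀ c, c < t1 → g c ∉ (σ j).base := by
    intro c hc h; exact hg2 c hc (by rw [hA0]; simp [h])
  set len' := L + t1 + b with hlen'
  set cr' : ℕ → ℕ := fun a =>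
    if a < L then (σ j).cr a else if a < L + t1 then g (a - L) else Rl.getD (a - L - t1) 0
    with hcr'
  have hcrold : ∀ a, a < L → cr' a = (σ j).cr a := by
    intro a ha; rw [hcr']; simp [ha]
  have hcrg : ∀ a, L ≤ a → a < L + t1 → cr' a = g (a - L) := by
    intro a ha1 ha2; rw [hcr']; simp [Nat.not_lt.2 ha1, ha2]
  have hcrrun : ∀ a, L + t1 ≤ a → cr' a = Rl.getD (a - L - t1) 0 := by
    intro a ha; rw [hcr']
    simp only [Nat.not_lt.2 (le_trans (Nat.le_add_right L t1) ha),
      Nat.not_lt.2 ha, if_false]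
  -- covered classes
  have hcovval : ∀ a, a < L → cr' a ∈ P.coveredF σ := by
    intro a ha
    rw [hcrold a ha, P.mem_coveredF]
    exact ⟨j, a, ha, rfl⟩
  -- injectivity of the new core
  have hzone2 : ∀ a, L ≤ a → a < L + t1 → cr' a ∉ P.coveredF σ ∧ cr' a ∉ D := by
    intro a ha1 ha2
    rw [hcrg a ha1 ha2]
    exact ⟨hgcov _ (by omega), hgD _ (by omega)⟩
  have hzone3 : ∀ a, L + t1 ≤ a → a < len' → cr' a ∈ D ∧ cr' a ∉ P.coveredF σ := by
    intro a ha1 ha2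
    rw [hcrrun a ha1]
    exact hRget _ (by omega)
  have hcrinj : ∀ a a', a < len' → a' < len' → cr' a = cr' a' → a = a' := by
    have key : ∀ a a', a < len' → a' < len' → a < a' → cr' a = cr' a' → a = a' := by
      intro a a' ha ha' hlt h
      rcases Nat.lt_or_ge a L with h1 | h1
      · have hvc : cr' a ∈ P.coveredF σ := hcovval a h1
        rcases Nat.lt_or_ge a' L with h2 | h2
        · exact hI.crInj j a a' h1 h2 (by rw [← hcrold a h1, ← hcrold a' h2, h])
        · rcases Nat.lt_or_ge a' (L + t1) with h3 | h3
          · exact absurd (h ▸ hvc) (hzone2 a' h2 h3).1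
          · exact absurd (h ▸ hvc) (hzone3 a' h3 ha').2
      · rcases Nat.lt_or_ge a (L + t1) with h12 | h12
        · rcases Nat.lt_or_ge a' (L + t1) with h3 | h3
          · have := hg1 (a - L) (a' - L) (by omega) (by omega)
              (by rw [← hcrg a h1 h12, ← hcrg a' (by omega) h3, h])
            omega
          · exact absurd ((hzone3 a' h3 ha').1) (h ▸ (hzone2 a h1 h12).2)
        · have h3 : L + t1 ≤ a' := by omega
          have := hRinj (a - L - t1) (a' - L - t1) (by omega) (by omega)
            (by rw [← hcrrun a h12, ← hcrrun a' h3, h])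
          omega
    intro a a' ha ha' h
    rcases Nat.lt_trichotomy a a' with hlt | heq | hgt
    · exact key a a' ha ha' hlt h
    · exact heq
    · exact (key a' a ha' ha hgt h.symm).symm
  -- windows
  set Wim : ℕ → Finset ℕ := fun i => (Finset.Ico i (i + P.t)).image cr' with hWim
  set A0i : ℕ → Finset ℕ := fun i => (if i < L then (σ j).base else D) ∪ Wim i with hA0i
  set n₀ := L - t1 with hn₀
  have hWα : ∀ i, n₀ ≤ i → i < L → Wim i = P.suffF σ j (L - i) ∪ gsegF g 0 (i + P.t - L) := by
    intro i hi1 hi2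
    have hLt : P.t ≤ L := by rcases hLor with h | h; omega; exact h
    have hsplit : Finset.Ico i (i + P.t) = Finset.Ico i L ∪ Finset.Ico L (i + P.t) :=
      (Finset.Ico_union_Ico_eq_Ico (by omega) (by omega)).symm
    rw [hWim]
    simp only
    rw [hsplit, Finset.image_union]
    congr 1
    · have h1 : (Finset.Ico i L).image cr' = (Finset.Ico i L).image (σ j).cr := by
        apply Finset.image_congr
        intro a ha
        rw [Finset.coe_Ico, Set.mem_Ico] at ha
        exact hcrold a ha.2
      rw [h1, suffF]
      congr 1
      · congr 1
        omega
    · have h2 : (Finset.Ico L (i + P.t)).image cr' =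
          (Finset.Ico L (i + P.t)).image (fun a => g (a - L)) := by
        apply Finset.image_congr
        intro a ha
        rw [Finset.coe_Ico, Set.mem_Ico] at ha
        exact hcrg a ha.1 (by omega)
      rw [h2]
      have h4 := image_Ico_shift g L (i + P.t - L)
      have h3 : L + (i + P.t - L) = i + P.t := by omega
      rw [h3] at h4
      rw [h4]
      rfl
  have hWβ : ∀ i, L ≤ i → i + P.t ≤ len' → A0i i = D ∪ gsegF g (i - L) t1 := by
    intro i hi1 hi2
    rw [hA0i]
    simp only [Nat.not_lt.2 hi1, if_false]
    apply Finset.Subset.antisymm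
    · apply Finset.union_subset (Finset.subset_union_left)
      intro x hx
      rw [hWim] at hx
      simp only [Finset.mem_image, Finset.mem_Ico] at hx
      obtain ⟨a, ⟨ha1, ha2⟩, rfl⟩ := hx
      rcases Nat.lt_or_ge a (L + t1) with h3 | h3
      · rw [Finset.mem_union]
        right
        rw [hcrg a (by omega) h3]
        exact mem_gsegF.2 ⟨a - L, by omega, by omega, rfl⟩
      · rw [Finset.mem_union]
        left
        exact (hzone3 a h3 (by omega)).1
    · apply Finset.union_subset (Finset.subset_union_left)
      intro x hx
      rw [mem_gsegF] at hx
      obtain ⟨c, hc1, hc2, rfl⟩ := hx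
      apply Finset.mem_union_right
      rw [hWim]
      simp only [Finset.mem_image, Finset.mem_Ico]
      exact ⟨L + c, ⟨by omega, by omega⟩, by rw [hcrg (L + c) (by omega) (by omega)]; simp⟩
  have hA0lam : ∀ i, n₀ ≤ i → i + P.t ≤ len' → P.lm (A0i i) = P.chi j := by
    intro i hi1 hi2
    by_cases hiL : i < L
    · have hLt : P.t ≤ L := by rcases hLor with h | h; omega; exact h
      rw [hA0i]
      simp only [hiL, if_true]
      rw [hWα i hi1 hiL, ← Finset.union_assoc]
      exact hg3 (L - i) (i + P.t - L) (by omega) (by omega) (by omega) (by omega) (by omega)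
    · rw [hWβ i (by omega) hi2]
      by_cases hc : i - L ≤ t1
      · exact hg4 (i - L) t1 hc (le_refl _)
      · rw [gsegF, Finset.Ico_eq_empty (by omega), Finset.image_empty, Finset.union_empty]
        exact hDl
  have hA0card : ∀ i, n₀ ≤ i → i + P.t ≤ len' → (A0i i).card ≤ P.k := by
    intro i hi1 hi2
    by_cases hiL : i < L
    · have hLt : P.t ≤ L := by rcases hLor with h | h; omega; exact h
      rw [hA0i]
      simp only [hiL, if_true]
      rw [hWα i hi1 hiL, ← Finset.union_assoc]
      have h1 := P.suff_card_bound σ hI j (show (σ j).len ≠ 0 by omega) (show 1 ≤ L - i by omega)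
      have h2 := gsegF_card g 0 (i + P.t - L)
      calc ((σ j).base ∪ P.suffF σ j (L - i) ∪ gsegF g 0 (i + P.t - L)).card
          ≤ ((σ j).base ∪ P.suffF σ j (L - i)).card + (gsegF g 0 (i + P.t - L)).card :=
            Finset.card_union_le _ _
      _ ≤ P.k := by omega
    · rw [hWβ i (by omega) hi2]
      have h2 := gsegF_card g (i - L) t1
      calc (D ∪ gsegF g (i - L) t1).card ≤ D.card + (gsegF g (i - L) t1).card :=
        Finset.card_union_le _ _
      _ ≤ P.k := by omega
  have hA0deep : ∀ i, L < i → i + P.t ≤ len' → (A0i i).card < P.k := by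
    intro i hiL hi2
    rw [hWβ i (by omega) hi2]
    have h2 := gsegF_card g (i - L) t1
    calc (D ∪ gsegF g (i - L) t1).card ≤ D.card + (gsegF g (i - L) t1).card :=
      Finset.card_union_le _ _
    _ < P.k := by omega
  -- the set of filler values
  set gPos : Finset ℕ := (Finset.range t1).image g with hgPos
  have hmem_gPos : ∀ x, x ∈ gPos ↔ ∃ c, c < t1 ∧ g c = x := by
    intro x; rw [hgPos]; simp [eq_comm]
  set cnt := L + b - n₀ with hcnt
  have hn₀L : n₀ ≤ L := by omega
  have hwin_iff : ∀ q, q < cnt ↔ (n₀ + q) + P.t ≤ len' := by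
    intro q; omega
  have hwD₀ : L ≠ 0 → w ∉ (σ j).base := by
    intro hL0 hmem
    exact hw (hI.baseCov j (by omega) w hmem)
  -- sequential choice of the new edges
  have edges_ex : ∀ n, n ≤ cnt → ∃ e : ℕ → Finset ℕ,
      (∀ q, q < n → (e (n₀+q)).card = P.k ∧ P.φ (e (n₀+q)) = P.chi j ∧
        A0i (n₀+q) ⊆ e (n₀+q)) ∧
      (∀ q, q < n → ∀ y ∈ e (n₀+q), y ∉ A0i (n₀+q) →
        y ∉ A0 ∧ y ∉ gPos ∧ ∀ q', q' < q → y ∉ e (n₀+q')) ∧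
      (∀ q q', q < n → q' < q → e (n₀+q) ≠ e (n₀+q')) ∧
      (∀ q, q < n → ∀ i', i' + P.t ≤ L → e (n₀+q) ≠ (σ j).ed i') := by
    intro n
    induction n with
    | zero =>
      intro _
      exact ⟨fun _ => ∅, by omega, by omega, by omega, by omega⟩
    | succ n ih =>
      intro hn1
      obtain ⟨e, he1, he2, he3, he4⟩ := ih (by omega)
      set i := n₀ + n with hi
      have hiwin : i + P.t ≤ len' := (hwin_iff n).1 (by omega)
      set avd : Finset ℕ := A0 ∪ gPos ∪ (Finset.range n).biUnion (fun q => e (n₀+q)) with havd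
      obtain ⟨E, hE1, hE2, hE3, hE4⟩ := exists_pad P.k P.φ (P.chi j) (P.k - (A0i i).card)
        (A0i i) avd (hA0lam i (by omega) hiwin) (by have := hA0card i (by omega) hiwin; omega)
      have hE4' : ∀ y ∈ E, y ∉ A0i i →
          y ∉ A0 ∧ y ∉ gPos ∧ ∀ q', q' < n → y ∉ e (n₀+q') := by
        intro y hy hyA
        have := hE4 y hy hyA
        rw [havd] at this
        simp only [Finset.mem_union, Finset.mem_biUnion, Finset.mem_range, not_or,
          not_exists, not_and] at this
        exact ⟨this.1.1, this.1.2, fun q' hq' => this.2 q' hq'⟩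
      -- the element of E that identifies it
      have hwinE : ∀ a, i ≤ a → a < i + P.t → cr' a ∈ E := by
        intro a ha1 ha2
        apply hE1
        simp only [hA0i, hWim]
        apply Finset.mem_union_right
        exact Finset.mem_image.2 ⟨a, Finset.mem_Ico.2 ⟨ha1, ha2⟩, rfl⟩
      have hnew : ∀ q', q' < n → E ≠ e (n₀+q') := by
        intro q' hq'
        by_cases hiL : i < L
        · -- α window: identified by its last (filler) vertex
          set z := cr' (i + P.t - 1) with hz
          have hzg : z = g (i + P.t - 1 - L) := by
            rw [hz]
            apply hcrg <;> omega
          have hzE : z ∈ E := hwinE _ (by omega) (by omega)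
          intro hEQ
          have hzin : z ∈ e (n₀+q') := hEQ ▸ hzE
          by_cases hzA : z ∈ A0i (n₀+q')
          · simp only [hA0i] at hzA
            rcases Finset.mem_union.1 hzA with hzb | hzw
            · by_cases hql : n₀ + q' < L
              · rw [if_pos hql] at hzb
                exact hgbase _ (by omega) (hzg ▸ hzb)
              · rw [if_neg hql] at hzb
                exact hgD _ (by omega) (hzg ▸ hzb)
            · simp only [hWim] at hzw
              obtain ⟨a', ha', hza'⟩ := Finset.mem_image.1 hzw
              rw [Finset.mem_Ico] at ha'
              have : a' = i + P.t - 1 := by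
                apply hcrinj a' (i + P.t - 1) (by omega) (by omega)
                rw [hza', hz]
              omega
          · exact ((he2 q' hq' z hzin hzA).2.1) (hmem_gPos z |>.2 ⟨i + P.t - 1 - L, by omega, hzg.symm⟩)
        · by_cases hdeep : L < i
          · -- deep run window: has a fresh pad
            have hlt : (A0i i).card < E.card := by
              rw [hE2]; exact hA0deep i hdeep hiwin
            have hne : (E \ A0i i).Nonempty := by
              rw [← Finset.card_pos, Finset.card_sdiff_of_subset hE1]
              omega
            obtain ⟨z, hzmem⟩ := hne
            rw [Finset.mem_sdiff] at hzmem
            have := hE4' z hzmem.1 hzmem.2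
            intro hEQ
            exact (this.2.2 q' hq') (hEQ ▸ hzmem.1)
          · -- the first run window: identified by `w`
            have hiL2 : i = L := by omega
            have hq'L : n₀ + q' < L := by omega
            have hL0 : L ≠ 0 := by omega
            have hwE : w ∈ E := by
              apply hE1
              simp only [hA0i]
              rw [if_neg (by omega)]
              exact Finset.mem_union_left _ hwD
            intro hEQ
            have hwin : w ∈ e (n₀+q') := hEQ ▸ hwE
            by_cases hwA : w ∈ A0i (n₀+q')
            · simp only [hA0i] at hwA
              rw [if_pos hq'L] at hwA
              rcases Finset.mem_union.1 hwA with hwb | hww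
              · exact hwD₀ hL0 hwb
              · simp only [hWim] at hww
                obtain ⟨a', ha', hwa'⟩ := Finset.mem_image.1 hww
                rw [Finset.mem_Ico] at ha'
                rcases Nat.lt_or_ge a' L with h5 | h5
                · exact hw (hwa' ▸ hcovval a' h5)
                · have h6 : a' < L + t1 := by omega
                  exact hgD (a' - L) (by omega) (by rw [← hcrg a' h5 h6, hwa']; exact hwD)
            · exact ((he2 q' hq' w hwin hwA).1) (by rw [hA0]; simp [hwD])
      have hold : ∀ i', i' + P.t ≤ L → E ≠ (σ j).ed i' := by
        intro i' hi'
        have hedge : ∀ x, x ∈ (σ j).ed i' → x ∈ P.edgeE σ := by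
          intro x hx
          exact (P.mem_edgeE).2 ⟨j, i', hi', hx⟩
        by_cases hiL : i < L
        · set z := cr' (i + P.t - 1) with hz
          have hzg : z = g (i + P.t - 1 - L) := by
            rw [hz]; apply hcrg <;> omega
          have hzE : z ∈ E := hwinE _ (by omega) (by omega)
          intro hEQ
          exact hgedge _ (by omega) (hzg ▸ hedge z (hEQ ▸ hzE))
        · by_cases hdeep : L < i
          · have hlt : (A0i i).card < E.card := by
              rw [hE2]; exact hA0deep i hdeep hiwin
            have hne : (E \ A0i i).Nonempty := by
              rw [← Finset.card_pos, Finset.card_sdiff_of_subset hE1]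
              omega
            obtain ⟨z, hzmem⟩ := hne
            rw [Finset.mem_sdiff] at hzmem
            have h7 := hE4' z hzmem.1 hzmem.2
            intro hEQ
            apply h7.1
            rw [hA0]
            have := hedge z (hEQ ▸ hzmem.1)
            simp [this]
          · have hiL2 : i = L := by omega
            set z := cr' (L + t1 - 1) with hz
            have hzg : z = g (t1 - 1) := by
              rw [hz]
              have := hcrg (L + t1 - 1) (by omega) (by omega)
              rw [this]
              congr 1
              omega
            have hzE : z ∈ E := hwinE _ (by omega) (by omega)
            intro hEQ
            exact hgedge _ (by omega) (hzg ▸ hedge z (hEQ ▸ hzE))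
      refine ⟨Function.update e i E, ?_, ?_, ?_, ?_⟩
      · intro q hq
        rcases Nat.lt_or_ge q n with hq' | hq'
        · rw [Function.update_of_ne (by omega)]
          exact he1 q hq'
        · have : q = n := by omega
          subst this
          rw [Function.update_self]
          exact ⟨hE2, hE3, hE1⟩
      · intro q hq y hy hyA
        rcases Nat.lt_or_ge q n with hq' | hq'
        · rw [Function.update_of_ne (by omega)] at hy
          have := he2 q hq' y hy hyA
          exact ⟨this.1, this.2.1, fun q'' hq'' => by
            rw [Function.update_of_ne (by omega)]
            exact this.2.2 q'' hq''⟩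
        · have : q = n := by omega
          subst this
          rw [Function.update_self] at hy
          have := hE4' y hy hyA
          exact ⟨this.1, this.2.1, fun q'' hq'' => by
            rw [Function.update_of_ne (by omega)]
            exact this.2.2 q'' hq''⟩
      · intro q q' hq hqq
        rcases Nat.lt_or_ge q n with hq2 | hq2
        · rw [Function.update_of_ne (by omega), Function.update_of_ne (by omega)]
          exact he3 q q' hq2 hqq
        · have : q = n := by omega
          subst this
          rw [Function.update_self, Function.update_of_ne (by omega)]
          exact hnew q' hqq
      · intro q hq i' hi'
        rcases Nat.lt_or_ge q n with hq2 | hq2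
        · rw [Function.update_of_ne (by omega)]
          exact he4 q hq2 i' hi'
        · have : q = n := by omega
          subst this
          rw [Function.update_self]
          exact hold i' hi'
  obtain ⟨e, he1, he2, he3, he4⟩ := edges_ex cnt (le_refl _)
  set ed' : ℕ → Finset ℕ := fun i => if i + P.t ≤ L then (σ j).ed i else e i with hed'
  set ps' : PSt := ⟨len', cr', ed', D⟩ with hps'
  set σ' : P.St := Function.update σ j ps' with hσ'
  have hσ'j : σ' j = ps' := by rw [hσ']; exact Function.update_self j ps' σ
  have hσ'o : ∀ j', j' ≠ j → σ' j' = σ j' := by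
    intro j' h; rw [hσ']; exact Function.update_of_ne h ps' σ
  have hedold : ∀ i, i + P.t ≤ L → ed' i = (σ j).ed i := by
    intro i h; rw [hed']; simp [h]
  have hq_of : ∀ i, ¬ (i + P.t ≤ L) → i + P.t ≤ len' → n₀ ≤ i ∧ i - n₀ < cnt := by
    intro i h1 h2
    rcases hLor with h | h <;> omega
  have hnewP : ∀ i, ¬ (i + P.t ≤ L) → i + P.t ≤ len' →
      (ed' i).card = P.k ∧ P.φ (ed' i) = P.chi j ∧ A0i i ⊆ ed' i := by
    intro i h1 h2
    obtain ⟨hq1, hq2⟩ := hq_of i h1 h2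
    have hie : i = n₀ + (i - n₀) := by omega
    have := he1 (i - n₀) hq2
    rw [← hie] at this
    rw [hed']
    simp only [h1, if_false]
    exact this
  have hcov' : ∀ x, x ∈ P.coveredF σ → x ∈ P.coveredF σ' := by
    intro x hx
    rw [P.mem_coveredF] at hx ⊢
    obtain ⟨j₂, a, ha, hax⟩ := hx
    by_cases hj2 : j₂ = j
    · subst hj2
      refine ⟨j, a, ?_, ?_⟩
      · rw [hσ'j]; show a < len'; omega
      · rw [hσ'j]; show cr' a = x; rw [hcrold a ha]; exact hax
    · exact ⟨j₂, a, by rw [hσ'o j₂ hj2]; exact ha, by rw [hσ'o j₂ hj2]; exact hax⟩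
  have hcovD : ∀ x, x ∈ D → x ∈ P.coveredF σ' := by
    intro x hx
    by_cases hxc : x ∈ P.coveredF σ
    · exact hcov' x hxc
    · have hxR : x ∈ Rl := (hRmem x).2 ⟨hx, hxc⟩
      obtain ⟨nx, hnx, hgetx⟩ := List.getElem_of_mem hxR
      rw [P.mem_coveredF]
      refine ⟨j, L + t1 + nx, ?_, ?_⟩
      · rw [hσ'j]; show L + t1 + nx < len'; omega
      · rw [hσ'j]
        show cr' (L + t1 + nx) = x
        rw [hcrrun _ (by omega)]
        have : L + t1 + nx - L - t1 = nx := by omega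
        rw [this, List.getD_eq_getElem Rl 0 (by omega)]
        exact hgetx
  have hExt : P.Ext σ σ' := by
    refine ⟨fun j₂ => ?_, fun j₂ a ha => ?_, fun j₂ i hi => ?_⟩
    · by_cases hj2 : j₂ = j
      · subst hj2; rw [hσ'j]; show L ≤ len'; omega
      · rw [hσ'o j₂ hj2]
    · by_cases hj2 : j₂ = j
      · subst hj2; rw [hσ'j]; exact hcrold a ha
      · rw [hσ'o j₂ hj2]
    · by_cases hj2 : j₂ = j
      · subst hj2; rw [hσ'j]; exact hedold i hi
      · rw [hσ'o j₂ hj2]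
  have hwcov' : w ∈ P.coveredF σ' := hcovD w hwD
  refine ⟨σ', hExt, ?_, hwcov'⟩
  constructor
  case lenOK =>
    intro j₂
    by_cases hj2 : j₂ = j
    · subst hj2; rw [hσ'j]; right; show P.t ≤ len'; omega
    · rw [hσ'o j₂ hj2]; exact hI.lenOK j₂
  case crInj =>
    intro j₂ a a' ha ha' hval
    by_cases hj2 : j₂ = j
    · subst hj2; rw [hσ'j] at ha ha' hval; exact hcrinj a a' ha ha' hval
    · rw [hσ'o j₂ hj2] at ha ha' hval; exact hI.crInj j₂ a a' ha ha' hval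
  case disj =>
    intro j₂ j₃ hne a a' ha ha' hval
    by_cases hj2 : j₂ = j <;> by_cases hj3 : j₃ = j
    · exact hne (hj2.trans hj3.symm)
    · subst hj2
      rw [hσ'j] at ha hval
      rw [hσ'o j₃ hj3] at ha' hval
      have hval' : cr' a = (σ j₃).cr a' := hval
      have hmem : (σ j₃).cr a' ∈ P.coveredF σ := (P.mem_coveredF).2 ⟨j₃, a', ha', rfl⟩
      rcases Nat.lt_or_ge a L with h1 | h1
      · rw [hcrold a h1] at hval'
        exact hI.disj j j₃ hne a a' h1 ha' hval'
      · rcases Nat.lt_or_ge a (L + t1) with h2 | h2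
        · exact (hzone2 a h1 h2).1 (hval' ▸ hmem)
        · exact (hzone3 a h2 (by exact ha)).2 (hval' ▸ hmem)
    · subst hj3
      rw [hσ'j] at ha' hval
      rw [hσ'o j₂ hj2] at ha hval
      have hval' : cr' a' = (σ j₂).cr a := hval.symm
      have hmem : (σ j₂).cr a ∈ P.coveredF σ := (P.mem_coveredF).2 ⟨j₂, a, ha, rfl⟩
      rcases Nat.lt_or_ge a' L with h1 | h1
      · rw [hcrold a' h1] at hval'
        exact hI.disj j₂ j hne a a' ha h1 hval'.symm
      · rcases Nat.lt_or_ge a' (L + t1) with h2 | h2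
        · exact (hzone2 a' h1 h2).1 (hval' ▸ hmem)
        · exact (hzone3 a' h2 (by exact ha')).2 (hval' ▸ hmem)
    · rw [hσ'o j₂ hj2] at ha hval
      rw [hσ'o j₃ hj3] at ha' hval
      exact hI.disj j₂ j₃ hne a a' ha ha' hval
  case edCard =>
    intro j₂ i hi
    by_cases hj2 : j₂ = j
    · subst hj2
      rw [hσ'j] at hi ⊢
      show (ed' i).card = P.k
      by_cases hiold : i + P.t ≤ L
      · rw [hedold i hiold]; exact hI.edCard j i hiold
      · exact (hnewP i hiold hi).1
    · rw [hσ'o j₂ hj2] at hi ⊢; exact hI.edCard j₂ i hi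
  case edCol =>
    intro j₂ i hi
    by_cases hj2 : j₂ = j
    · subst hj2
      rw [hσ'j] at hi ⊢
      show P.φ (ed' i) = P.chi j
      by_cases hiold : i + P.t ≤ L
      · rw [hedold i hiold]; exact hI.edCol j i hiold
      · exact (hnewP i hiold hi).2.1
    · rw [hσ'o j₂ hj2] at hi ⊢; exact hI.edCol j₂ i hi
  case edWin =>
    intro j₂ i hi a ha1 ha2
    by_cases hj2 : j₂ = j
    · subst hj2
      rw [hσ'j] at hi ⊢
      show cr' a ∈ ed' i
      by_cases hiold : i + P.t ≤ L
      · rw [hedold i hiold, hcrold a (by omega)]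
        exact hI.edWin j i hiold a ha1 ha2
      · apply (hnewP i hiold hi).2.2
        simp only [hA0i, hWim]
        apply Finset.mem_union_right
        exact Finset.mem_image.2 ⟨a, Finset.mem_Ico.2 ⟨ha1, ha2⟩, rfl⟩
    · rw [hσ'o j₂ hj2] at hi ⊢; exact hI.edWin j₂ i hi a ha1 ha2
  case edInj =>
    intro j₂ i i' hi hi' hval
    by_cases hj2 : j₂ = j
    · subst hj2
      rw [hσ'j] at hi hi' hval
      replace hval : ed' i = ed' i' := hval
      by_cases hiold : i + P.t ≤ L <;> by_cases hiold' : i' + P.t ≤ L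
      · rw [hedold i hiold, hedold i' hiold'] at hval
        exact hI.edInj j i i' hiold hiold' hval
      · exfalso
        obtain ⟨hq1, hq2⟩ := hq_of i' hiold' hi'
        have hie : i' = n₀ + (i' - n₀) := by omega
        have := he4 (i' - n₀) hq2 i hiold
        rw [← hie] at this
        apply this
        have h5 : ed' i' = e i' := by rw [hed']; simp [hiold']
        rw [← h5, ← hval, hedold i hiold]
      · exfalso
        obtain ⟨hq1, hq2⟩ := hq_of i hiold hi
        have hie : i = n₀ + (i - n₀) := by omega
        have := he4 (i - n₀) hq2 i' hiold'
        rw [← hie] at this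
        apply this
        have h5 : ed' i = e i := by rw [hed']; simp [hiold]
        rw [← h5, hval, hedold i' hiold']
      · obtain ⟨hq1, hq2⟩ := hq_of i hiold hi
        obtain ⟨hq1', hq2'⟩ := hq_of i' hiold' hi'
        have hie : i = n₀ + (i - n₀) := by omega
        have hie' : i' = n₀ + (i' - n₀) := by omega
        have hvv : e i = e i' := by
          have h5 : ed' i = e i := by rw [hed']; simp [hiold]
          have h6 : ed' i' = e i' := by rw [hed']; simp [hiold']
          rw [← h5, ← h6, hval]
        rcases Nat.lt_trichotomy (i - n₀) (i' - n₀) with hlt | heq | hgt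
        · exfalso
          have := he3 (i' - n₀) (i - n₀) hq2' hlt
          rw [← hie, ← hie'] at this
          exact this hvv.symm
        · omega
        · exfalso
          have := he3 (i - n₀) (i' - n₀) hq2 hgt
          rw [← hie, ← hie'] at this
          exact this hvv
    · rw [hσ'o j₂ hj2] at hi hi' hval; exact hI.edInj j₂ i i' hi hi' hval
  case baseCard =>
    intro j₂ h
    by_cases hj2 : j₂ = j
    · subst hj2; rw [hσ'j]; exact hDc
    · rw [hσ'o j₂ hj2] at h ⊢; exact hI.baseCard j₂ h
  case baseLam =>
    intro j₂ h
    by_cases hj2 : j₂ = j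
    · subst hj2; rw [hσ'j]; exact hDl
    · rw [hσ'o j₂ hj2] at h ⊢; exact hI.baseLam j₂ h
  case baseCov =>
    intro j₂ h x hx
    by_cases hj2 : j₂ = j
    · subst hj2
      rw [hσ'j] at hx
      exact hcovD x hx
    · rw [hσ'o j₂ hj2] at h hx
      exact hcov' x (hI.baseCov j₂ h x hx)
  case lastSpec =>
    intro j₂ h
    by_cases hj2 : j₂ = j
    · subst hj2
      rw [hσ'j]
      show cr' (len' - 1) ∈ D
      rw [hcrrun _ (by omega)]
      exact (hRget (len' - 1 - L - t1) (by omega)).1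
    · rw [hσ'o j₂ hj2] at h ⊢; exact hI.lastSpec j₂ h
  case suffLam =>
    intro j₂ h d hd
    by_cases hj2 : j₂ = j
    · subst hj2
      have hsf : P.suffF σ' j d = (Finset.Ico (len' - d) len').image cr' := by
        rw [suffF, hσ'j]
      rw [hσ'j]
      show P.lm (D ∪ P.suffF σ' j d) = P.chi j
      rcases le_or_gt d b with hdb | hdb
      · have hsub : P.suffF σ' j d ⊆ D := by
          rw [hsf]
          intro x hx
          obtain ⟨a, ha, rfl⟩ := Finset.mem_image.1 hx
          rw [Finset.mem_Ico] at ha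
          exact (hzone3 a (by omega) (by omega)).1
        rw [Finset.union_eq_left.2 hsub]
        exact hDl
      · have heq : D ∪ P.suffF σ' j d = D ∪ gsegF g (t1 + b - d) t1 := by
          apply Finset.Subset.antisymm
          · apply Finset.union_subset Finset.subset_union_left
            rw [hsf]
            intro x hx
            obtain ⟨a, ha, rfl⟩ := Finset.mem_image.1 hx
            rw [Finset.mem_Ico] at ha
            rcases Nat.lt_or_ge a (L + t1) with h2 | h2
            · apply Finset.mem_union_right
              rw [hcrg a (by omega) h2]
              exact mem_gsegF.2 ⟨a - L, by omega, by omega, rfl⟩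
            · exact Finset.mem_union_left _ (hzone3 a h2 (by omega)).1
          · apply Finset.union_subset Finset.subset_union_left
            intro x hx
            obtain ⟨c, hc1, hc2, rfl⟩ := mem_gsegF.1 hx
            apply Finset.mem_union_right
            rw [hsf]
            refine Finset.mem_image.2 ⟨L + c, Finset.mem_Ico.2 ⟨by omega, by omega⟩, ?_⟩
            rw [hcrg (L + c) (by omega) (by omega)]
            simp
        rw [heq]
        exact hg4 (t1 + b - d) t1 (by omega) (le_refl _)
    · have hsf : P.suffF σ' j₂ d = P.suffF σ j₂ d := by
        rw [suffF, suffF, hσ'o j₂ hj2]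

      rw [hσ'o j₂ hj2] at h ⊢
      rw [hsf]
      exact hI.suffLam j₂ h d hd

/-! ### The global recursion -/

def initSt : P.St := fun _ => ⟨0, fun _ => 0, fun _ => ∅, ∅⟩

lemma inv_init : P.Inv P.initSt := by
  have ht := P.ht
  have hlen : ∀ j, (P.initSt j).len = 0 := fun _ => rfl
  constructor
  · intro j; exact Or.inl (hlen j)
  · intro j a b ha _ _; rw [hlen] at ha; omega
  · intro j j' _ a b ha _ _; rw [hlen] at ha; omega
  · intro j i hi; rw [hlen] at hi; omega
  · intro j i hi; rw [hlen] at hi; omega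
  · intro j i hi; rw [hlen] at hi; omega
  · intro j i i' hi _ _; rw [hlen] at hi; omega
  · intro j h; exact absurd (hlen j) h
  · intro j h; exact absurd (hlen j) h
  · intro j h; exact absurd (hlen j) h
  · intro j h; exact absurd (hlen j) h
  · intro j h; exact absurd (hlen j) h

lemma exists_uncov (σ : P.St) : ∃ x, x ∉ P.coveredF σ := by
  obtain ⟨x, hx⟩ := Infinite.exists_notMem_finset (P.coveredF σ)
  exact ⟨x, hx⟩

def lu (σ : P.St) : ℕ := Nat.find (P.exists_uncov σ)

lemma lu_not_cov (σ : P.St) : P.lu σ ∉ P.coveredF σ := Nat.find_spec (P.exists_uncov σ)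

lemma lu_min (σ : P.St) : ∀ y, y < P.lu σ → y ∈ P.coveredF σ := by
  intro y hy
  by_contra h
  have h2 : P.lu σ ≤ y := Nat.find_le h
  omega

def nextSt (σ : P.St) (h : P.Inv σ) : P.St :=
  (P.batch σ h (P.lu σ) (P.lu_not_cov σ)).choose

lemma nextSt_spec (σ : P.St) (h : P.Inv σ) :
    P.Ext σ (P.nextSt σ h) ∧ P.Inv (P.nextSt σ h) ∧ P.lu σ ∈ P.coveredF (P.nextSt σ h) :=
  (P.batch σ h (P.lu σ) (P.lu_not_cov σ)).choose_spec

def chain : ℕ → {σ : P.St // P.Inv σ} :=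
  fun n => Nat.rec ⟨P.initSt, P.inv_init⟩
    (fun _ prev => ⟨P.nextSt prev.1 prev.2, (P.nextSt_spec _ _).2.1⟩) n

lemma chain_succ (n : ℕ) :
    (P.chain (n+1)).1 = P.nextSt (P.chain n).1 (P.chain n).2 := rfl

lemma chain_ext_succ (n : ℕ) : P.Ext (P.chain n).1 (P.chain (n+1)).1 := by
  rw [chain_succ]
  exact (P.nextSt_spec (P.chain n).1 (P.chain n).2).1

lemma chain_ext (n n' : ℕ) (h : n ≤ n') : P.Ext (P.chain n).1 (P.chain n').1 := by
  induction n' with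
  | zero =>
    have : n = 0 := by omega
    subst this
    exact Ext.rfl' P _
  | succ n' ih =>
    rcases Nat.lt_or_ge n (n'+1) with h1 | h1
    · exact Ext.trans' P (ih (by omega)) (P.chain_ext_succ n')
    · have : n = n' + 1 := by omega
      subst this
      exact Ext.rfl' P _

lemma progress : ∀ n x, x < n → x ∈ P.coveredF (P.chain n).1 := by
  intro n
  induction n with
  | zero => omega
  | succ n ih =>
    intro x hx
    by_cases hc : x ∈ P.coveredF (P.chain n).1
    · exact P.covered_mono (P.chain_ext_succ n) hc
    · have hxn : x = n := by
        rcases Nat.lt_or_ge x n with h1 | h1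
        · exact absurd (ih x h1) hc
        · omega
      have hlu : P.lu (P.chain n).1 = x := by
        rcases Nat.lt_trichotomy (P.lu (P.chain n).1) x with h1 | h1 | h1
        · exfalso
          apply P.lu_not_cov (P.chain n).1
          exact ih _ (by omega)
        · exact h1
        · exact absurd (P.lu_min _ x h1) hc
      rw [← hlu, chain_succ]
      exact (P.nextSt_spec (P.chain n).1 (P.chain n).2).2.2

/-! ### The limit objects -/

def flen (j : Fin P.s) (n : ℕ) : ℕ := (((P.chain n).1) j).len

lemma flen_mono {j : Fin P.s} {n n' : ℕ} (h : n ≤ n') : P.flen j n ≤ P.flen j n' :=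
  (P.chain_ext n n' h).len_le j

def vseq (j : Fin P.s) (a : ℕ) : ℕ :=
  if h : ∃ n, a < P.flen j n then (((P.chain (Nat.find h)).1) j).cr a else 0

lemma vseq_stable (j : Fin P.s) (a : ℕ) (n : ℕ) (hn : a < P.flen j n) :
    (((P.chain n).1) j).cr a = P.vseq j a := by
  rw [vseq]
  have h : ∃ n, a < P.flen j n := ⟨n, hn⟩
  rw [dif_pos h]
  set n₀ := Nat.find h with hn₀
  have hn₀a : a < P.flen j n₀ := Nat.find_spec h
  rcases le_or_gt n₀ n with h1 | h1
  · exact (P.chain_ext n₀ n h1).cr_eq j a hn₀a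
  · exact ((P.chain_ext n n₀ (by omega)).cr_eq j a hn).symm

def eseq (j : Fin P.s) (i : ℕ) : Finset ℕ :=
  if h : ∃ n, i + P.t ≤ P.flen j n then (((P.chain (Nat.find h)).1) j).ed i else ∅

lemma eseq_stable (j : Fin P.s) (i : ℕ) (n : ℕ) (hn : i + P.t ≤ P.flen j n) :
    (((P.chain n).1) j).ed i = P.eseq j i := by
  rw [eseq]
  have h : ∃ n, i + P.t ≤ P.flen j n := ⟨n, hn⟩
  rw [dif_pos h]
  set n₀ := Nat.find h with hn₀
  have hn₀a : i + P.t ≤ P.flen j n₀ := Nat.find_spec h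
  rcases le_or_gt n₀ n with h1 | h1
  · exact (P.chain_ext n₀ n h1).ed_eq j i hn₀a
  · exact ((P.chain_ext n n₀ (by omega)).ed_eq j i hn).symm

def NN (j : Fin P.s) : ℕ∞ := ⨆ n, (P.flen j n : ℕ∞)

lemma lt_NN (j : Fin P.s) (a : ℕ) : (a : ℕ∞) < P.NN j ↔ ∃ n, a < P.flen j n := by
  rw [NN, lt_iSup_iff]
  constructor
  · rintro ⟨n, hn⟩
    exact ⟨n, by exact_mod_cast hn⟩
  · rintro ⟨n, hn⟩
    exact ⟨n, by exact_mod_cast hn⟩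

lemma le_NN (j : Fin P.s) (a : ℕ) : (a : ℕ∞) ≤ P.NN j ↔ ∃ n, a ≤ P.flen j n := by
  constructor
  · intro h
    by_contra hc
    push_neg at hc
    rcases Nat.eq_zero_or_pos a with ha | ha
    · have := hc 0; omega
    · have hle : P.NN j ≤ ((a - 1 : ℕ) : ℕ∞) := by
        rw [NN]
        apply iSup_le
        intro n
        exact_mod_cast Nat.le_of_lt_succ (by have := hc n; omega)
      have := le_trans h hle
      rw [Nat.cast_le] at this
      omega
  · rintro ⟨n, hn⟩
    calc (a : ℕ∞) ≤ (P.flen j n : ℕ∞) := by exact_mod_cast hn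
    _ ≤ P.NN j := le_iSup (fun n => (P.flen j n : ℕ∞)) n

end Stp

end BPP

/-- The vertices of every `s(k-t+1)`-edge-coloured countably infinite complete
`k`-graph can be partitioned into the cores of at most `s` monochromatic
`t`-tight Berge-paths of pairwise distinct colours (empty "paths" allow for
fewer than `s` of them). -/
theorem berge_path_partition (s k t : ℕ) (ht : 2 ≤ t) (htk : t ≤ k)
    (φ : Finset ℕ → Fin (s * (k - t + 1))) :
    ∃ (X : Fin s → Set ℕ) (c : Fin s → Fin (s * (k - t + 1))),
      Function.Injective c ∧
      (∀ i : Fin s, X i = ∅ ∨ IsMonoBergePath k t φ (c i) (X i)) ∧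
      (∀ i j : Fin s, i ≠ j → Disjoint (X i) (X j)) ∧
      (⋃ i, X i) = Set.univ := by
  classical
  rcases Nat.eq_zero_or_pos s with hs | hs
  · subst hs
    have h0 : 0 * (k - t + 1) = 0 := by simp
    exact ((h0 ▸ φ ∅ : Fin 0)).elim0
  set P : BPP.Stp := ⟨s, k, t, ht, htk, hs, φ⟩ with hP
  refine ⟨fun j => {x | ∃ a : ℕ, (a : ℕ∞) < P.NN j ∧ P.vseq j a = x}, P.chi, P.chi_inj,
    ?_, ?_, ?_⟩
  · intro i
    by_cases hN : ∀ n, P.flen i n = 0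
    · left
      ext x
      simp only [Set.mem_setOf_eq, Set.mem_empty_iff_false, iff_false, not_exists]
      intro a
      rintro ⟨ha, -⟩
      have hle : P.NN i ≤ 0 := by
        rw [BPP.Stp.NN]
        apply iSup_le
        intro n
        rw [hN n]
        exact le_refl _
      exact absurd (lt_of_lt_of_le ha hle) (by simp)
    · right
      push_neg at hN
      obtain ⟨n₁, hn₁⟩ := hN
      refine Or.inr ⟨P.NN i, P.vseq i, P.eseq i, ?_, ?_, rfl, ?_, ?_⟩
      · rw [P.le_NN]
        refine ⟨n₁, ?_⟩
        rcases (P.chain n₁).2.lenOK i with h | h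
        · exact absurd h hn₁
        · exact h
      · intro a a' ha ha' heq
        obtain ⟨n, hn⟩ := (P.lt_NN i a).1 ha
        obtain ⟨n', hn'⟩ := (P.lt_NN i a').1 ha'
        have h1 : a < P.flen i (max n n') := lt_of_lt_of_le hn (P.flen_mono (le_max_left _ _))
        have h2 : a' < P.flen i (max n n') := lt_of_lt_of_le hn' (P.flen_mono (le_max_right _ _))
        apply (P.chain (max n n')).2.crInj i a a' h1 h2
        rw [P.vseq_stable i a _ h1, P.vseq_stable i a' _ h2, heq]
      · intro i2 hi2
        obtain ⟨n, hn⟩ := (P.le_NN i (i2 + t)).1 hi2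
        have hst := P.eseq_stable i i2 n hn
        refine ⟨?_, ?_, ?_⟩
        · rw [← hst]
          exact (P.chain n).2.edCard i i2 hn
        · rw [← hst]
          exact (P.chain n).2.edCol i i2 hn
        · intro a ha1 ha2
          rw [← hst, ← P.vseq_stable i a n (by omega)]
          exact (P.chain n).2.edWin i i2 hn a ha1 ha2
      · intro i2 i3 hi2 hi3 heq
        obtain ⟨n, hn⟩ := (P.le_NN i (i2 + t)).1 hi2
        obtain ⟨n', hn'⟩ := (P.le_NN i (i3 + t)).1 hi3
        have h1 : i2 + t ≤ P.flen i (max n n') := le_trans hn (P.flen_mono (le_max_left _ _))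
        have h2 : i3 + t ≤ P.flen i (max n n') := le_trans hn' (P.flen_mono (le_max_right _ _))
        apply (P.chain (max n n')).2.edInj i i2 i3 h1 h2
        rw [P.eseq_stable i i2 _ h1, P.eseq_stable i i3 _ h2, heq]
  · intro i j hij
    rw [Set.disjoint_left]
    rintro x ⟨a, ha, hax⟩ ⟨a', ha', hax'⟩
    obtain ⟨n, hn⟩ := (P.lt_NN i a).1 ha
    obtain ⟨n', hn'⟩ := (P.lt_NN j a').1 ha'
    have h1 : a < P.flen i (max n n') := lt_of_lt_of_le hn (P.flen_mono (le_max_left _ _))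
    have h2 : a' < P.flen j (max n n') := lt_of_lt_of_le hn' (P.flen_mono (le_max_right _ _))
    apply (P.chain (max n n')).2.disj i j hij a a' h1 h2
    rw [P.vseq_stable i a _ h1, P.vseq_stable j a' _ h2, hax, hax']
  · rw [Set.eq_univ_iff_forall]
    intro x
    rw [Set.mem_iUnion]
    have hx := P.progress (x+1) x (by omega)
    rw [P.mem_coveredF] at hx
    obtain ⟨j, a, ha, hax⟩ := hx
    refine ⟨j, a, ?_, ?_⟩
    · exact (P.lt_NN j a).2 ⟨x+1, ha⟩
    · rw [← P.vseq_stable j a (x+1) ha]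
      exact hax
end
end

section
/- For all s, k, t ∈ ℕ with k ≥ t ≥ 2, there exists an edge-colouring of the complete k-uniform hypergraph on ℕ with r = s(k−t+1)+1 colours such that the vertices of ℕ cannot be covered by the cores of s monochromatic t-tight Berge-paths. -/
namespace BergePathAux

/-- Fast-growing block boundaries. -/
def bb (s t : ℕ) : ℕ → ℕ
  | 0 => 0
  | m + 1 => (2 * t * s + s + 2) * (bb s t m + 1)

lemma bb_lt_succ (s t m : ℕ) : bb s t m < bb s t (m + 1) := by
  have h2 : 2 ≤ 2 * t * s + s + 2 := Nat.le_add_left 2 (2 * t * s + s)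
  have h := Nat.mul_le_mul_right (bb s t m + 1) h2
  have hgoal : bb s t (m + 1) = (2 * t * s + s + 2) * (bb s t m + 1) := rfl
  omega

lemma bb_mono (s t : ℕ) : StrictMono (bb s t) :=
  strictMono_nat_of_lt_succ (fun m => bb_lt_succ s t m)

lemma le_bb (s t m : ℕ) : m ≤ bb s t m := by
  induction m with
  | zero => exact Nat.zero_le _
  | succ n ih => have := bb_lt_succ s t n; omega

/-- The block index of a natural number. -/
def bidx (s t x : ℕ) : ℕ := Nat.findGreatest (fun m => bb s t m ≤ x) x

lemma bb_bidx_le (s t x : ℕ) : bb s t (bidx s t x) ≤ x :=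
  Nat.findGreatest_spec (P := fun m => bb s t m ≤ x) (Nat.zero_le x) (by simp [bb])

lemma lt_bb_bidx_succ (s t x : ℕ) : x < bb s t (bidx s t x + 1) := by
  by_contra h
  push_neg at h
  have h1 : bidx s t x + 1 ≤ x := le_trans (le_bb s t _) h
  have h2 : bidx s t x + 1 ≤ bidx s t x := Nat.le_findGreatest h1 h
  omega

lemma bidx_eq (s t x m : ℕ) (h1 : bb s t m ≤ x) (h2 : x < bb s t (m + 1)) :
    bidx s t x = m := by
  rcases lt_trichotomy (bidx s t x) m with h | h | h
  · have hle : bb s t (bidx s t x + 1) ≤ bb s t m := (bb_mono s t).monotone (by omega)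
    have := lt_bb_bidx_succ s t x
    omega
  · exact h
  · have hle : bb s t (m + 1) ≤ bb s t (bidx s t x) := (bb_mono s t).monotone (by omega)
    have := bb_bidx_le s t x
    omega

/-- A map `ℕ → (Fin s → Fin r)` hitting every function. -/
noncomputable def uu (s k t : ℕ) : ℕ → (Fin s → Fin (s * (k - t + 1) + 1)) := fun m =>
  if h : m < Fintype.card (Fin s → Fin (s * (k - t + 1) + 1)) then
    (Fintype.equivFin (Fin s → Fin (s * (k - t + 1) + 1))).symm ⟨m, h⟩
  else fun _ => ⟨0, Nat.succ_pos _⟩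

lemma uu_surj (s k t : ℕ) (g : Fin s → Fin (s * (k - t + 1) + 1)) :
    ∃ m, uu s k t m = g := by
  refine ⟨(Fintype.equivFin (Fin s → Fin (s * (k - t + 1) + 1)) g).val, ?_⟩
  have h : (Fintype.equivFin (Fin s → Fin (s * (k - t + 1) + 1)) g).val <
      Fintype.card (Fin s → Fin (s * (k - t + 1) + 1)) :=
    (Fintype.equivFin (Fin s → Fin (s * (k - t + 1) + 1)) g).isLt
  simp only [uu, dif_pos h]
  have heq : (⟨(Fintype.equivFin (Fin s → Fin (s * (k - t + 1) + 1)) g).val, h⟩ :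
      Fin (Fintype.card (Fin s → Fin (s * (k - t + 1) + 1)))) =
      Fintype.equivFin (Fin s → Fin (s * (k - t + 1) + 1)) g := by
    apply Fin.ext; rfl
  rw [heq, Equiv.symm_apply_apply]

/-- The elements of `E` having fewer than `k - t + 1` elements of `E` below them. -/
def bottomq (k t : ℕ) (E : Finset ℕ) : Finset ℕ :=
  E.filter (fun y => (E.filter (· < y)).card < k - t + 1)

lemma card_bottomq_le (k t : ℕ) (E : Finset ℕ) : (bottomq k t E).card ≤ k - t + 1 := by
  classical
  have := Finset.card_le_card_of_injOn (fun y => (E.filter (· < y)).card)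
    (s := bottomq k t E) (t := Finset.range (k - t + 1)) ?_ ?_
  · simpa using this
  · intro y hy
    simp only [Finset.coe_filter, Set.mem_setOf_eq, bottomq, Finset.mem_coe, Finset.mem_filter] at hy
    exact Finset.mem_range.2 hy.2
  · intro y hy y' hy' hrank
    simp only [Finset.coe_filter, Set.mem_setOf_eq, bottomq, Finset.mem_coe,
      Finset.mem_filter] at hy hy'
    by_contra hne
    have hrank' : (E.filter (· < y)).card = (E.filter (· < y')).card := hrank
    have hkey : ∀ a b : ℕ, a ∈ E → b ∈ E → a < b →
        (E.filter (· < a)).card < (E.filter (· < b)).card := by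
      intro a b haE hbE hab
      apply Finset.card_lt_card
      constructor
      · intro z hz
        simp only [Finset.mem_filter] at hz ⊢
        exact ⟨hz.1, lt_trans hz.2 hab⟩
      · intro hsup
        have : a ∈ E.filter (· < a) := hsup (by simp [Finset.mem_filter, haE, hab])
        simp only [Finset.mem_filter] at this
        omega
    rcases Nat.lt_or_ge y y' with hlt | hge
    · have := hkey y y' hy.1 hy'.1 hlt; omega
    · have hlt : y' < y := by omega
      have := hkey y' y hy'.1 hy.1 hlt; omega

/-- Forbidden colours for an edge. -/
noncomputable def forb (s k t : ℕ) (E : Finset ℕ) : Finset (Fin (s * (k - t + 1) + 1)) :=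
  (bottomq k t E).biUnion (fun y => Finset.image (uu s k t (bidx s t y)) Finset.univ)

lemma card_forb_le (s k t : ℕ) (E : Finset ℕ) : (forb s k t E).card ≤ s * (k - t + 1) := by
  classical
  have h1 : (forb s k t E).card ≤
      ∑ y ∈ bottomq k t E, (Finset.image (uu s k t (bidx s t y)) Finset.univ).card :=
    Finset.card_biUnion_le
  have h2 : ∑ y ∈ bottomq k t E, (Finset.image (uu s k t (bidx s t y)) Finset.univ).card ≤
      ∑ _y ∈ bottomq k t E, s := by
    apply Finset.sum_le_sum
    intro y _
    calc (Finset.image (uu s k t (bidx s t y)) Finset.univ).card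
        ≤ (Finset.univ : Finset (Fin s)).card := Finset.card_image_le
      _ = s := by simp
  have h3 : ∑ _y ∈ bottomq k t E, s = (bottomq k t E).card * s := by
    rw [Finset.sum_const, smul_eq_mul]
  have h4 : (bottomq k t E).card * s ≤ (k - t + 1) * s :=
    Nat.mul_le_mul_right s (card_bottomq_le k t E)
  have h5 : (k - t + 1) * s = s * (k - t + 1) := Nat.mul_comm _ _
  omega

lemma exists_free (s k t : ℕ) (E : Finset ℕ) :
    ((Finset.univ : Finset (Fin (s * (k - t + 1) + 1))) \ forb s k t E).Nonempty := by
  rw [← Finset.card_pos, Finset.card_sdiff_of_subset (Finset.subset_univ _)]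
  have h1 := card_forb_le s k t E
  have h2 : (Finset.univ : Finset (Fin (s * (k - t + 1) + 1))).card = s * (k - t + 1) + 1 := by
    simp
  omega

/-- The colouring. -/
noncomputable def colouring (s k t : ℕ) (E : Finset ℕ) : Fin (s * (k - t + 1) + 1) :=
  ((Finset.univ : Finset (Fin (s * (k - t + 1) + 1))) \ forb s k t E).min' (exists_free s k t E)

lemma colouring_not_forb (s k t : ℕ) (E : Finset ℕ) : colouring s k t E ∉ forb s k t E := by
  have h := Finset.min'_mem _ (exists_free s k t E)
  rw [Finset.mem_sdiff] at h
  exact h.2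

lemma colouring_ne (s k t : ℕ) (E : Finset ℕ) (y : ℕ) (hy : y ∈ E)
    (hr : (E.filter (· < y)).card < k - t + 1) (i : Fin s) :
    colouring s k t E ≠ uu s k t (bidx s t y) i := by
  intro hEq
  apply colouring_not_forb s k t E
  rw [hEq]
  apply Finset.mem_biUnion.2
  refine ⟨y, ?_, Finset.mem_image_of_mem _ (Finset.mem_univ i)⟩
  simp only [bottomq, Finset.mem_filter]
  exact ⟨hy, hr⟩

lemma exists_window (t : ℕ) (N : ℕ∞) (p : ℕ) (ht : 1 ≤ t) (hN : (t : ℕ∞) ≤ N)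
    (hp : (p : ℕ∞) < N) :
    ∃ j : ℕ, j ≤ p ∧ p < j + t ∧ ((j + t : ℕ) : ℕ∞) ≤ N := by
  induction N using ENat.recTopCoe with
  | top => exact ⟨p, le_refl _, by omega, le_top⟩
  | coe n =>
    have hN' : t ≤ n := by exact_mod_cast hN
    have hp' : p < n := by exact_mod_cast hp
    refine ⟨min p (n - t), by omega, by omega, ?_⟩
    have h : min p (n - t) + t ≤ n := by omega
    exact_mod_cast h

end BergePathAux

/-- There is an edge-colouring of the complete `k`-graph on `ℕ` with
`s(k-t+1)+1` colours such that `ℕ` cannot be covered by the cores of `s`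
monochromatic `t`-tight Berge-paths. -/
theorem berge_path_lower_bound (s k t : ℕ) (ht : 2 ≤ t) (htk : t ≤ k) :
    ∃ φ : Finset ℕ → Fin (s * (k - t + 1) + 1),
      ¬ ∃ (X : Fin s → Set ℕ) (c : Fin s → Fin (s * (k - t + 1) + 1)),
        (∀ i : Fin s, X i = ∅ ∨ IsMonoBergePath k t φ (c i) (X i)) ∧
        (⋃ i, X i) = Set.univ := by
  classical
  refine ⟨BergePathAux.colouring s k t, ?_⟩
  rintro ⟨X, c, hcond, hcover⟩
  obtain ⟨m, hm⟩ := BergePathAux.uu_surj s k t c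
  set M : ℕ := BergePathAux.bb s t m with hM
  set M' : ℕ := BergePathAux.bb s t (m + 1) with hM'
  -- per-core bound on the trace in block `m`
  have key : ∀ i : Fin s,
      ((Finset.Ico M M').filter (fun x => x ∈ X i)).card ≤ (2 * t - 1) * M + 1 := by
    intro i
    rcases hcond i with hXi | hpath
    · rw [hXi]; simp
    · rw [IsMonoBergePath] at hpath
      rcases hpath with ⟨v0, hv0⟩ | ⟨N, v, e, hN, hinj, hXeq, hedge, _hdist⟩
      · -- singleton core
        have hsub : (Finset.Ico M M').filter (fun x => x ∈ X i) ⊆ {v0} := by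
          intro x hx
          simp only [Finset.mem_filter] at hx
          rw [hv0] at hx
          simpa using hx.2
        calc ((Finset.Ico M M').filter (fun x => x ∈ X i)).card
            ≤ ({v0} : Finset ℕ).card := Finset.card_le_card hsub
          _ = 1 := rfl
          _ ≤ (2 * t - 1) * M + 1 := Nat.le_add_left 1 _
      · -- genuine path
        set S : Finset ℕ := (Finset.Ico M M').filter (fun x => x ∈ X i) with hS
        have hex : ∀ x ∈ S, ∃ z : ℕ × ℕ, z.1 < M ∧ z.2 < 2 * t - 1 ∧
            ∃ l p : ℕ, (l : ℕ∞) < N ∧ (p : ℕ∞) < N ∧ v l = z.1 ∧ v p = x ∧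
              p + (t - 1) = z.2 + l := by
          intro x hx
          rw [hS, Finset.mem_filter, Finset.mem_Ico] at hx
          obtain ⟨⟨hxM, hxM'⟩, hxX⟩ := hx
          rw [hXeq] at hxX
          obtain ⟨p, hpN, hvp⟩ := hxX
          obtain ⟨j, hjp, hpj, hjt⟩ := BergePathAux.exists_window t N p (by omega) hN hpN
          obtain ⟨hcard, hcol, hwin⟩ := hedge j hjt
          set w : Finset ℕ := (Finset.Ico j (j + t)).image v with hw
          have hlN : ∀ l ∈ Finset.Ico j (j + t), (l : ℕ∞) < N := by
            intro l hl
            rw [Finset.mem_Ico] at hl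
            calc (l : ℕ∞) < ((j + t : ℕ) : ℕ∞) := by exact_mod_cast hl.2
              _ ≤ N := hjt
          have hwsub : w ⊆ e j := by
            intro z hz
            obtain ⟨l, hl, rfl⟩ := Finset.mem_image.1 hz
            rw [Finset.mem_Ico] at hl
            exact hwin l hl.1 hl.2
          have hwcard : w.card = t := by
            show ((Finset.Ico j (j + t)).image v).card = t
            rw [Finset.card_image_of_injOn, Nat.card_Ico]
            · omega
            · intro a ha b hb hab
              exact hinj a b (hlN a ha) (hlN b hb) hab
          have hwne : w.Nonempty := by
            rw [← Finset.card_pos, hwcard]; omega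
          set y : ℕ := w.min' hwne with hy
          have hymem : y ∈ w := Finset.min'_mem w hwne
          obtain ⟨l, hlmem, hvl⟩ := Finset.mem_image.1 hymem
          have hl := Finset.mem_Ico.1 hlmem
          have hyx : y ≤ x := by
            have hxw : x ∈ w := by
              exact Finset.mem_image.2 ⟨p, Finset.mem_Ico.2 ⟨hjp, hpj⟩, hvp⟩
            exact Finset.min'_le w x hxw
          have hrank : ((e j).filter (· < y)).card < k - t + 1 := by
            have hsub2 : (e j).filter (· < y) ⊆ e j \ w := by
              intro z hz
              rw [Finset.mem_filter] at hz
              rw [Finset.mem_sdiff]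
              refine ⟨hz.1, fun hzw => ?_⟩
              have := Finset.min'_le w z hzw
              omega
            have h1 : ((e j).filter (· < y)).card ≤ (e j \ w).card :=
              Finset.card_le_card hsub2
            rw [Finset.card_sdiff_of_subset hwsub, hcard, hwcard] at h1
            omega
          have hyE : y ∈ e j := hwsub (Finset.mem_image.2 ⟨l, hlmem, hvl⟩)
          have hyM : y < M := by
            by_contra hge
            push_neg at hge
            have hbidx : BergePathAux.bidx s t y = m :=
              BergePathAux.bidx_eq s t y m hge (by omega)
            have hne := BergePathAux.colouring_ne s k t (e j) y hyE hrank i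
            rw [hbidx, hm] at hne
            exact hne hcol
          exact ⟨(y, p + (t - 1) - l), hyM, by omega, l, p, hlN l hlmem, hpN, hvl, hvp,
            by omega⟩
        have hcardS : S.card ≤ ((Finset.Ico 0 M) ×ˢ (Finset.range (2 * t - 1))).card := by
          classical
          apply Finset.card_le_card_of_injOn
            (fun x => if h : x ∈ S then (hex x h).choose else (0, 0))
          · intro x hx
            simp only [dif_pos hx]
            obtain ⟨h1, h2, _⟩ := (hex x hx).choose_spec
            simp only [dif_pos (Finset.mem_coe.mp hx), Finset.mem_coe, Finset.mem_product, Finset.mem_Ico,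
              Finset.mem_range]
            exact ⟨⟨Nat.zero_le _, h1⟩, h2⟩
          · intro x hx x' hx' hfe
            simp only [Finset.mem_coe] at hx hx'
            simp only [dif_pos hx, dif_pos hx'] at hfe
            obtain ⟨h1, h2, l, p, hlN, hpN, hvl, hvp, harith⟩ := (hex x hx).choose_spec
            obtain ⟨h1', h2', l', p', hlN', hpN', hvl', hvp', harith'⟩ :=
              (hex x' hx').choose_spec
            have hyeq : ((hex x hx).choose).1 = ((hex x' hx').choose).1 := by rw [hfe]
            have hdeq : ((hex x hx).choose).2 = ((hex x' hx').choose).2 := by rw [hfe]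
            have hll : l = l' := hinj l l' hlN hlN' (by rw [hvl, hvl', hyeq])
            have hpp : p = p' := by omega
            rw [← hvp, ← hvp', hpp]
        rw [Finset.card_product, Nat.card_Ico, Finset.card_range] at hcardS
        have hmul : (M - 0) * (2 * t - 1) = (2 * t - 1) * M := by
          rw [Nat.sub_zero, Nat.mul_comm]
        omega
  -- summing up
  have hsum : (Finset.Ico M M').card ≤
      ∑ i : Fin s, ((Finset.Ico M M').filter (fun x => x ∈ X i)).card := by
    have hsub : Finset.Ico M M' ⊆
        Finset.univ.biUnion (fun i : Fin s => (Finset.Ico M M').filter (fun x => x ∈ X i)) := by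
      intro x hx
      have hxu : x ∈ ⋃ i, X i := by rw [hcover]; trivial
      rw [Set.mem_iUnion] at hxu
      obtain ⟨i, hi⟩ := hxu
      exact Finset.mem_biUnion.2 ⟨i, Finset.mem_univ i, Finset.mem_filter.2 ⟨hx, hi⟩⟩
    calc (Finset.Ico M M').card
        ≤ (Finset.univ.biUnion
            (fun i : Fin s => (Finset.Ico M M').filter (fun x => x ∈ X i))).card :=
          Finset.card_le_card hsub
      _ ≤ ∑ i : Fin s, ((Finset.Ico M M').filter (fun x => x ∈ X i)).card :=
          Finset.card_biUnion_le
  have hsum2 : ∑ i : Fin s, ((Finset.Ico M M').filter (fun x => x ∈ X i)).card ≤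
      s * ((2 * t - 1) * M + 1) := by
    calc ∑ i : Fin s, ((Finset.Ico M M').filter (fun x => x ∈ X i)).card
        ≤ ∑ _i : Fin s, ((2 * t - 1) * M + 1) := Finset.sum_le_sum (fun i _ => key i)
      _ = s * ((2 * t - 1) * M + 1) := by
          rw [Finset.sum_const, smul_eq_mul, Finset.card_univ, Fintype.card_fin]
  have hIco : (Finset.Ico M M').card = M' - M := Nat.card_Ico M M'
  have hM'eq : M' = (2 * t * s + s + 2) * (M + 1) := rfl
  have harith : M + s * ((2 * t - 1) * M + 1) < M' := by
    obtain ⟨wv, hw1, hw2⟩ : ∃ w, 2 * t - 1 = w ∧ 2 * t = w + 1 := ⟨2 * t - 1, rfl, by omega⟩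
    rw [hM'eq, hw1, hw2]
    nlinarith [Nat.zero_le (s * M), Nat.zero_le (wv * s), Nat.zero_le (s * (wv * M)),
      Nat.zero_le M, Nat.zero_le s]
  have hfin : M' - M ≤ s * ((2 * t - 1) * M + 1) := by
    have h := le_trans hsum hsum2
    rw [hIco] at h
    exact h
  omega
end

section
/- For every r ∈ ℕ, there exists an edge-colouring of the countably infinite complete graph on ℕ with r+1 colours such that ℕ cannot be covered by the vertex sets of r monochromatic paths (finite or infinite). -/
/-!
Split `ℕ` into levels `ℓ x ∈ {0, …, r}`: with `b = 3r + 2`, level `m < r` is the block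
`[b^m, b^(m+1))` (level `0` also contains `0`) and level `r` is everything from `b^r` on.
Colour an edge by the lower level of its two ends. Some colour `m` is used by none of `r`
monochromatic paths. On a path of colour `c ≠ m`, each path-neighbour `y` of a level-`m` vertex
`x` satisfies `min (ℓ x) (ℓ y) = c ≠ ℓ x`, so `y` lies strictly below level `m`; hence each path
meets level `m` in at most `2 |levels < m| + 1 ≤ 2 b^m + 1` vertices, and `r` paths cannot cover
level `m`, which has at least `(b - 1) b^m` vertices.
-/

open Set

theorem encard_le_two_mul_add_one_of_forall_succ_mem_or {S T : Set ℕ}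
    (h : ∀ i ∈ S, i + 1 ∈ T ∨ ∀ j, j + 1 = i → j ∈ T) :
    S.encard ≤ 2 * T.encard + 1 := by
  have hS : S ⊆ insert 0 ((· - 1) '' T ∪ (· + 1) '' T) := by
    intro i hi
    rcases h i hi with hsucc | hpred
    · exact Or.inr (Or.inl ⟨i + 1, hsucc, rfl⟩)
    · rcases i with _ | j
      · exact Or.inl rfl
      · exact Or.inr (Or.inr ⟨j, hpred j rfl, rfl⟩)
  calc S.encard ≤ (insert 0 ((· - 1) '' T ∪ (· + 1) '' T)).encard := encard_le_encard hS
    _ ≤ ((· - 1) '' T).encard + ((· + 1) '' T).encard + 1 :=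
      (encard_insert_le _ _).trans (add_le_add_left (encard_union_le _ _) _)
    _ ≤ 2 * T.encard + 1 := by
      rw [two_mul]
      exact add_le_add_left (add_le_add (encard_image_le _ _) (encard_image_le _ _)) _

section MinColouring

variable {n : ℕ} (ℓ : ℕ → Fin n)

def minColouring : Sym2 ℕ → Fin n :=
  Sym2.lift ⟨fun x y => min (ℓ x) (ℓ y), fun _ _ => min_comm _ _⟩

variable {ℓ}

theorem lt_of_minColouring_mk_ne_left {x y : ℕ} (h : minColouring ℓ s(x, y) ≠ ℓ x) :
    ℓ y < ℓ x :=
  not_le.mp fun hxy => h (min_eq_left hxy)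

theorem lt_of_minColouring_mk_ne_right {x y : ℕ} (h : minColouring ℓ s(x, y) ≠ ℓ y) :
    ℓ x < ℓ y :=
  lt_of_minColouring_mk_ne_left (by rwa [Sym2.eq_swap])

theorem IsMonoPath.encard_inter_level_le {c m : Fin n} {X : Set ℕ}
    (hX : IsMonoPath (minColouring ℓ) c X) (hc : c ≠ m) :
    (X ∩ ℓ ⁻¹' {m}).encard ≤ 2 * (ℓ ⁻¹' Iio m).encard + 1 := by
  rcases hX with rfl | ⟨N, v, -, hinj, rfl, hcol⟩
  · simp
  set S := {i : ℕ | (i : ℕ∞) < N ∧ ℓ (v i) = m}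
  set T := {i : ℕ | (i : ℕ∞) < N ∧ ℓ (v i) < m}
  have htrace : {x | ∃ i : ℕ, (i : ℕ∞) < N ∧ v i = x} ∩ ℓ ⁻¹' {m} = v '' S := by
    ext x
    constructor
    · rintro ⟨⟨i, hi, rfl⟩, hm⟩
      exact ⟨i, ⟨hi, hm⟩, rfl⟩
    · rintro ⟨i, ⟨hi, hm⟩, rfl⟩
      exact ⟨⟨i, hi, rfl⟩, hm⟩
  have hST : ∀ i ∈ S, i + 1 ∈ T ∨ ∀ j, j + 1 = i → j ∈ T := by
    rintro i ⟨hi, hm⟩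
    by_cases hnext : ((i + 1 : ℕ) : ℕ∞) < N
    · refine Or.inl ⟨hnext, ?_⟩
      rw [← hm]
      exact lt_of_minColouring_mk_ne_left (by rw [hcol i hnext, hm]; exact hc)
    · refine Or.inr fun j hj => ⟨lt_of_le_of_lt (by exact_mod_cast hj.le.trans' j.le_succ) hi, ?_⟩
      subst hj
      rw [← hm]
      exact lt_of_minColouring_mk_ne_right (by rw [hcol j hi, hm]; exact hc)
  have hT : T.encard ≤ (ℓ ⁻¹' Iio m).encard := by
    rw [← InjOn.encard_image fun a ha b hb hab => hinj a b ha.1 hb.1 hab]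
    exact encard_le_encard (by rintro _ ⟨i, ⟨-, hi⟩, rfl⟩; exact hi)
  rw [htrace]
  calc (v '' S).encard ≤ S.encard := encard_image_le _ _
    _ ≤ 2 * T.encard + 1 := encard_le_two_mul_add_one_of_forall_succ_mem_or hST
    _ ≤ 2 * (ℓ ⁻¹' Iio m).encard + 1 := by gcongr

theorem not_exists_monoPath_cover_minColouring {k : ℕ} (hkn : k < n)
    (hℓ : ∀ m, k * (2 * (ℓ ⁻¹' Iio m).encard + 1) < (ℓ ⁻¹' {m}).encard) :
    ¬ ∃ (X : Fin k → Set ℕ) (c : Fin k → Fin n),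
      (∀ i, IsMonoPath (minColouring ℓ) (c i) (X i)) ∧ ⋃ i, X i = univ := by
  rintro ⟨X, c, hX, hcover⟩
  obtain ⟨m, hm⟩ : ∃ m, ∀ i, c i ≠ m := by
    by_contra! hsurj
    exact hkn.not_ge (Fin.le_of_surjective c hsurj)
  refine (hℓ m).not_ge ?_
  calc (ℓ ⁻¹' {m}).encard = (⋃ i, X i ∩ ℓ ⁻¹' {m}).encard := by
        rw [← iUnion_inter, hcover, univ_inter]
    _ ≤ ∑ i, (X i ∩ ℓ ⁻¹' {m}).encard := encard_iUnion_le_of_fintype _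
    _ ≤ ∑ _i : Fin k, (2 * (ℓ ⁻¹' Iio m).encard + 1) :=
        Finset.sum_le_sum fun i _ => (hX i).encard_inter_level_le (hm i)
    _ = k * (2 * (ℓ ⁻¹' Iio m).encard + 1) := by
        rw [Finset.sum_const, Finset.card_univ, Fintype.card_fin, nsmul_eq_mul]

end MinColouring

section LogLevel

variable {r b : ℕ}

def logLevel (r b x : ℕ) : Fin (r + 1) :=
  ⟨min r (Nat.log b x), Nat.lt_succ_of_le (min_le_left _ _)⟩

theorem logLevel_preimage_Iio_subset (hb : 1 < b) (m : Fin (r + 1)) :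
    logLevel r b ⁻¹' Iio m ⊆ Iio (b ^ (m : ℕ)) := by
  intro x hx
  have hlt : min r (Nat.log b x) < m := hx
  exact Nat.lt_pow_of_log_lt hb (by omega)

theorem Ico_subset_logLevel_preimage (m : Fin (r + 1)) :
    Ico (b ^ (m : ℕ)) (b ^ ((m : ℕ) + 1)) ⊆ logLevel r b ⁻¹' {m} := by
  rintro x ⟨hlo, hhi⟩
  have hlog := Nat.log_eq_of_pow_le_of_lt_pow hlo hhi
  ext
  simp only [logLevel, hlog]
  omega

theorem natCast_mul_two_mul_encard_logLevel_lt (hb : 3 * r + 2 ≤ b) (m : Fin (r + 1)) :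
    r * (2 * (logLevel r b ⁻¹' Iio m).encard + 1) < (logLevel r b ⁻¹' {m}).encard := by
  have hgap : r * (2 * b ^ (m : ℕ) + 1) < b ^ ((m : ℕ) + 1) - b ^ (m : ℕ) := by
    have hp : 0 < b ^ (m : ℕ) := pow_pos (by omega) _
    rw [pow_succ]
    generalize b ^ (m : ℕ) = p at hp ⊢
    have hr : r ≤ r * p := Nat.le_mul_of_pos_right r hp
    have hbp : (3 * r + 2) * p ≤ p * b := by rw [mul_comm p]; gcongr
    have hlhs : r * (2 * p + 1) = 2 * (r * p) + r := by ring
    have hbp' : (3 * r + 2) * p = 3 * (r * p) + 2 * p := by ring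
    omega
  calc (r : ℕ∞) * (2 * (logLevel r b ⁻¹' Iio m).encard + 1)
      ≤ r * (2 * (Iio (b ^ (m : ℕ))).encard + 1) := by
        gcongr
        exact logLevel_preimage_Iio_subset (by omega : 1 < b) m
    _ < (Ico (b ^ (m : ℕ)) (b ^ ((m : ℕ) + 1))).encard := by
        rw [← Finset.coe_Iio, ← Finset.coe_Ico, encard_coe_eq_coe_finsetCard,
          encard_coe_eq_coe_finsetCard, Nat.card_Iio, Nat.card_Ico]
        exact_mod_cast hgap
    _ ≤ (logLevel r b ⁻¹' {m}).encard := encard_le_encard (Ico_subset_logLevel_preimage m)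

end LogLevel

/-- There is an `(r+1)`-edge-colouring of the complete graph on `ℕ` such that
`ℕ` cannot be covered by the vertex sets of `r` monochromatic paths. -/
theorem rado_lower_bound (r : ℕ) :
    ∃ φ : Sym2 ℕ → Fin (r + 1),
      ¬ ∃ (X : Fin r → Set ℕ) (c : Fin r → Fin (r + 1)),
        (∀ i : Fin r, IsMonoPath φ (c i) (X i)) ∧ (⋃ i, X i) = Set.univ :=
  ⟨minColouring (logLevel r (3 * r + 2)),
    not_exists_monoPath_cover_minColouring r.lt_succ_self
      (natCast_mul_two_mul_encard_logLevel_lt le_rfl)⟩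
end

section
/- For all s, k, t ∈ ℕ with k ≥ t ≥ 2 and every colouring φ of the complete k-uniform hypergraph on ℕ with r = s(k−t+1) colours, there exists a (t−1)-clique-chain {𝒦ᵢ : i ∈ ℕ} with respect to φ whose induced clique-colouring uses at most s colours. -/
/-- `edgeColours k φ w f` is the multi-colouring `φ_{w,j}`: the set of colours
of `k`-edges containing `{w} ∪ f`. -/
def edgeColours (k : ℕ) {r : ℕ} (φ : Finset ℕ → Fin r) (w : ℕ)
    (f : Finset ℕ) : Set (Fin r) :=
  {c | ∃ e : Finset ℕ, e.card = k ∧ insert w f ⊆ e ∧ φ e = c}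

/-- A `j`-clique-chain w.r.t. the colouring `φ` of the `k`-sets of `ℕ`:
a decreasing sequence of infinite vertex sets `V 0 ⊇ V 1 ⊇ ⋯` such that for
each `i` all `j`-subsets of `V i` avoiding `i` have a common colour in the
multi-colouring `φ_{i,j}`. -/
def IsCliqueChain (k j : ℕ) {r : ℕ} (φ : Finset ℕ → Fin r)
    (V : ℕ → Set ℕ) : Prop :=
  (∀ i : ℕ, (V i).Infinite) ∧ (∀ i : ℕ, V (i + 1) ⊆ V i) ∧
  ∀ i : ℕ, ∃ c : Fin r, ∀ f : Finset ℕ, f.card = j → ↑f ⊆ V i \ {i} →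
    c ∈ edgeColours k φ i f



open Classical in
theorem inf_ramsey {α : Type} [Fintype α] (n : ℕ) :
    ∀ (κ : Finset ℕ → α) (A : Set ℕ), A.Infinite →
    ∃ B : Set ℕ, B ⊆ A ∧ B.Infinite ∧ ∃ a : α,
      ∀ f : Finset ℕ, f.card = n → ↑f ⊆ B → κ f = a := by
  induction n with
  | zero =>
    intro κ A hA
    refine ⟨A, le_refl _, hA, κ ∅, ?_⟩
    intro f hf _
    rw [Finset.card_eq_zero] at hf
    rw [hf]
  | succ n ih =>
    intro κ A hA
    have key : ∀ A' : Set ℕ, A'.Infinite → ∃ x, x ∈ A' ∧ ∃ B : Set ℕ,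
        B ⊆ A' \ {x} ∧ B.Infinite ∧ ∃ a, ∀ f : Finset ℕ, f.card = n → ↑f ⊆ B →
          κ (insert x f) = a := by
      intro A' hA'
      obtain ⟨x, hx⟩ := hA'.nonempty
      obtain ⟨B, hB1, hB2, a, ha⟩ := ih (fun f => κ (insert x f)) (A' \ {x})
        (hA'.diff (Set.finite_singleton x))
      exact ⟨x, hx, B, hB1, hB2, a, ha⟩
    choose x hx B hB hBinf a ha using key
    let chain : ℕ → {S : Set ℕ // S.Infinite} := fun j =>
      Nat.rec ⟨A, hA⟩ (fun _ p => ⟨B p.1 p.2, hBinf p.1 p.2⟩) j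
    set Aj : ℕ → Set ℕ := fun j => (chain j).1 with hAjdef
    have hAj : ∀ j, (Aj j).Infinite := fun j => (chain j).2
    set X : ℕ → ℕ := fun j => x (Aj j) (hAj j) with hXdef
    set aa : ℕ → α := fun j => a (Aj j) (hAj j) with haadef
    have chain_succ : ∀ j, Aj (j + 1) = B (Aj j) (hAj j) := fun j => rfl
    have hsub : ∀ j, Aj (j + 1) ⊆ Aj j \ {X j} := fun j => hB _ _
    have hmono : ∀ j d, Aj (j + d) ⊆ Aj j := by
      intro j d
      induction d with
      | zero => exact subset_rfl
      | succ d ihd => exact ((hsub (j + d)).trans Set.diff_subset).trans ihd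
    have hmono' : ∀ j j', j ≤ j' → Aj j' ⊆ Aj j := by
      intro j j' hle
      obtain ⟨d, rfl⟩ := Nat.exists_eq_add_of_le hle
      exact hmono j d
    have hXmem : ∀ j, X j ∈ Aj j := fun j => hx _ _
    have hXin : ∀ j j', j < j' → X j' ∈ Aj (j + 1) := fun j j' h =>
      hmono' (j + 1) j' h (hXmem j')
    have hXne : ∀ j j', j < j' → X j' ≠ X j := by
      intro j j' h
      have := hsub j (hXin j j' h)
      simpa using this.2
    have hXinj : Function.Injective X := by
      intro j j' h
      rcases lt_trichotomy j j' with hlt | heq | hlt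
      · exact absurd h.symm (hXne j j' hlt)
      · exact heq
      · exact absurd h (hXne j' j hlt)
    obtain ⟨astar, hfib⟩ := Finite.exists_infinite_fiber aa
    have hJ : (aa ⁻¹' {astar}).Infinite := Set.infinite_coe_iff.mp hfib
    refine ⟨X '' (aa ⁻¹' {astar}), ?_, hJ.image hXinj.injOn, astar, ?_⟩
    · rintro y ⟨j, _, rfl⟩
      exact hmono' 0 j (Nat.zero_le j) (hXmem j)
    · intro f hcard hfsub
      have hfne : f.Nonempty := Finset.card_pos.mp (by omega)
      have hTne : ∃ j, j ∈ aa ⁻¹' {astar} ∧ X j ∈ f := by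
        obtain ⟨y, hy⟩ := hfne
        obtain ⟨j, hj, rfl⟩ := hfsub hy
        exact ⟨j, hj, hy⟩
      set j0 := Nat.find hTne with hj0def
      obtain ⟨hj0J, hj0f⟩ := Nat.find_spec hTne
      have herase : ↑(f.erase (X j0)) ⊆ B (Aj j0) (hAj j0) := by
        intro y hy
        rw [Finset.coe_erase] at hy
        obtain ⟨hyf, hyne⟩ := hy
        obtain ⟨j', hj', rfl⟩ := hfsub hyf
        have hne : j' ≠ j0 := by
          intro hh; exact hyne (by rw [hh]; rfl)
        have hle : j0 ≤ j' := Nat.find_min' hTne ⟨hj', hyf⟩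
        have hlt : j0 < j' := lt_of_le_of_ne hle (Ne.symm hne)
        rw [← chain_succ j0]
        exact hXin j0 j' hlt
      have hc : κ (insert (X j0) (f.erase (X j0))) = aa j0 :=
        ha (Aj j0) (hAj j0) (f.erase (X j0))
          (by rw [Finset.card_erase_of_mem hj0f, hcard]; omega) herase
      rw [Finset.insert_erase hj0f] at hc
      rw [hc]
      exact hj0J


open Classical in
lemma hitting (m : ℕ) : ∀ (s r : ℕ) (G : Finset (Fin r)) (D : ℕ → Finset (Fin r)),
    1 ≤ m → (∀ i, D i ⊆ G) → G.card ≤ s * m →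
    (∀ g : Fin m → ℕ, ∃ c, ∀ a, c ∈ D (g a)) →
    ∃ S : Finset (Fin r), S.card ≤ s ∧ ∀ i, ∃ c ∈ S, c ∈ D i := by
  induction m with
  | zero => intro _ _ _ _ hm; omega
  | succ m' ihm =>
    intro s r G D _ hDG hG hint
    rcases Nat.eq_zero_or_pos m' with h0 | hm'
    · subst h0
      refine ⟨G, by simpa using hG, fun i => ?_⟩
      obtain ⟨c, hc⟩ := hint (fun _ => i)
      exact ⟨c, hDG i (hc 0), hc 0⟩
    · have hex : ∃ nn, ∃ i, (D i).card = nn := ⟨(D 0).card, 0, rfl⟩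
      obtain ⟨i₀, hi₀⟩ := Nat.find_spec hex
      by_cases hcase : (D i₀).card ≤ s * m'
      · have hint' : ∀ g : Fin m' → ℕ, ∃ c, ∀ a, c ∈ (fun i => D i ∩ D i₀) (g a) := by
          intro g
          obtain ⟨c, hc⟩ := hint (fun a => if h : (a : ℕ) < m' then g ⟨a, h⟩ else i₀)
          refine ⟨c, fun a => Finset.mem_inter.mpr ⟨?_, ?_⟩⟩
          · have := hc ⟨a.1, by omega⟩
            simpa [a.isLt] using this
          · have := hc ⟨m', by omega⟩
            simpa using this
        obtain ⟨S, hS1, hS2⟩ := ihm s r (D i₀) (fun i => D i ∩ D i₀) hm'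
          (fun i => Finset.inter_subset_right) hcase hint'
        exact ⟨S, hS1, fun i => by
          obtain ⟨c, h1, h2⟩ := hS2 i
          exact ⟨c, h1, (Finset.mem_inter.mp h2).1⟩⟩
      · have hsm : s ≤ s * m' := Nat.le_mul_of_pos_right s hm'
        have hGs : s ≤ G.card := le_trans hsm
          (le_trans (le_of_not_ge hcase) (Finset.card_le_card (hDG i₀)))
        obtain ⟨S, hSG, hScard⟩ := Finset.exists_subset_card_eq hGs
        refine ⟨S, hScard.le, fun i => ?_⟩
        by_contra hno
        push_neg at hno
        have hdisj : Disjoint S (D i) := Finset.disjoint_left.mpr hno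
        have hcup : S.card + (D i).card ≤ G.card := by
          rw [← Finset.card_union_of_disjoint hdisj]
          exact Finset.card_le_card (Finset.union_subset hSG (hDG i))
        have hm1 : Nat.find hex ≤ (D i).card := Nat.find_min' hex ⟨i, rfl⟩
        have hmul : s * (m' + 1) = s * m' + s := Nat.mul_succ s m'
        omega

/-- For every `s(k-t+1)`-colouring `φ` of the `k`-sets of `ℕ` there is a
`(t-1)`-clique-chain whose induced clique-colouring uses at most `s` colours:
there is an `s`-set `S` of colours meeting the set of common colours
`χ(i) = ⋂_{f} φ_{i,t-1}(f)` of every clique in the chain. -/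
theorem clique_chain_few_colours (s k t : ℕ) (ht : 2 ≤ t) (htk : t ≤ k)
    (φ : Finset ℕ → Fin (s * (k - t + 1))) :
    ∃ V : ℕ → Set ℕ, IsCliqueChain k (t - 1) φ V ∧
      ∃ S : Finset (Fin (s * (k - t + 1))), S.card = s ∧
        ∀ i : ℕ, ∃ c ∈ S, ∀ f : Finset ℕ, f.card = t - 1 → ↑f ⊆ V i \ {i} →
          c ∈ edgeColours k φ i f := by
  classical
  rcases Nat.eq_zero_or_pos s with hs0 | hs
  · have h0 : s * (k - t + 1) = 0 := by rw [hs0]; ring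
    exact ((h0 ▸ φ ∅).elim0)
  have step : ∀ (i : ℕ) (A : Set ℕ), A.Infinite → ∃ B : Set ℕ, B ⊆ A ∧ B.Infinite ∧
      ∃ E : Finset (Fin (s * (k - t + 1))), ∀ f : Finset ℕ, f.card = t - 1 → ↑f ⊆ B →
        (Finset.univ.filter (fun c => c ∈ edgeColours k φ i f)) = E :=
    fun i A hA => inf_ramsey (t - 1) _ A hA
  choose B hBsub hBinf E hE using step
  let W : ℕ → {S : Set ℕ // S.Infinite} := fun i =>
    Nat.rec ⟨B 0 Set.univ Set.infinite_univ, hBinf 0 _ _⟩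
      (fun i p => ⟨B (i + 1) p.1 p.2, hBinf _ _ _⟩) i
  set V : ℕ → Set ℕ := fun i => (W i).1 with hVdef
  have hVinf : ∀ i, (V i).Infinite := fun i => (W i).2
  have hVsub : ∀ i, V (i + 1) ⊆ V i := fun i => hBsub (i + 1) (V i) (hVinf i)
  have hVmono : ∀ i j, i ≤ j → V j ⊆ V i := by
    intro i j
    induction j with
    | zero => intro hle; have h0 : i = 0 := Nat.le_zero.mp hle; subst h0; exact subset_rfl
    | succ j ihj =>
      intro hle
      rcases Nat.lt_or_ge i (j + 1) with h | h
      · exact (hVsub j).trans (ihj (by omega))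
      · have : i = j + 1 := by omega
        subst this; exact subset_rfl
  have hhom : ∀ i, ∃ Ei : Finset (Fin (s * (k - t + 1))), ∀ f : Finset ℕ,
      f.card = t - 1 → ↑f ⊆ V i →
      (Finset.univ.filter (fun c => c ∈ edgeColours k φ i f)) = Ei := by
    intro i
    cases i with
    | zero => exact ⟨E 0 Set.univ Set.infinite_univ, hE 0 Set.univ Set.infinite_univ⟩
    | succ i => exact ⟨E (i + 1) (V i) (hVinf i), hE (i + 1) (V i) (hVinf i)⟩
  choose Ei hEi using hhom
  have hmain : ∀ i c, c ∈ Ei i → ∀ f : Finset ℕ, f.card = t - 1 → ↑f ⊆ V i \ {i} →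
      c ∈ edgeColours k φ i f := by
    intro i c hc f hf hfsub
    have hsub' : ↑f ⊆ V i := hfsub.trans Set.diff_subset
    rw [← hEi i f hf hsub'] at hc
    exact (Finset.mem_filter.mp hc).2
  -- intersecting family
  have hint : ∀ g : Fin (k - t + 1) → ℕ, ∃ c, ∀ a, c ∈ Ei (g a) := by
    intro g
    set N := Finset.univ.sup g with hN
    have hgN : ∀ a, g a ≤ N := fun a => Finset.le_sup (Finset.mem_univ a)
    set P : Finset ℕ := Finset.image g Finset.univ with hP
    have hPcard : P.card ≤ k - t + 1 := le_trans Finset.card_image_le (by simp)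
    obtain ⟨h, hh1, hh2⟩ := ((hVinf N).diff P.finite_toSet).exists_subset_card_eq (k - P.card)
    obtain ⟨f, hf1, hf2⟩ := Finset.exists_subset_card_eq (show t - 1 ≤ h.card by omega)
    have hdisj : Disjoint P h := by
      rw [Finset.disjoint_right]
      intro x hx hxP
      exact (hh1 (Finset.mem_coe.mpr hx)).2 (Finset.mem_coe.mpr hxP)
    have hecard : (P ∪ h).card = k := by
      rw [Finset.card_union_of_disjoint hdisj, hh2]; omega
    refine ⟨φ (P ∪ h), fun a => ?_⟩
    have hga : g a ∈ P := Finset.mem_image.mpr ⟨a, Finset.mem_univ a, rfl⟩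
    have hfV : ↑f ⊆ V (g a) := fun y hy =>
      hVmono (g a) N (hgN a) (hh1 (hf1 hy)).1
    rw [← hEi (g a) f hf2 hfV]
    refine Finset.mem_filter.mpr ⟨Finset.mem_univ _, P ∪ h, hecard, ?_, rfl⟩
    intro y hy
    rcases Finset.mem_insert.mp hy with rfl | hyf
    · exact Finset.mem_union_left _ hga
    · exact Finset.mem_union_right _ (hf1 hyf)
  obtain ⟨S₀, hS₀card, hS₀hit⟩ := hitting (k - t + 1) s (s * (k - t + 1)) Finset.univ Ei
    (by omega) (fun i => Finset.subset_univ _)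
    (by rw [Finset.card_univ, Fintype.card_fin]) hint
  obtain ⟨S, hS₀S, hScard⟩ := Finset.exists_superset_card_eq (n := s) hS₀card
    (by rw [Fintype.card_fin]; exact Nat.le_mul_of_pos_right s (by omega))
  refine ⟨V, ⟨hVinf, hVsub, fun i => ?_⟩, S, hScard, fun i => ?_⟩
  · obtain ⟨c, _, hc⟩ := hS₀hit i
    exact ⟨c, hmain i c hc⟩
  · obtain ⟨c, hcS, hc⟩ := hS₀hit i
    exact ⟨c, hS₀S hcS, hmain i c hc⟩
end
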